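/- arXiv:1704.06376 — 9 statements merged into one kernel-verified Lean document; each statement's English description precedes it below -/
import Mathlib

section
/- Let E be a finite-valued Young function and 0 < α < 1. If there exist constants σ > 1 and c ∈ (0,1) and t₀ > 0 such that E(σt) ≤ c·σ^{1/α}·E(t) for all t ≥ t₀, then there exists a constant k > 1 such that ∫_t^∞ E(s)/s^{1/α+1} ds ≤ E(kt)/t^{1/α} for all t ≥ t₀. -/
open scoped ENNReal
open MeasureTheory

/-- if `E(σt) ≤ c σ^{1/α} E(t)` for `t ≥ t₀` (with `σ > 1`, `0 < c < 1`),
then there is `k > 1` with `∫_t^∞ E(s)/s^{1/α+1} ds ≤ E(kt)/t^{1/α}` for all `t ≥ t₀`. -/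
theorem young_integral_of_pointwise (E : ℝ → ℝ) (α : ℝ) (hα : α ∈ Set.Ioo (0 : ℝ) 1)
    (hE0 : E 0 = 0) (hconv : ConvexOn ℝ (Set.Ici 0) E)
    (hmono : MonotoneOn E (Set.Ici 0))
    (σ c t₀ : ℝ) (hσ : 1 < σ) (hc : c ∈ Set.Ioo (0 : ℝ) 1) (ht₀ : 0 < t₀)
    (hyp : ∀ t ≥ t₀, E (σ * t) ≤ c * σ ^ (1 / α) * E t) :
    ∃ k > (1 : ℝ), ∀ t ≥ t₀,
      ∫⁻ s in Set.Ioi t, ENNReal.ofReal (E s / s ^ (1 / α + 1)) ≤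
        ENNReal.ofReal (E (k * t) / t ^ (1 / α)) := by
  obtain ⟨hα0, hα1⟩ := hα
  obtain ⟨hc0, hc1⟩ := hc
  have hσ0 : (0:ℝ) < σ := lt_trans one_pos hσ
  set β : ℝ := 1/α with hβdef
  have hβ0 : 0 < β := by positivity
  have hσβ : (0:ℝ) < σ ^ β := Real.rpow_pos_of_pos hσ0 β
  -- E is nonnegative on [0, ∞)
  have hEnn : ∀ t : ℝ, 0 ≤ t → 0 ≤ E t := by
    intro t ht
    have := hmono (Set.mem_Ici.2 le_rfl) (Set.mem_Ici.2 ht) ht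
    rwa [hE0] at this
  -- convexity scaling : k E t ≤ E (k t) for k ≥ 1, t ≥ 0
  have hscale : ∀ k t : ℝ, 1 ≤ k → 0 ≤ t → k * E t ≤ E (k * t) := by
    intro k t hk ht
    have hk0 : 0 < k := lt_of_lt_of_le one_pos hk
    have h1 : E ((1/k) • (k*t) + (1 - 1/k) • (0:ℝ)) ≤ (1/k) * E (k*t) + (1 - 1/k) * E 0 :=
      hconv.2 (Set.mem_Ici.2 (by positivity)) (Set.mem_Ici.2 le_rfl)
        (by positivity) (by have : 1/k ≤ 1 := div_le_one_of_le₀ hk hk0.le; linarith)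
        (by ring)
    have h2 : (1/k) • (k*t) + (1 - 1/k) • (0:ℝ) = t := by
      rw [smul_eq_mul, smul_eq_mul, mul_zero, add_zero, one_div, inv_mul_cancel_left₀ hk0.ne']
    rw [h2, hE0] at h1
    have h3 : E t ≤ (1/k) * E (k*t) := by linarith
    calc k * E t ≤ k * ((1/k) * E (k*t)) := by
          exact mul_le_mul_of_nonneg_left h3 hk0.le
      _ = E (k*t) := by field_simp
  -- iterated hypothesis
  have hiter : ∀ n : ℕ, ∀ t, t₀ ≤ t → E (σ^n * t) ≤ (c * σ^β)^n * E t := by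
    intro n
    induction n with
    | zero => intro t ht; simp
    | succ n ih =>
      intro t ht
      have hpow1 : (1:ℝ) ≤ σ^n := one_le_pow₀ hσ.le
      have h1 : t₀ ≤ σ^n * t := le_trans ht (le_mul_of_one_le_left
        (le_trans ht₀.le ht) hpow1)
      have harg : σ^(n+1) * t = σ * (σ^n * t) := by ring
      calc E (σ^(n+1) * t) = E (σ * (σ^n * t)) := by rw [harg]
        _ ≤ c * σ^β * E (σ^n * t) := hyp _ h1
        _ ≤ c * σ^β * ((c*σ^β)^n * E t) :=
            mul_le_mul_of_nonneg_left (ih t ht) (by positivity)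
        _ = (c*σ^β)^(n+1) * E t := by ring
  -- covering (t, ∞) by the intervals (σ^n t, σ^{n+1} t]
  have hsubset : ∀ t : ℝ, 0 < t →
      Set.Ioi t ⊆ ⋃ n : ℕ, Set.Ioc (σ^n * t) (σ^(n+1) * t) := by
    intro t ht x hx
    simp only [Set.mem_Ioi] at hx
    have hex : ∃ m : ℕ, x ≤ σ^m * t := by
      obtain ⟨m, hm⟩ := pow_unbounded_of_one_lt (x/t) hσ
      rw [div_lt_iff₀ ht] at hm
      exact ⟨m, hm.le⟩
    classical
    have hn : x ≤ σ^(Nat.find hex) * t := Nat.find_spec hex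
    have hn0 : Nat.find hex ≠ 0 := by
      intro h
      rw [h] at hn
      simp at hn
      linarith
    obtain ⟨m, hm⟩ : ∃ m, Nat.find hex = m + 1 := ⟨Nat.find hex - 1, by omega⟩
    have hlt : σ^m * t < x := by
      by_contra h
      push_neg at h
      exact Nat.find_min hex (by omega) h
    refine Set.mem_iUnion.2 ⟨m, hlt, ?_⟩
    rw [← hm]; exact hn
  -- the constant
  set C : ℝ := (σ-1) * c * σ^β / (1-c) with hC
  have hCnn : 0 ≤ C := by
    apply div_nonneg _ (by linarith)
    have : (0:ℝ) ≤ σ - 1 := by linarith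
    positivity
  refine ⟨max 2 C, lt_of_lt_of_le one_lt_two (le_max_left _ _), ?_⟩
  intro t ht
  have ht0 : 0 < t := lt_of_lt_of_le ht₀ ht
  have htβ : 0 < t ^ β := Real.rpow_pos_of_pos ht0 β
  set D : ℝ := (σ-1) * c * σ^β * (E t / t^β) with hD
  have hDnn : 0 ≤ D := by
    have h1 : (0:ℝ) ≤ σ - 1 := by linarith
    have h2 : 0 ≤ E t := hEnn t ht0.le
    positivity
  -- per-interval bound
  have hpiece : ∀ n : ℕ,
      ∫⁻ s in Set.Ioc (σ^n * t) (σ^(n+1) * t), ENNReal.ofReal (E s / s ^ (β + 1)) ≤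
        ENNReal.ofReal (c^n * D) := by
    intro n
    set a : ℝ := σ^n * t with ha
    set b : ℝ := σ^(n+1) * t with hb
    have ha0 : 0 < a := by positivity
    have hab : a < b := by
      rw [ha, hb, pow_succ]
      have : (1:ℝ) ≤ σ^n := one_le_pow₀ hσ.le
      nlinarith
    have haβ : 0 < a ^ (β+1) := Real.rpow_pos_of_pos ha0 _
    have hbound : ∀ s ∈ Set.Ioc a b, E s / s ^ (β+1) ≤ E b / a ^ (β+1) := by
      intro s hs
      obtain ⟨hs1, hs2⟩ := hs
      have hs0 : 0 < s := lt_trans ha0 hs1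
      have hE1 : E s ≤ E b := hmono (Set.mem_Ici.2 hs0.le)
        (Set.mem_Ici.2 (le_trans ha0.le hab.le)) hs2
      have hr : a ^ (β+1) ≤ s ^ (β+1) :=
        Real.rpow_le_rpow ha0.le hs1.le (by positivity)
      exact div_le_div₀ (hEnn b (le_trans ha0.le hab.le)) hE1 (Real.rpow_pos_of_pos ha0 _) hr
    calc ∫⁻ s in Set.Ioc a b, ENNReal.ofReal (E s / s ^ (β + 1))
        ≤ ∫⁻ _ in Set.Ioc a b, ENNReal.ofReal (E b / a ^ (β+1)) := by
          apply setLIntegral_mono measurable_const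
          intro s hs
          exact ENNReal.ofReal_le_ofReal (hbound s hs)
      _ = ENNReal.ofReal (E b / a ^ (β+1)) * volume (Set.Ioc a b) :=
          setLIntegral_const _ _
      _ = ENNReal.ofReal (E b / a ^ (β+1)) * ENNReal.ofReal (b - a) := by
          rw [Real.volume_Ioc]
      _ = ENNReal.ofReal ((E b / a ^ (β+1)) * (b - a)) := by
          rw [ENNReal.ofReal_mul (div_nonneg (hEnn b (by positivity)) haβ.le)]
      _ ≤ ENNReal.ofReal (c^n * D) := by
          apply ENNReal.ofReal_le_ofReal
          have hEb : E b ≤ (c * σ^β)^(n+1) * E t := hiter (n+1) t ht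
          have hba : b - a = (σ - 1) * (σ^n * t) := by rw [ha, hb]; ring
          have hstep : (E b / a ^ (β+1)) * (b - a) ≤
              ((c * σ^β)^(n+1) * E t / a ^ (β+1)) * (b - a) := by
            have hanz : 0 ≤ a ^ (β+1) := haβ.le
            gcongr
          refine le_trans hstep (le_of_eq ?_)
          have haβ1 : a ^ (β+1) = (σ^β)^n * t^β * a := by
            rw [Real.rpow_add ha0, Real.rpow_one, ha,
              Real.mul_rpow (by positivity) ht0.le,
              ← Real.rpow_natCast σ n, ← Real.rpow_mul hσ0.le,
              mul_comm (n:ℝ) β, Real.rpow_mul hσ0.le, Real.rpow_natCast]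
          rw [haβ1, hba, hD, mul_pow, ha]
          have hσβn : ((σ:ℝ)^β)^n ≠ 0 := by positivity
          have htβ' : (t:ℝ)^β ≠ 0 := ne_of_gt htβ
          field_simp
          ring
  -- summing up
  have hsum : ∫⁻ s in Set.Ioi t, ENNReal.ofReal (E s / s ^ (β + 1)) ≤
      ENNReal.ofReal (C * (E t / t^β)) := by
    calc ∫⁻ s in Set.Ioi t, ENNReal.ofReal (E s / s ^ (β + 1))
        ≤ ∫⁻ s in ⋃ n : ℕ, Set.Ioc (σ^n * t) (σ^(n+1) * t),
            ENNReal.ofReal (E s / s ^ (β + 1)) :=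
          lintegral_mono_set (hsubset t ht0)
      _ ≤ ∑' n : ℕ, ∫⁻ s in Set.Ioc (σ^n * t) (σ^(n+1) * t),
            ENNReal.ofReal (E s / s ^ (β + 1)) := lintegral_iUnion_le _ _
      _ ≤ ∑' n : ℕ, ENNReal.ofReal (c^n * D) := ENNReal.tsum_le_tsum hpiece
      _ = ENNReal.ofReal (∑' n : ℕ, c^n * D) := by
          rw [ENNReal.ofReal_tsum_of_nonneg (fun n => by positivity)
            ((summable_geometric_of_lt_one hc0.le hc1).mul_right D)]
      _ = ENNReal.ofReal (C * (E t / t^β)) := by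
          congr 1
          rw [tsum_mul_right, tsum_geometric_of_lt_one hc0.le hc1, hC, hD]
          field_simp
  refine le_trans hsum (ENNReal.ofReal_le_ofReal ?_)
  have hk1 : (1:ℝ) ≤ max 2 C := le_trans one_le_two (le_max_left _ _)
  have h1 : C * E t ≤ max 2 C * E t :=
    mul_le_mul_of_nonneg_right (le_max_right _ _) (hEnn t ht0.le)
  have h2 : max 2 C * E t ≤ E (max 2 C * t) := hscale _ _ hk1 ht0.le
  calc C * (E t / t^β) = (C * E t) / t^β := by ring
    _ ≤ E (max 2 C * t) / t^β := by
        exact (div_le_div_iff_of_pos_right htβ).2 (by linarith)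
end

section
/- Let E be a finite-valued Young function and 0 < α < 1. If there exist constants k > 1 and t₀ > 0 with ∫_t^∞ E(s)/s^{1/α+1} ds ≤ E(kt)/t^{1/α} for all t ≥ t₀, then E satisfies the Δ₂-condition near infinity, i.e., there exist c > 0 and t₁ > 0 such that E(2t) ≤ c·E(t) for all t ≥ t₁. -/
open scoped ENNReal
open MeasureTheory

/-- if `∫_t^∞ E(s)/s^{1/α+1} ds ≤ E(kt)/t^{1/α}` for all `t ≥ t₀` (with
`k > 1`), then `E` satisfies the `Δ₂`-condition near infinity. -/
theorem delta2_of_integral_condition (E : ℝ → ℝ) (α : ℝ) (hα : α ∈ Set.Ioo (0 : ℝ) 1)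
    (hE0 : E 0 = 0) (hconv : ConvexOn ℝ (Set.Ici 0) E)
    (hmono : MonotoneOn E (Set.Ici 0))
    (k t₀ : ℝ) (hk : 1 < k) (ht₀ : 0 < t₀)
    (hyp : ∀ t ≥ t₀,
      ∫⁻ s in Set.Ioi t, ENNReal.ofReal (E s / s ^ (1 / α + 1)) ≤
        ENNReal.ofReal (E (k * t) / t ^ (1 / α))) :
    ∃ c > (0 : ℝ), ∃ t₁ > (0 : ℝ), ∀ t ≥ t₁, E (2 * t) ≤ c * E t := by
  obtain ⟨hα0, hα1⟩ := hα
  have hαinv : 0 < 1/α := by positivity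
  set β : ℝ := 1/α + 1 with hβ
  have hβpos : 0 < β := by positivity
  have hk0 : (0:ℝ) < k := lt_trans one_pos hk
  have hEnn : ∀ x : ℝ, 0 ≤ x → 0 ≤ E x := fun x hx => by
    have := hmono (Set.mem_Ici.mpr le_rfl) (Set.mem_Ici.mpr hx) hx
    linarith [hE0 ▸ this]
  set m : ℝ := 2*k with hmdef
  have hm1 : (1:ℝ) < m := by nlinarith
  have hm0 : (0:ℝ) < m := by linarith
  -- key inequality at scale t₀
  have key : ∀ u ≥ t₀, E (m*u) ≤ (2 ^ β * m ^ (1/α)) * E (k*u) := by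
    intro u hu
    have hu0 : 0 < u := lt_of_lt_of_le ht₀ hu
    have hmu0 : 0 < m*u := by positivity
    have htmu : u < m*u := by nlinarith
    have hEmu : 0 ≤ E (m*u) := hEnn _ (le_of_lt hmu0)
    have hEku : 0 ≤ E (k*u) := hEnn _ (by positivity)
    -- lower bound for the integral
    have h1 : ENNReal.ofReal (E (m*u) / (2*(m*u)) ^ β) * ENNReal.ofReal (m*u) ≤
        ∫⁻ s in Set.Ioi u, ENNReal.ofReal (E s / s ^ β) := by
      have hsub : Set.Ioc (m*u) (2*(m*u)) ⊆ Set.Ioi u := fun x hx =>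
        Set.mem_Ioi.mpr (lt_trans htmu hx.1)
      calc ENNReal.ofReal (E (m*u) / (2*(m*u)) ^ β) * ENNReal.ofReal (m*u)
          = ∫⁻ _ in Set.Ioc (m*u) (2*(m*u)),
              ENNReal.ofReal (E (m*u) / (2*(m*u)) ^ β) := by
            rw [setLIntegral_const, Real.volume_Ioc]
            congr 1
            ring_nf
        _ ≤ ∫⁻ s in Set.Ioc (m*u) (2*(m*u)), ENNReal.ofReal (E s / s ^ β) := by
            refine lintegral_mono_ae ?_
            refine MeasureTheory.ae_restrict_of_forall_mem measurableSet_Ioc ?_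
            intro s hs
            apply ENNReal.ofReal_le_ofReal
            have hs0 : 0 < s := lt_trans hmu0 hs.1
            have hEs : E (m*u) ≤ E s :=
              hmono (Set.mem_Ici.mpr hmu0.le) (Set.mem_Ici.mpr hs0.le) hs.1.le
            have hpow : s ^ β ≤ (2*(m*u)) ^ β :=
              Real.rpow_le_rpow hs0.le hs.2 hβpos.le
            exact div_le_div₀ ((hEnn _ hmu0.le).trans hEs) hEs
              (Real.rpow_pos_of_pos hs0 β) hpow
        _ ≤ ∫⁻ s in Set.Ioi u, ENNReal.ofReal (E s / s ^ β) :=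
            lintegral_mono_set hsub
    have h2 := le_trans h1 (hyp u hu)
    rw [← ENNReal.ofReal_mul (by positivity)] at h2
    have h3 : E (m*u) / (2*(m*u)) ^ β * (m*u) ≤ E (k*u) / u ^ (1/α) := by
      have hrhs : 0 ≤ E (k*u) / u ^ (1/α) := by positivity
      exact (ENNReal.ofReal_le_ofReal_iff hrhs).mp h2
    -- algebra
    have hQ : (2*(m*u)) ^ β = (2 ^ β * m ^ (1/α)) * (m*u) * u ^ (1/α) := by
      rw [Real.mul_rpow (by norm_num) hmu0.le, Real.mul_rpow hm0.le hu0.le]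
      rw [hβ, Real.rpow_add hm0, Real.rpow_add hu0, Real.rpow_one, Real.rpow_one]
      ring
    rw [hQ] at h3
    have hP : (0:ℝ) < u ^ (1/α) := Real.rpow_pos_of_pos hu0 _
    have hc : (0:ℝ) < 2 ^ β * m ^ (1/α) := by positivity
    rw [div_mul_eq_mul_div, div_le_div_iff₀ (by positivity) hP] at h3
    have h4 : E (m*u) * ((m*u) * u ^ (1/α)) ≤
        ((2 ^ β * m ^ (1/α)) * E (k*u)) * ((m*u) * u ^ (1/α)) := by
      ring_nf; ring_nf at h3; linarith
    exact le_of_mul_le_mul_right h4 (by positivity)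
  refine ⟨2 ^ β * m ^ (1/α), by positivity, k * t₀, by positivity, ?_⟩
  intro t ht
  have hu : t / k ≥ t₀ := (le_div_iff₀ hk0).mpr (by linarith [ht])
  have := key (t/k) hu
  have hmu : m * (t/k) = 2 * t := by field_simp [hmdef]; ring
  have hku : k * (t/k) = t := by field_simp
  rwa [hmu, hku] at this
end

section
/- Let E be a finite-valued Young function and 0 < α < 1. Then the following are equivalent: (iii) there exist σ > 1 and c ∈ (0,1) such that E(σt) ≤ c·σ^{1/α}·E(t) near infinity; (v) the local upper Boyd index satisfies I_E < 1/α, where I_E = inf_{1<t<∞} (log ĥ_E(t))/(log t) and ĥ_E(t) = limsup_{s→∞} E(st)/E(s). -/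
open scoped ENNReal

/-- `ĥ_E(t) = limsup_{s→∞} E(st)/E(s)`, computed in `[0,∞]`. -/
noncomputable def hhatLoc (E : ℝ → ℝ) (t : ℝ) : ℝ≥0∞ :=
  Filter.limsup (fun s => ENNReal.ofReal (E (s * t) / E s)) Filter.atTop

/-- `log` on `[0,∞]` with values in `[0,∞]` (nonnegative part). -/
noncomputable def nnlog (x : ℝ≥0∞) : ℝ≥0∞ :=
  if x = ⊤ then ⊤ else ENNReal.ofReal (Real.log x.toReal)

/-- Local upper Boyd index `I_E = inf_{1<t<∞} log ĥ_E(t) / log t`. -/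
noncomputable def boydUpperLoc (E : ℝ → ℝ) : ℝ≥0∞ :=
  ⨅ t ∈ Set.Ioi (1 : ℝ), nnlog (hhatLoc E t) / ENNReal.ofReal (Real.log t)

/-- Local lower Boyd index `i_E = sup_{0<t<1} log ĥ_E(t) / log t`, with the convention
that the value is `∞` for `ĥ_E(t) = 0`. -/
noncomputable def boydLowerLoc (E : ℝ → ℝ) : ℝ≥0∞ :=
  ⨆ t ∈ Set.Ioo (0 : ℝ) 1,
    if hhatLoc E t = 0 then ⊤
    else ENNReal.ofReal (Real.log (hhatLoc E t).toReal / Real.log t)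

/-- for a finite-valued Young function `E` and `0 < α < 1`, the pointwise
condition `E(σt) ≤ c σ^{1/α} E(t)` near infinity (some `σ > 1`, `0 < c < 1`) holds
if and only if the local upper Boyd index satisfies `I_E < 1/α`. -/
theorem pointwise_iff_boydUpperLoc (E : ℝ → ℝ) (α : ℝ) (hα : α ∈ Set.Ioo (0 : ℝ) 1)
    (hE0 : E 0 = 0) (hconv : ConvexOn ℝ (Set.Ici 0) E)
    (hmono : MonotoneOn E (Set.Ici 0))
    (hnontriv : ∃ t > (0 : ℝ), 0 < E t) :
    (∃ σ > (1 : ℝ), ∃ c ∈ Set.Ioo (0 : ℝ) 1, ∃ t₀ > (0 : ℝ),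
        ∀ t ≥ t₀, E (σ * t) ≤ c * σ ^ (1 / α) * E t) ↔
      boydUpperLoc E < ENNReal.ofReal (1 / α) := by
  obtain ⟨hα0, hα1⟩ := hα
  obtain ⟨t₁, ht₁, hEt₁⟩ := hnontriv
  have hEpos : ∀ s, t₁ ≤ s → 0 < E s := fun s hs =>
    lt_of_lt_of_le hEt₁ (hmono (Set.mem_Ici.mpr ht₁.le)
      (Set.mem_Ici.mpr (le_trans ht₁.le hs)) hs)
  constructor
  · rintro ⟨σ, hσ, c, ⟨hc0, hc1⟩, t₀, ht₀, hpt⟩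
    have hσ0 : (0:ℝ) < σ := lt_trans one_pos hσ
    have hlogσ : 0 < Real.log σ := Real.log_pos hσ
    have hrpow : (0:ℝ) < σ ^ (1/α) := Real.rpow_pos_of_pos hσ0 _
    set B : ℝ := c * σ ^ (1/α) with hB
    have hB0 : 0 < B := mul_pos hc0 hrpow
    have hle : hhatLoc E σ ≤ ENNReal.ofReal B := by
      refine Filter.limsup_le_of_le (by isBoundedDefault) ?_
      filter_upwards [Filter.eventually_ge_atTop (max t₀ t₁)] with s hs
      have hEs : 0 < E s := hEpos s (le_trans (le_max_right _ _) hs)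
      have hsb : E (s * σ) ≤ B * E s := by
        rw [mul_comm s σ]
        exact hpt s (le_trans (le_max_left _ _) hs)
      exact ENNReal.ofReal_le_ofReal ((div_le_iff₀ hEs).mpr hsb)
    have htne : hhatLoc E σ ≠ ⊤ := ne_top_of_le_ne_top ENNReal.ofReal_ne_top hle
    have htr : (hhatLoc E σ).toReal ≤ B := ENNReal.toReal_le_of_le_ofReal hB0.le hle
    have hnn : nnlog (hhatLoc E σ) ≤ ENNReal.ofReal (Real.log B) := by
      rw [nnlog, if_neg htne]
      rcases eq_or_lt_of_le (ENNReal.toReal_nonneg (a := hhatLoc E σ)) with h0 | h0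
      · rw [← h0, Real.log_zero, ENNReal.ofReal_zero]; exact zero_le
      · exact ENNReal.ofReal_le_ofReal (Real.log_le_log h0 htr)
    have hterm : nnlog (hhatLoc E σ) / ENNReal.ofReal (Real.log σ) ≤
        ENNReal.ofReal (Real.log B / Real.log σ) := by
      rw [ENNReal.ofReal_div_of_pos hlogσ]
      exact ENNReal.div_le_div_right hnn _
    have hlt : Real.log B / Real.log σ < 1/α := by
      have hBlog : Real.log B = Real.log c + (1/α) * Real.log σ := by
        rw [hB, Real.log_mul (ne_of_gt hc0) (ne_of_gt hrpow), Real.log_rpow hσ0]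
      have hcneg : Real.log c < 0 := Real.log_neg hc0 hc1
      have : Real.log c / Real.log σ < 0 := div_neg_of_neg_of_pos hcneg hlogσ
      rw [hBlog, add_div, mul_div_assoc, div_self (ne_of_gt hlogσ), mul_one]
      linarith
    calc boydUpperLoc E ≤ nnlog (hhatLoc E σ) / ENNReal.ofReal (Real.log σ) :=
          iInf₂_le σ (Set.mem_Ioi.mpr hσ)
      _ ≤ ENNReal.ofReal (Real.log B / Real.log σ) := hterm
      _ < ENNReal.ofReal (1/α) :=
          (ENNReal.ofReal_lt_ofReal_iff (by positivity)).mpr hlt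
  · intro hI
    rw [boydUpperLoc] at hI
    obtain ⟨σ, hmem⟩ := iInf_lt_iff.mp hI
    obtain ⟨hσmem, hterm⟩ := iInf_lt_iff.mp hmem
    have hσ : (1:ℝ) < σ := hσmem
    have hσ0 : (0:ℝ) < σ := lt_trans one_pos hσ
    have hlogσ : 0 < Real.log σ := Real.log_pos hσ
    have hrpow : (0:ℝ) < σ ^ (1/α) := Real.rpow_pos_of_pos hσ0 _
    have hrpow1 : (1:ℝ) < σ ^ (1/α) :=
      Real.one_lt_rpow_iff_of_pos hσ0 |>.mpr (Or.inl ⟨hσ, by positivity⟩)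
    have hnnlt : nnlog (hhatLoc E σ) < ENNReal.ofReal ((1/α) * Real.log σ) := by
      rw [ENNReal.ofReal_mul (by positivity)]
      exact (ENNReal.div_lt_iff (Or.inl (ne_of_gt (ENNReal.ofReal_pos.mpr hlogσ)))
        (Or.inl ENNReal.ofReal_ne_top)).mp hterm
    have htop : hhatLoc E σ ≠ ⊤ := by
      intro h
      rw [nnlog, if_pos h] at hnnlt
      exact (not_top_lt hnnlt)
    have hkey : (hhatLoc E σ).toReal < σ ^ (1/α) := by
      rcases le_or_gt (hhatLoc E σ).toReal 1 with h1 | h1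
      · exact lt_of_le_of_lt h1 hrpow1
      · have hlog : Real.log ((hhatLoc E σ).toReal) < (1/α) * Real.log σ := by
          rw [nnlog, if_neg htop] at hnnlt
          exact (ENNReal.ofReal_lt_ofReal_iff (by positivity)).mp hnnlt
        calc (hhatLoc E σ).toReal
            = Real.exp (Real.log ((hhatLoc E σ).toReal)) :=
              (Real.exp_log (by linarith)).symm
          _ < Real.exp ((1/α) * Real.log σ) := Real.exp_lt_exp.mpr hlog
          _ = σ ^ (1/α) := by rw [Real.rpow_def_of_pos hσ0, mul_comm]
    set M : ℝ := ((hhatLoc E σ).toReal + σ ^ (1/α)) / 2 with hMdef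
    have htnn : (0:ℝ) ≤ (hhatLoc E σ).toReal := ENNReal.toReal_nonneg
    have hM0 : 0 < M := by rw [hMdef]; linarith
    have hMlt : M < σ ^ (1/α) := by rw [hMdef]; linarith
    have htoM : (hhatLoc E σ).toReal < M := by rw [hMdef]; linarith
    have hlim : hhatLoc E σ < ENNReal.ofReal M :=
      (ENNReal.lt_ofReal_iff_toReal_lt htop).mpr htoM
    have hev := Filter.eventually_lt_of_limsup_lt hlim
    obtain ⟨s₀, hs₀⟩ := Filter.eventually_atTop.mp hev
    refine ⟨σ, hσ, M / σ ^ (1/α), ⟨div_pos hM0 hrpow, (div_lt_one hrpow).mpr hMlt⟩,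
      max s₀ (max t₁ 1),
      lt_of_lt_of_le one_pos ((le_max_right t₁ 1).trans (le_max_right s₀ _)), ?_⟩
    intro t ht
    have hts₀ : s₀ ≤ t := le_trans (le_max_left _ _) ht
    have htt₁ : t₁ ≤ t := le_trans ((le_max_left t₁ 1).trans (le_max_right s₀ _)) ht
    have hEt : 0 < E t := hEpos t htt₁
    have hofR : ENNReal.ofReal (E (t * σ) / E t) < ENNReal.ofReal M := hs₀ t hts₀
    have hratio : E (t * σ) / E t < M := by
      by_contra hcon
      push_neg at hcon
      exact absurd hofR (not_lt.mpr (ENNReal.ofReal_le_ofReal hcon))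
    have hlt' : E (t * σ) < M * E t := (div_lt_iff₀ hEt).mp hratio
    have hMeq : M / σ ^ (1/α) * σ ^ (1/α) = M := div_mul_cancel₀ M (ne_of_gt hrpow)
    rw [mul_comm σ t]
    calc E (t * σ) ≤ M * E t := hlt'.le
      _ = M / σ ^ (1/α) * σ ^ (1/α) * E t := by rw [hMeq]
end

section
/- Let E be a finite-valued Young function, 0 < α < 1, and Ẽ its Young conjugate. Then there exist constants σ > 1 and c ∈ (0,1) such that E(σt) ≤ c·σ^{1/α}·E(t) near infinity if and only if there exist constants σ' > 1 and c' > 1 such that Ẽ(σ't) ≥ c'·σ'^{1/(1−α)}·Ẽ(t) near infinity. -/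
open scoped ENNReal

/-- The Young conjugate `Ẽ(t) = sup_{s ≥ 0} (s t − E s)`, with values in `[0,∞]`. -/
noncomputable def youngConjE (E : ℝ → ℝ) (t : ℝ) : ℝ≥0∞ :=
  ⨆ s : {s : ℝ // 0 ≤ s}, ENNReal.ofReal ((s : ℝ) * t - E s)

section YoungAux

variable {E : ℝ → ℝ}

lemma le_youngConjE (E : ℝ → ℝ) {s : ℝ} (hs : 0 ≤ s) (t : ℝ) :
    ENNReal.ofReal (s * t - E s) ≤ youngConjE E t :=
  le_iSup (fun s : {s : ℝ // 0 ≤ s} => ENNReal.ofReal ((s : ℝ) * t - E s)) ⟨s, hs⟩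

lemma youngConjE_mono (E : ℝ → ℝ) {t₁ t₂ : ℝ} (h : t₁ ≤ t₂) :
    youngConjE E t₁ ≤ youngConjE E t₂ := by
  refine iSup_mono fun s => ENNReal.ofReal_le_ofReal ?_
  have : (s : ℝ) * t₁ ≤ (s : ℝ) * t₂ := mul_le_mul_of_nonneg_left h s.2
  linarith

lemma E_nonneg (hE0 : E 0 = 0) (hmono : MonotoneOn E (Set.Ici 0)) {s : ℝ} (hs : 0 ≤ s) :
    0 ≤ E s := by
  have := hmono (Set.mem_Ici.2 le_rfl) (Set.mem_Ici.2 hs) hs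
  rwa [hE0] at this

lemma E_scale (hE0 : E 0 = 0) (hconv : ConvexOn ℝ (Set.Ici 0) E)
    {l x : ℝ} (hl0 : 0 ≤ l) (hl1 : l ≤ 1) (hx : 0 ≤ x) :
    E (l * x) ≤ l * E x := by
  have h := hconv.2 (Set.mem_Ici.2 hx) (Set.mem_Ici.2 (le_refl (0 : ℝ))) hl0
    (by linarith : (0:ℝ) ≤ 1 - l) (by ring)
  simpa [hE0, smul_eq_mul] using h

lemma youngConjE_le_above (hE0 : E 0 = 0) (hmono : MonotoneOn E (Set.Ici 0))
    {a t : ℝ} (ha : 0 ≤ a) (ht : E (a + 1) ≤ t) :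
    youngConjE E t ≤ ⨆ s : {s : ℝ // a ≤ s}, ENNReal.ofReal ((s : ℝ) * t - E s) := by
  have ha1 : (0:ℝ) ≤ a + 1 := by linarith
  have ht0 : 0 ≤ t := le_trans (E_nonneg hE0 hmono ha1) ht
  refine iSup_le fun s => ?_
  obtain ⟨s, hs⟩ := s
  rcases le_or_gt a s with h | h
  · exact le_iSup_of_le ⟨s, h⟩ (le_refl _)
  · refine le_trans ?_ (le_iSup_of_le ⟨a + 1, by linarith⟩ (le_refl _))
    refine ENNReal.ofReal_le_ofReal ?_
    have hEs : 0 ≤ E s := E_nonneg hE0 hmono hs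
    have h1 : s * t ≤ a * t := mul_le_mul_of_nonneg_right h.le ht0
    simp only
    linarith

lemma exists_tangent (hconv : ConvexOn ℝ (Set.Ici 0) E) (hE0 : E 0 = 0)
    {y : ℝ} (hy : 0 < y) :
    ∃ u : ℝ, E y / y ≤ u ∧ ∀ x, 0 ≤ x → E y + u * (x - y) ≤ E x := by
  set S : Set ℝ := (fun x => (E y - E x) / (y - x)) '' Set.Ico 0 y with hS
  have hne : S.Nonempty := ⟨(E y - E 0) / (y - 0), ⟨0, ⟨le_rfl, hy⟩, rfl⟩⟩
  have key : ∀ x ∈ Set.Ico (0:ℝ) y, ∀ z, y < z →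
      (E y - E x) / (y - x) ≤ (E z - E y) / (z - y) := by
    intro x hx z hz
    have h := hconv.slope_mono_adjacent (Set.mem_Ici.2 hx.1)
      (Set.mem_Ici.2 (by linarith [hx.1, hx.2] : (0:ℝ) ≤ z)) hx.2 hz
    exact h
  have hbdd : BddAbove S := by
    refine ⟨(E (y + 1) - E y) / (y + 1 - y), ?_⟩
    rintro _ ⟨x, hx, rfl⟩
    exact key x hx (y + 1) (by linarith)
  set u := sSup S with hu
  have hu1 : E y / y ≤ u := by
    have hmem : (E y - E 0) / (y - 0) ∈ S := ⟨0, ⟨le_rfl, hy⟩, rfl⟩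
    have h := le_csSup hbdd hmem
    rw [hE0, sub_zero, sub_zero] at h
    exact h
  refine ⟨u, hu1, ?_⟩
  intro x hx
  rcases lt_trichotomy x y with h | h | h
  · have hmem : (E y - E x) / (y - x) ∈ S := ⟨x, ⟨hx, h⟩, rfl⟩
    have hle := le_csSup hbdd hmem
    have hyx : 0 < y - x := by linarith
    rw [div_le_iff₀ hyx] at hle
    nlinarith
  · rw [h]; simp
  · have hle : u ≤ (E x - E y) / (x - y) := by
      refine csSup_le hne ?_
      rintro _ ⟨z, hz, rfl⟩
      exact key z hz x h
    have hxy : 0 < x - y := by linarith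
    rw [le_div_iff₀ hxy] at hle
    nlinarith

lemma conj_at_tangent (E : ℝ → ℝ) {y u : ℝ} (hy : 0 ≤ y) (hu : 0 ≤ u)
    (htan : ∀ x, 0 ≤ x → E y + u * (x - y) ≤ E x) :
    youngConjE E u = ENNReal.ofReal (y * u - E y) := by
  apply le_antisymm
  · refine iSup_le fun s => ENNReal.ofReal_le_ofReal ?_
    have h := htan s s.2
    nlinarith [s.2]
  · exact le_youngConjE E hy u

end YoungAux

set_option maxHeartbeats 2000000 in
/-- for a finite-valued Young function `E` and `0 < α < 1`, the condition
`E(σt) ≤ c σ^{1/α} E(t)` near infinity (some `σ > 1`, `0 < c < 1`) holds if and only if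
`Ẽ(σ't) ≥ c' σ'^{1/(1−α)} Ẽ(t)` near infinity (some `σ' > 1`, `c' > 1`). -/
theorem pointwise_iff_conjugate_pointwise (E : ℝ → ℝ) (α : ℝ)
    (hα : α ∈ Set.Ioo (0 : ℝ) 1)
    (hE0 : E 0 = 0) (hconv : ConvexOn ℝ (Set.Ici 0) E)
    (hmono : MonotoneOn E (Set.Ici 0))
    (hnontriv : ∃ t > (0 : ℝ), 0 < E t) :
    (∃ σ > (1 : ℝ), ∃ c ∈ Set.Ioo (0 : ℝ) 1, ∃ t₀ > (0 : ℝ),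
        ∀ t ≥ t₀, E (σ * t) ≤ c * σ ^ (1 / α) * E t) ↔
    (∃ σ' > (1 : ℝ), ∃ c' > (1 : ℝ), ∃ t₀ > (0 : ℝ),
        ∀ t ≥ t₀,
          ENNReal.ofReal (c' * σ' ^ (1 / (1 - α))) * youngConjE E t ≤
            youngConjE E (σ' * t)) := by
  obtain ⟨hα0, hα1⟩ := hα
  have h1α : (0:ℝ) < 1 - α := by linarith
  constructor
  · rintro ⟨σ, hσ, c, ⟨hc0, hc1⟩, t₀, ht₀, h⟩
    set K := c * σ ^ (1 / α) with hK
    clear_value K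
    have hσ0 : (0:ℝ) < σ := by linarith
    have hK0 : 0 < K := by rw [hK]; exact mul_pos hc0 (Real.rpow_pos_of_pos hσ0 _)
    -- core inequality
    have core : ∀ u : ℝ, max (E (t₀ + 1)) 1 ≤ u →
        ENNReal.ofReal K * youngConjE E u ≤ youngConjE E (K / σ * u) := by
      intro u hu
      have hu1 : (1:ℝ) ≤ u := le_trans (le_max_right _ _) hu
      have hu0 : (0:ℝ) ≤ u := by linarith
      have hle := youngConjE_le_above hE0 hmono (le_of_lt ht₀)
        (le_trans (le_max_left _ _) hu)
      calc ENNReal.ofReal K * youngConjE E u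
          ≤ ENNReal.ofReal K *
              ⨆ s : {s : ℝ // t₀ ≤ s}, ENNReal.ofReal ((s : ℝ) * u - E s) :=
            mul_le_mul_right hle _
        _ = ⨆ s : {s : ℝ // t₀ ≤ s},
              ENNReal.ofReal K * ENNReal.ofReal ((s : ℝ) * u - E s) :=
            ENNReal.mul_iSup _ _
        _ ≤ youngConjE E (K / σ * u) := by
            refine iSup_le fun s => ?_
            obtain ⟨r, hr⟩ := s
            rw [← ENNReal.ofReal_mul hK0.le]
            have h1 : E (σ * r) ≤ K * E r := h r hr
            have hr0 : (0:ℝ) < r := lt_of_lt_of_le ht₀ hr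
            have h2 : (0:ℝ) ≤ σ * r := by positivity
            refine le_trans (ENNReal.ofReal_le_ofReal ?_) (le_youngConjE E h2 _)
            have hid : σ * r * (K / σ * u) = K * (r * u) := by
              field_simp
            simp only
            nlinarith [h1, hid]
    by_cases hinf : ∃ t1 > (0:ℝ), youngConjE E t1 = ⊤
    · obtain ⟨t1, ht1, htop⟩ := hinf
      refine ⟨2, one_lt_two, 2, one_lt_two, t1, ht1, ?_⟩
      intro t ht
      have h2t : youngConjE E t1 ≤ youngConjE E (2 * t) :=
        youngConjE_mono E (by linarith)
      rw [htop] at h2t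
      rw [top_le_iff.1 h2t]
      exact le_top
    · push_neg at hinf
      obtain ⟨ts, hts, hEts⟩ := hnontriv
      have hEpos : 0 < E (max t₀ ts) := by
        refine lt_of_lt_of_le hEts (hmono (Set.mem_Ici.2 hts.le)
          (Set.mem_Ici.2 (by positivity)) (le_max_right _ _))
      -- σ ≤ K
      have hσK : σ ≤ K := by
        set x := max t₀ ts with hx
        have hx0 : (0:ℝ) < x := lt_of_lt_of_le ht₀ (le_max_left _ _)
        have h1 : E (σ * x) ≤ K * E x := h x (le_max_left _ _)
        have h2 : σ * E x ≤ E (σ * x) := by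
          have hsc := E_scale hE0 hconv (l := 1 / σ) (x := σ * x)
            (by positivity) ((div_le_one hσ0).2 (by linarith)) (by positivity)
          rw [show 1 / σ * (σ * x) = x from by field_simp] at hsc
          calc σ * E x ≤ σ * (1 / σ * E (σ * x)) :=
                mul_le_mul_of_nonneg_left hsc hσ0.le
            _ = E (σ * x) := by field_simp
        nlinarith [hEpos]
      have hσK' : σ < K := by
        rcases lt_or_eq_of_le hσK with h' | h'
        · exact h'
        · exfalso
          set u := max (max (E (t₀ + 1)) 1) (E 1 + 1) with hudef
          clear_value u
          have hco := core u (by rw [hudef]; exact le_max_left _ _)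
          have hKσ : K / σ * u = u := by rw [← h', div_self (ne_of_gt hσ0), one_mul]
          rw [hKσ] at hco
          have hu1 : (1:ℝ) ≤ u := by
            rw [hudef]; exact le_trans (le_max_right _ _) (le_max_left _ _)
          have hufin : youngConjE E u ≠ ⊤ := hinf u (by linarith)
          have hupos : youngConjE E u ≠ 0 := by
            have hle := le_youngConjE E (zero_le_one) u
            have hpos : 0 < 1 * u - E 1 := by
              have : E 1 + 1 ≤ u := by rw [hudef]; exact le_max_right _ _
              linarith
            exact fun h0 => by
              rw [h0, le_zero_iff] at hle
              rw [ENNReal.ofReal_eq_zero] at hle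
              linarith
          have hle1 : ENNReal.ofReal K ≤ 1 := by
            conv_rhs at hco => rw [← one_mul (youngConjE E u)]
            exact (ENNReal.mul_le_mul_iff_left hupos hufin).1 hco
          rw [ENNReal.ofReal_le_one] at hle1
          have : (1:ℝ) < K := by rw [← h']; exact hσ
          linarith
      set σ' := K / σ with hσ'def
      clear_value σ'
      have hσ'1 : 1 < σ' := by rw [hσ'def]; exact (one_lt_div hσ0).2 hσK'
      have hσ'0 : (0:ℝ) < σ' := by linarith
      have hD0 : 0 < σ' ^ (1 / (1 - α)) := Real.rpow_pos_of_pos hσ'0 _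
      set c' := K / σ' ^ (1 / (1 - α)) with hc'def
      clear_value c'
      have hKD : c' * σ' ^ (1 / (1 - α)) = K := by
        rw [hc'def]; exact div_mul_cancel₀ _ (ne_of_gt hD0)
      have hc'1 : 1 < c' := by
        rw [hc'def, lt_div_iff₀ hD0, one_mul]
        -- σ'^(1/(1-α)) < K
        have e2 : σ' ^ (1 / (1 - α)) = c ^ (1 / (1 - α)) * σ ^ (1 / α) := by
          have e1 : σ' = c * σ ^ (1 / α - 1) := by
            rw [hσ'def, hK, Real.rpow_sub hσ0, Real.rpow_one]
            ring
          rw [e1, Real.mul_rpow hc0.le (Real.rpow_pos_of_pos hσ0 _).le,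
            ← Real.rpow_mul hσ0.le]
          congr 2
          field_simp
        rw [e2, hK]
        have hcc : c ^ (1 / (1 - α)) < c := by
          have h1 : (1:ℝ) < 1 / (1 - α) := one_lt_one_div h1α (by linarith)
          have := Real.rpow_lt_rpow_of_exponent_gt hc0 hc1 h1
          rwa [Real.rpow_one] at this
        exact mul_lt_mul_of_pos_right hcc (Real.rpow_pos_of_pos hσ0 _)
      refine ⟨σ', hσ'1, c', hc'1, max (E (t₀ + 1)) 1,
        lt_of_lt_of_le one_pos (le_max_right _ _), ?_⟩
      intro t ht
      rw [hKD]
      exact core t ht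
  · rintro ⟨σ', hσ', c', hc', t₀', ht₀', h⟩
    set C := c' * σ' ^ (1 / (1 - α)) with hC
    clear_value C
    have hσ'0 : (0:ℝ) < σ' := by linarith
    have hB1 : (1:ℝ) < 1 / (1 - α) := one_lt_one_div h1α (by linarith)
    have hDσ' : σ' < σ' ^ (1 / (1 - α)) := by
      have := Real.rpow_lt_rpow_of_exponent_lt hσ' hB1
      rwa [Real.rpow_one] at this
    have hC1 : 1 < C := by nlinarith
    have hCpos : (0:ℝ) < C := by linarith
    obtain ⟨ts, hts, hEts⟩ := hnontriv
    set s₀ := max ts 1 with hs₀def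
    clear_value s₀
    have hs₀1 : (1:ℝ) ≤ s₀ := by rw [hs₀def]; exact le_max_right _ _
    have hs₀0 : (0:ℝ) < s₀ := by linarith
    have hEs₀ : 0 < E s₀ :=
      lt_of_lt_of_le hEts (hmono (Set.mem_Ici.2 hts.le)
        (Set.mem_Ici.2 hs₀0.le) (hs₀def ▸ le_max_left _ _))
    set l := E s₀ / s₀ with hldef
    clear_value l
    have hl0 : 0 < l := by rw [hldef]; exact div_pos hEs₀ hs₀0
    have hlower : ∀ s, s₀ ≤ s → l * s ≤ E s := by
      intro s hs
      have hspos : (0:ℝ) < s := by linarith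
      have hsc := E_scale hE0 hconv (l := s₀ / s) (x := s)
        (by positivity) ((div_le_one hspos).2 hs) hspos.le
      rw [show s₀ / s * s = s₀ from by field_simp] at hsc
      rw [div_mul_eq_mul_div, le_div_iff₀ hspos] at hsc
      rw [hldef, div_mul_eq_mul_div, div_le_iff₀ hs₀0]
      nlinarith
    by_cases hlin : ∃ M : ℝ, ∀ x, 1 ≤ x → E x ≤ M * x
    · obtain ⟨M, hM⟩ := hlin
      have hMl : l ≤ M := by
        have h1 := hM s₀ hs₀1
        have h2 := hlower s₀ le_rfl
        nlinarith
      have hM0 : 0 < M := lt_of_lt_of_le hl0 hMl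
      set R := M / l with hRdef
      clear_value R
      have hR0 : 0 < R := by rw [hRdef]; exact div_pos hM0 hl0
      have hR1 : 1 ≤ R := by rw [hRdef]; exact (one_le_div hl0).2 hMl
      set σ := R ^ (α / (1 - α)) + 2 with hσdef
      clear_value σ
      have hRα : 0 ≤ R ^ (α / (1 - α)) := (Real.rpow_pos_of_pos hR0 _).le
      have hσ1 : 1 < σ := by rw [hσdef]; linarith
      have hσ0 : (0:ℝ) < σ := by linarith
      have hRσ : R < σ ^ ((1 - α) / α) := by
        have hexp : α / (1 - α) * ((1 - α) / α) = 1 := by field_simp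
        have h1 : R ^ (α / (1 - α)) < σ := by rw [hσdef]; linarith
        calc R = (R ^ (α / (1 - α))) ^ ((1 - α) / α) := by
              rw [← Real.rpow_mul hR0.le, hexp, Real.rpow_one]
          _ < σ ^ ((1 - α) / α) :=
              Real.rpow_lt_rpow hRα h1 (by positivity)
      set c := R / σ ^ ((1 - α) / α) with hcdef
      clear_value c
      have hden : 0 < σ ^ ((1 - α) / α) := Real.rpow_pos_of_pos hσ0 _
      have hc1 : c < 1 := by rw [hcdef]; exact (div_lt_one hden).2 hRσ
      have hc0 : 0 < c := by rw [hcdef]; exact div_pos hR0 hden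
      have hcσ : c * σ ^ (1 / α) = R * σ := by
        have hexp : 1 / α - (1 - α) / α = 1 := by field_simp; ring
        calc c * σ ^ (1 / α) = R * (σ ^ (1 / α) / σ ^ ((1 - α) / α)) := by
              rw [hcdef]; ring
          _ = R * σ ^ (1 / α - (1 - α) / α) := by rw [← Real.rpow_sub hσ0]
          _ = R * σ := by rw [hexp, Real.rpow_one]
      refine ⟨σ, hσ1, c, ⟨hc0, hc1⟩, s₀, by linarith, ?_⟩
      intro s hs
      have hs1 : (1:ℝ) ≤ s := le_trans hs₀1 hs
      have h1 : E (σ * s) ≤ M * (σ * s) := hM _ (by nlinarith)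
      have h2 : l * s ≤ E s := hlower s hs
      rw [hcσ]
      have hRl : R * l = M := by rw [hRdef]; exact div_mul_cancel₀ _ (ne_of_gt hl0)
      have h3 : M * (σ * s) = R * σ * (l * s) := by rw [← hRl]; ring
      have h4 : R * σ * (l * s) ≤ R * σ * E s :=
        mul_le_mul_of_nonneg_left h2 (by positivity : (0:ℝ) ≤ R * σ)
      linarith
    · push_neg at hlin
      set σ := C / σ' with hσdef
      clear_value σ
      have hσ1 : 1 < σ := by
        rw [hσdef, lt_div_iff₀ hσ'0, one_mul, hC]
        calc σ' < σ' ^ (1 / (1 - α)) := hDσ'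
          _ ≤ c' * σ' ^ (1 / (1 - α)) :=
            le_mul_of_one_le_left (Real.rpow_pos_of_pos hσ'0 _).le hc'.le
      have hσ0 : (0:ℝ) < σ := by linarith
      set c := C / σ ^ (1 / α) with hcdef
      clear_value c
      have hσA : 0 < σ ^ (1 / α) := Real.rpow_pos_of_pos hσ0 _
      have hc0 : 0 < c := by rw [hcdef]; exact div_pos hCpos hσA
      have hcC : c * σ ^ (1 / α) = C := by
        rw [hcdef]; exact div_mul_cancel₀ _ (ne_of_gt hσA)
      have hc1 : c < 1 := by
        rw [hcdef, div_lt_one hσA]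
        have eσ : σ = c' * σ' ^ (α / (1 - α)) := by
          have hexp : 1 / (1 - α) - 1 = α / (1 - α) := by field_simp; ring
          rw [hσdef, hC, mul_div_assoc]
          congr 1
          rw [show σ' ^ (1 / (1 - α)) / σ' = σ' ^ (1 / (1 - α)) / σ' ^ (1:ℝ) from by
              rw [Real.rpow_one],
            ← Real.rpow_sub hσ'0, hexp]
        have hc'0 : (0:ℝ) < c' := by linarith
        have eσA : σ ^ (1 / α) = c' ^ (1 / α) * σ' ^ (1 / (1 - α)) := by
          have hexp : α / (1 - α) * (1 / α) = 1 / (1 - α) := by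
            field_simp
          rw [eσ, Real.mul_rpow hc'0.le (Real.rpow_pos_of_pos hσ'0 _).le,
            ← Real.rpow_mul hσ'0.le, hexp]
        rw [hC, eσA]
        have hcc : c' < c' ^ (1 / α) := by
          have h1 : (1:ℝ) < 1 / α := one_lt_one_div hα0 hα1
          have := Real.rpow_lt_rpow_of_exponent_lt hc' h1
          rwa [Real.rpow_one] at this
        exact mul_lt_mul_of_pos_right hcc (Real.rpow_pos_of_pos hσ'0 _)
      -- superlinearity
      obtain ⟨x₁, hx₁1, hx₁⟩ := hlin (σ' * t₀')
      have hsup : ∀ x, x₁ ≤ x → σ' * t₀' * x ≤ E x := by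
        intro x hx
        have hxpos : (0:ℝ) < x := by linarith
        have hx₁pos : (0:ℝ) < x₁ := by linarith
        have hsc := E_scale hE0 hconv (l := x₁ / x) (x := x)
          (by positivity) ((div_le_one hxpos).2 hx) hxpos.le
        rw [show x₁ / x * x = x₁ from by field_simp] at hsc
        rw [div_mul_eq_mul_div, le_div_iff₀ hxpos] at hsc
        nlinarith [hx₁]
      refine ⟨σ, hσ1, c, ⟨hc0, hc1⟩, max (x₁ / σ) 1,
        lt_of_lt_of_le one_pos (le_max_right _ _), ?_⟩
      intro r hr
      have hr1 : (1:ℝ) ≤ r := le_trans (le_max_right _ _) hr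
      have hrpos : (0:ℝ) < r := by linarith
      set y := σ * r with hydef
      clear_value y
      have hypos : (0:ℝ) < y := by rw [hydef]; positivity
      have hyx₁ : x₁ ≤ y := by
        have hxr : x₁ / σ ≤ r := le_trans (le_max_left _ _) hr
        rw [hydef]
        calc x₁ = σ * (x₁ / σ) := by field_simp
          _ ≤ σ * r := mul_le_mul_of_nonneg_left hxr hσ0.le
      obtain ⟨u, huge, htan⟩ := exists_tangent hconv hE0 hypos
      have hEy0 : 0 ≤ E y := E_nonneg hE0 hmono hypos.le
      have hu0 : (0:ℝ) ≤ u := le_trans (div_nonneg hEy0 hypos.le) huge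
      have hut : σ' * t₀' ≤ u := by
        have h1 := hsup y hyx₁
        have h2 : σ' * t₀' ≤ E y / y := (le_div_iff₀ hypos).2 h1
        linarith
      set t := u / σ' with htdef
      clear_value t
      have htt₀ : t₀' ≤ t := by
        rw [htdef, le_div_iff₀ hσ'0]
        nlinarith
      have hconju : youngConjE E u = ENNReal.ofReal (y * u - E y) :=
        conj_at_tangent E hypos.le hu0 htan
      have hh := h t htt₀
      rw [show σ' * t = u from by
        rw [htdef, mul_comm, div_mul_cancel₀ u (ne_of_gt hσ'0)]] at hh
      rw [hconju] at hh
      have hfin : youngConjE E t ≠ ⊤ := by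
        intro htop
        rw [htop] at hh
        rw [ENNReal.mul_top (by simp [ENNReal.ofReal_eq_zero]; linarith)] at hh
        exact ENNReal.ofReal_ne_top (top_le_iff.1 hh)
      set β := (youngConjE E t).toReal with hβdef
      clear_value β
      have hβ0 : 0 ≤ β := hβdef ▸ ENNReal.toReal_nonneg
      have hβconj : youngConjE E t = ENNReal.ofReal β := by
        rw [hβdef, ENNReal.ofReal_toReal hfin]
      have hyuE : 0 ≤ y * u - E y := by
        have := htan 0 le_rfl
        rw [hE0] at this
        nlinarith
      have hCβ : C * β ≤ y * u - E y := by
        rw [hβconj, ← ENNReal.ofReal_mul hCpos.le] at hh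
        exact (ENNReal.ofReal_le_ofReal_iff hyuE).1 hh
      have hfen : r * t - E r ≤ β := by
        have hle := le_youngConjE E hrpos.le t
        rw [hβconj] at hle
        exact (ENNReal.ofReal_le_ofReal_iff hβ0).1 hle
      have hyu : y * u = C * (r * t) := by
        rw [hydef, htdef, hσdef]
        field_simp
      rw [hcC]
      have f1 : C * (r * t) - C * E r ≤ C * β := by nlinarith
      linarith [hCβ, f1, hyu.le, hyu.ge]
end

section
/- Let B be a Young function, 0 < α < 1, β > 0 with α + 1/β ≥ 1. Define G_{α,β}(t) = t·B^{-1}(1) for 0 ≤ t ≤ 1 and G_{α,β}(t) = t·inf_{1≤s≤t} B^{-1}(s^{1/β})·s^{α−1} for t > 1, and B_{α,β}(t) = ∫_0^t G_{α,β}^{-1}(s)/s ds. Then B_{α,β} is a Young function and B_{α,β}^{-1}(t) ≃ G_{α,β}(t) for t > 0 (up to multiplicative constants). -/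
open scoped ENNReal
open MeasureTheory

/-- Generalized right-continuous inverse of `B`. -/
noncomputable def genInvR (B : ℝ → ℝ) (t : ℝ) : ℝ := sSup {s | 0 ≤ s ∧ B s ≤ t}

/-- The function `G_{α,β}`: `G(t) = t·B⁻¹(1)` for `t ≤ 1` and
`G(t) = t·inf_{1≤s≤t} B⁻¹(s^{1/β}) s^{α−1}` for `t > 1`. -/
noncomputable def Gab (B : ℝ → ℝ) (α β t : ℝ) : ℝ :=
  if t ≤ 1 then t * genInvR B 1
  else t * sInf ((fun s => genInvR B (s ^ (1 / β)) * s ^ (α - 1)) '' Set.Icc 1 t)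

/-- The Young function `B_{α,β}(t) = ∫_0^t G_{α,β}⁻¹(s)/s ds`. -/
noncomputable def Bab (B : ℝ → ℝ) (α β t : ℝ) : ℝ :=
  ∫ s in Set.Ioc (0 : ℝ) t, genInvR (Gab B α β) s / s

namespace BabAux

lemma genInvR_nonneg (B : ℝ → ℝ) (t : ℝ) : 0 ≤ genInvR B t :=
  Real.sSup_nonneg fun _ hx => hx.1

lemma bddAbove_inv_set {B : ℝ → ℝ} (hB0 : B 0 = 0) (hconv : ConvexOn ℝ (Set.Ici 0) B)
    (hmono : MonotoneOn B (Set.Ici 0)) (hBinv1 : 0 < genInvR B 1) (t : ℝ) :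
    BddAbove {s | 0 ≤ s ∧ B s ≤ t} := by
  have h1 : BddAbove {s | 0 ≤ s ∧ B s ≤ 1} := by
    by_contra h
    rw [genInvR, Real.sSup_of_not_bddAbove h] at hBinv1
    exact lt_irrefl _ hBinv1
  obtain ⟨M, hM⟩ := h1
  have hM0 : 0 ≤ M := hM ⟨le_refl 0, by rw [hB0]; norm_num⟩
  set s₀ : ℝ := M + 1 with hs₀
  have hs₀pos : 0 < s₀ := by positivity
  have hBs₀ : 1 < B s₀ := by
    by_contra h
    push_neg at h
    have := hM ⟨hs₀pos.le, h⟩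
    simp [hs₀] at this
    linarith
  refine ⟨max s₀ (s₀ * t), fun s hs => ?_⟩
  obtain ⟨hs0, hst⟩ := hs
  rcases le_or_gt s s₀ with h | h
  · exact le_max_of_le_left h
  · -- s > s₀ : convexity gives B s ≥ (s/s₀) B s₀ > s/s₀
    have key : B s₀ ≤ (s₀ / s) * B s := by
      have hspos : 0 < s := hs₀pos.trans h
      have hcomb := hconv.2 (Set.mem_Ici.2 hspos.le) (Set.mem_Ici.2 (le_refl 0))
        (by positivity : (0:ℝ) ≤ s₀ / s) (by
          have : s₀ / s ≤ 1 := (div_le_one hspos).2 h.le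
          linarith : (0:ℝ) ≤ 1 - s₀ / s) (by ring)
      have heq : (s₀ / s) • s + (1 - s₀ / s) • (0:ℝ) = s₀ := by
        field_simp
        rw [smul_eq_mul, smul_eq_mul, mul_zero, add_zero, div_mul_cancel₀ _ hspos.ne']
      rw [heq] at hcomb
      rw [hB0] at hcomb
      simpa using hcomb
    have hspos : 0 < s := hs₀pos.trans h
    have h2 : s < s₀ * B s := by
      have : 1 < (s₀ / s) * B s := lt_of_lt_of_le hBs₀ key
      rw [div_mul_eq_mul_div, lt_div_iff₀ hspos] at this
      linarith
    have : s < s₀ * t := lt_of_lt_of_le h2 (by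
      have : B s ≤ t := hst
      nlinarith)
    exact le_max_of_le_right this.le


section Gab

variable {B : ℝ → ℝ} {α β : ℝ}

/-- abbreviation for the infimum part -/
noncomputable def Iab (B : ℝ → ℝ) (α β t : ℝ) : ℝ :=
  sInf ((fun s : ℝ => genInvR B (s ^ (1 / β)) * s ^ (α - 1)) '' Set.Icc 1 t)

lemma genInvR_mono2 (hB0 : B 0 = 0) (hbdd : ∀ t, BddAbove {s | 0 ≤ s ∧ B s ≤ t})
    {t₁ t₂ : ℝ} (h0 : 0 ≤ t₁) (h : t₁ ≤ t₂) :
    genInvR B t₁ ≤ genInvR B t₂ :=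
  csSup_le_csSup (hbdd t₂) ⟨0, le_refl 0, by rw [hB0]; exact h0⟩
    (fun x hx => ⟨hx.1, hx.2.trans h⟩)

lemma f_nonneg {s : ℝ} (hs : 0 ≤ s) :
    0 ≤ genInvR B (s ^ (1 / β)) * s ^ (α - 1) :=
  mul_nonneg (genInvR_nonneg B _) (Real.rpow_nonneg hs _)

lemma image_bddBelow (B : ℝ → ℝ) (α β t : ℝ) :
    BddBelow ((fun s : ℝ => genInvR B (s ^ (1 / β)) * s ^ (α - 1)) '' Set.Icc 1 t) := by
  refine ⟨0, fun y hy => ?_⟩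
  obtain ⟨s, hs, rfl⟩ := hy
  exact f_nonneg (le_trans zero_le_one hs.1)

lemma image_nonempty (B : ℝ → ℝ) (α β : ℝ) {t : ℝ} (ht : 1 ≤ t) :
    ((fun s : ℝ => genInvR B (s ^ (1 / β)) * s ^ (α - 1)) '' Set.Icc 1 t).Nonempty :=
  ⟨_, ⟨1, ⟨le_refl 1, ht⟩, rfl⟩⟩

lemma Iab_nonneg (B : ℝ → ℝ) (α β t : ℝ) : 0 ≤ Iab B α β t :=
  Real.sInf_nonneg fun y hy => by
    obtain ⟨s, hs, rfl⟩ := hy; exact f_nonneg (le_trans zero_le_one hs.1)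

lemma Iab_le (t : ℝ) {s : ℝ} (hs : s ∈ Set.Icc 1 t) :
    Iab B α β t ≤ genInvR B (s ^ (1 / β)) * s ^ (α - 1) :=
  csInf_le (image_bddBelow B α β t) ⟨s, hs, rfl⟩

lemma Iab_le_c {t : ℝ} (ht : 1 ≤ t) : Iab B α β t ≤ genInvR B 1 := by
  have := Iab_le (B := B) (α := α) (β := β) t ⟨le_refl 1, ht⟩
  simpa [Real.one_rpow] using this

lemma Iab_anti (hx : (1:ℝ) ≤ x) (hxy : x ≤ y) : Iab B α β y ≤ Iab B α β x :=
  csInf_le_csInf (image_bddBelow B α β y) (image_nonempty B α β hx)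
    (Set.image_mono (Set.Icc_subset_Icc le_rfl hxy))

lemma c_rpow_le_Iab (hβ : 0 < β) (hB0 : B 0 = 0)
    (hbdd : ∀ t, BddAbove {s | 0 ≤ s ∧ B s ≤ t}) (hα1 : α ≤ 1) {y : ℝ} (hy : 1 ≤ y) :
    genInvR B 1 * y ^ (α - 1) ≤ Iab B α β y := by
  refine le_csInf (image_nonempty B α β hy) ?_
  rintro z ⟨s, hs, rfl⟩
  have h1 : genInvR B 1 ≤ genInvR B (s ^ (1 / β)) :=
    genInvR_mono2 hB0 hbdd zero_le_one (Real.one_le_rpow hs.1 (by positivity))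
  have h2 : y ^ (α - 1) ≤ s ^ (α - 1) :=
    Real.rpow_le_rpow_of_nonpos (lt_of_lt_of_le zero_lt_one hs.1) hs.2 (by linarith)
  exact mul_le_mul h1 h2 (Real.rpow_nonneg (by linarith) _) (genInvR_nonneg B _)

lemma g_mono (hβ : 0 < β) (hB0 : B 0 = 0) (hbdd : ∀ t, BddAbove {s | 0 ≤ s ∧ B s ≤ t})
    (hα0 : 0 ≤ α) {x s : ℝ} (hx : 1 ≤ x) (hxs : x ≤ s) :
    x ^ α * genInvR B (x ^ (1 / β)) ≤ s ^ α * genInvR B (s ^ (1 / β)) := by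
  have h1 : x ^ α ≤ s ^ α := Real.rpow_le_rpow (by linarith) hxs hα0
  have h2 : genInvR B (x ^ (1 / β)) ≤ genInvR B (s ^ (1 / β)) := by
    refine genInvR_mono2 hB0 hbdd (Real.rpow_nonneg (by linarith) _) ?_
    exact Real.rpow_le_rpow (by linarith) hxs (by positivity)
  exact mul_le_mul h1 h2 (genInvR_nonneg B _) (Real.rpow_nonneg (by linarith) _)

lemma s_mul_f {s : ℝ} (hs : 0 < s) :
    s * (genInvR B (s ^ (1 / β)) * s ^ (α - 1)) = s ^ α * genInvR B (s ^ (1 / β)) := by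
  have h : s ^ α = s ^ (α - 1) * s := by
    rw [← Real.rpow_add_one hs.ne']; ring_nf
  rw [h]; ring

lemma Gab_mono_aux (hβ : 0 < β) (hB0 : B 0 = 0)
    (hbdd : ∀ t, BddAbove {s | 0 ≤ s ∧ B s ≤ t}) (hα0 : 0 ≤ α) {x y : ℝ}
    (hx : 1 < x) (hxy : x ≤ y) :
    x * Iab B α β x ≤ y * Iab B α β y := by
  have hy : 1 < y := lt_of_lt_of_le hx hxy
  have hxpos : (0:ℝ) < x := lt_trans zero_lt_one hx
  have hypos : (0:ℝ) < y := lt_trans zero_lt_one hy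
  have key : ∀ z ∈ (fun s : ℝ => genInvR B (s ^ (1 / β)) * s ^ (α - 1)) '' Set.Icc 1 y,
      x * Iab B α β x ≤ y * z := by
    rintro z ⟨s, hs, rfl⟩
    have hs1 : 1 ≤ s := hs.1
    have hspos : (0:ℝ) < s := lt_of_lt_of_le zero_lt_one hs1
    rcases le_or_gt s x with h | h
    · have h1 := Iab_le (B := B) (α := α) (β := β) x ⟨hs1, h⟩
      calc x * Iab B α β x ≤ x * (genInvR B (s ^ (1 / β)) * s ^ (α - 1)) :=
            mul_le_mul_of_nonneg_left h1 hxpos.le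
        _ ≤ y * (genInvR B (s ^ (1 / β)) * s ^ (α - 1)) :=
            mul_le_mul_of_nonneg_right hxy (f_nonneg hspos.le)
    · have h1 := Iab_le (B := B) (α := α) (β := β) x ⟨hx.le, le_refl x⟩
      calc x * Iab B α β x ≤ x * (genInvR B (x ^ (1 / β)) * x ^ (α - 1)) :=
            mul_le_mul_of_nonneg_left h1 hxpos.le
        _ = x ^ α * genInvR B (x ^ (1 / β)) := s_mul_f hxpos
        _ ≤ s ^ α * genInvR B (s ^ (1 / β)) := g_mono hβ hB0 hbdd hα0 hx.le h.le
        _ = s * (genInvR B (s ^ (1 / β)) * s ^ (α - 1)) := (s_mul_f hspos).symm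
        _ ≤ y * (genInvR B (s ^ (1 / β)) * s ^ (α - 1)) :=
            mul_le_mul_of_nonneg_right hs.2 (f_nonneg hspos.le)
  have h1 : x * Iab B α β x / y ≤ Iab B α β y := by
    refine le_csInf (image_nonempty B α β hy.le) ?_
    intro z hz
    rw [div_le_iff₀ hypos]
    calc x * Iab B α β x ≤ y * z := key z hz
      _ = z * y := mul_comm y z
  calc x * Iab B α β x = (x * Iab B α β x / y) * y := by field_simp
    _ ≤ Iab B α β y * y := mul_le_mul_of_nonneg_right h1 hypos.le
    _ = y * Iab B α β y := mul_comm _ _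

lemma Gab_of_le (B : ℝ → ℝ) (α β : ℝ) {t : ℝ} (ht : t ≤ 1) :
    Gab B α β t = t * genInvR B 1 := if_pos ht

lemma Gab_of_gt (B : ℝ → ℝ) (α β : ℝ) {t : ℝ} (ht : 1 < t) :
    Gab B α β t = t * Iab B α β t := if_neg (not_le.2 ht)

lemma Gab_nonneg (B : ℝ → ℝ) (α β : ℝ) {t : ℝ} (ht : 0 ≤ t) : 0 ≤ Gab B α β t := by
  rcases le_or_gt t 1 with h | h
  · rw [Gab_of_le B α β h]; exact mul_nonneg ht (genInvR_nonneg B _)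
  · rw [Gab_of_gt B α β h]; exact mul_nonneg ht (Iab_nonneg B α β t)


lemma Gab_lower (hβ : 0 < β) (hB0 : B 0 = 0)
    (hbdd : ∀ t, BddAbove {s | 0 ≤ s ∧ B s ≤ t}) (hα1 : α ≤ 1) {t : ℝ} (ht : 1 < t) :
    genInvR B 1 * t ^ α ≤ Gab B α β t := by
  have htpos : (0:ℝ) < t := lt_trans zero_lt_one ht
  rw [Gab_of_gt B α β ht]
  have h1 : genInvR B 1 * t ^ (α - 1) ≤ Iab B α β t := c_rpow_le_Iab hβ hB0 hbdd hα1 ht.le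
  have h2 : genInvR B 1 * t ^ α = t * (genInvR B 1 * t ^ (α - 1)) := by
    have : t ^ α = t ^ (α - 1) * t := by rw [← Real.rpow_add_one htpos.ne']; ring_nf
    rw [this]; ring
  rw [h2]
  exact mul_le_mul_of_nonneg_left h1 htpos.le

lemma Gab_pos (hβ : 0 < β) (hB0 : B 0 = 0)
    (hbdd : ∀ t, BddAbove {s | 0 ≤ s ∧ B s ≤ t}) (hBinv1 : 0 < genInvR B 1)
    (hα1 : α ≤ 1) {t : ℝ} (ht : 0 < t) : 0 < Gab B α β t := by
  rcases le_or_gt t 1 with h | h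
  · rw [Gab_of_le B α β h]; positivity
  · refine lt_of_lt_of_le ?_ (Gab_lower hβ hB0 hbdd hα1 h)
    have := Real.rpow_pos_of_pos (lt_trans zero_lt_one h) α
    positivity

lemma Gab_monotoneOn (hβ : 0 < β) (hB0 : B 0 = 0)
    (hbdd : ∀ t, BddAbove {s | 0 ≤ s ∧ B s ≤ t}) (hα0 : 0 ≤ α) (hα1 : α ≤ 1) :
    MonotoneOn (Gab B α β) (Set.Ici 0) := by
  intro x hx y hy hxy
  simp only [Set.mem_Ici] at hx hy
  rcases le_or_gt y 1 with h1 | h1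
  · rw [Gab_of_le B α β (hxy.trans h1), Gab_of_le B α β h1]
    exact mul_le_mul_of_nonneg_right hxy (genInvR_nonneg B _)
  · rcases le_or_gt x 1 with h2 | h2
    · rw [Gab_of_le B α β h2, Gab_of_gt B α β h1]
      have hypos : (0:ℝ) < y := lt_trans zero_lt_one h1
      have step2 : genInvR B 1 ≤ genInvR B 1 * y ^ α := by
        nlinarith [Real.one_le_rpow h1.le hα0, genInvR_nonneg B 1]
      have step3 : genInvR B 1 * y ^ α ≤ y * Iab B α β y := by
        have h3 : genInvR B 1 * y ^ (α - 1) ≤ Iab B α β y :=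
          c_rpow_le_Iab hβ hB0 hbdd hα1 h1.le
        have h4 : genInvR B 1 * y ^ α = y * (genInvR B 1 * y ^ (α - 1)) := by
          have : y ^ α = y ^ (α - 1) * y := by rw [← Real.rpow_add_one hypos.ne']; ring_nf
          rw [this]; ring
        rw [h4]
        exact mul_le_mul_of_nonneg_left h3 hypos.le
      calc x * genInvR B 1 ≤ genInvR B 1 := by nlinarith [genInvR_nonneg B 1]
        _ ≤ genInvR B 1 * y ^ α := step2
        _ ≤ y * Iab B α β y := step3
    · rw [Gab_of_gt B α β h2, Gab_of_gt B α β h1]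
      exact Gab_mono_aux hβ hB0 hbdd hα0 h2 hxy

lemma Gab_homog (hβ : 0 < β) (hB0 : B 0 = 0)
    (hbdd : ∀ t, BddAbove {s | 0 ≤ s ∧ B s ≤ t}) {k x : ℝ} (hk : 1 ≤ k) (hx : 0 ≤ x) :
    Gab B α β (k * x) ≤ k * Gab B α β x := by
  have hxkx : x ≤ k * x := le_mul_of_one_le_left hx hk
  rcases le_or_gt (k * x) 1 with h1 | h1
  · rw [Gab_of_le B α β h1, Gab_of_le B α β (hxkx.trans h1)]
    ring_nf; exact le_refl _
  · rcases le_or_gt x 1 with h2 | h2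
    · rw [Gab_of_le B α β h2, Gab_of_gt B α β h1]
      have : Iab B α β (k * x) ≤ genInvR B 1 := Iab_le_c h1.le
      calc k * x * Iab B α β (k * x) ≤ k * x * genInvR B 1 := by
            nlinarith [mul_nonneg (le_trans zero_le_one hk) hx]
        _ = k * (x * genInvR B 1) := by ring
    · rw [Gab_of_gt B α β h2, Gab_of_gt B α β h1]
      have h3 : Iab B α β (k * x) ≤ Iab B α β x := Iab_anti h2.le hxkx
      calc k * x * Iab B α β (k * x) ≤ k * x * Iab B α β x := by
            nlinarith [mul_nonneg (le_trans zero_le_one hk) hx, lt_trans zero_lt_one h2]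
        _ = k * (x * Iab B α β x) := by ring


/-! ### Properties of `H = genInvR (Gab B α β)` -/

lemma bddAbove_Gab_set (hβ : 0 < β) (hB0 : B 0 = 0)
    (hbdd : ∀ t, BddAbove {s | 0 ≤ s ∧ B s ≤ t}) (hBinv1 : 0 < genInvR B 1)
    (hα0 : 0 < α) (hα1 : α ≤ 1) (s : ℝ) :
    BddAbove {x | 0 ≤ x ∧ Gab B α β x ≤ s} := by
  refine ⟨max 1 ((s / genInvR B 1) ^ α⁻¹), fun x hx => ?_⟩
  obtain ⟨hx0, hxs⟩ := hx
  rcases le_or_gt x 1 with h | h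
  · exact le_max_of_le_left h
  · refine le_max_of_le_right ?_
    have h1 : genInvR B 1 * x ^ α ≤ s := (Gab_lower hβ hB0 hbdd hα1 h).trans hxs
    have h2 : x ^ α ≤ s / genInvR B 1 := (le_div_iff₀' hBinv1).2 h1
    have h3 : (x ^ α) ^ α⁻¹ ≤ (s / genInvR B 1) ^ α⁻¹ :=
      Real.rpow_le_rpow (Real.rpow_nonneg (by linarith) _) h2 (by positivity)
    rwa [Real.rpow_rpow_inv (by linarith) hα0.ne'] at h3

lemma le_H (hβ : 0 < β) (hB0 : B 0 = 0)
    (hbdd : ∀ t, BddAbove {s | 0 ≤ s ∧ B s ≤ t}) (hBinv1 : 0 < genInvR B 1)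
    (hα0 : 0 < α) (hα1 : α ≤ 1) {x s : ℝ} (hx : 0 ≤ x) (h : Gab B α β x ≤ s) :
    x ≤ genInvR (Gab B α β) s :=
  le_csSup (bddAbove_Gab_set hβ hB0 hbdd hBinv1 hα0 hα1 s) ⟨hx, h⟩

lemma H_le (hβ : 0 < β) (hB0 : B 0 = 0)
    (hbdd : ∀ t, BddAbove {s | 0 ≤ s ∧ B s ≤ t}) (hα0 : 0 ≤ α) (hα1 : α ≤ 1)
    {s u : ℝ} (hu : 0 ≤ u) (h : s < Gab B α β u) :
    genInvR (Gab B α β) s ≤ u := by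
  refine Real.sSup_le (fun x hx => ?_) hu
  obtain ⟨hx0, hxs⟩ := hx
  by_contra hcon
  push_neg at hcon
  have : Gab B α β u ≤ Gab B α β x :=
    Gab_monotoneOn hβ hB0 hbdd hα0 hα1 (Set.mem_Ici.2 hu) (Set.mem_Ici.2 hx0) hcon.le
  linarith

lemma Gab_le_of_lt_H (hβ : 0 < β) (hB0 : B 0 = 0)
    (hbdd : ∀ t, BddAbove {s | 0 ≤ s ∧ B s ≤ t}) (hα0 : 0 ≤ α) (hα1 : α ≤ 1)
    {x s : ℝ} (hx : 0 ≤ x) (h : x < genInvR (Gab B α β) s) :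
    Gab B α β x ≤ s := by
  have hne : {y | 0 ≤ y ∧ Gab B α β y ≤ s}.Nonempty := by
    by_contra hcon
    rw [Set.not_nonempty_iff_eq_empty] at hcon
    rw [genInvR, hcon, Real.sSup_empty] at h
    linarith
  obtain ⟨y, hy, hxy⟩ := exists_lt_of_lt_csSup hne h
  calc Gab B α β x ≤ Gab B α β y :=
        Gab_monotoneOn hβ hB0 hbdd hα0 hα1 (Set.mem_Ici.2 hx) (Set.mem_Ici.2 hy.1) hxy.le
    _ ≤ s := hy.2

lemma H_zero_of_nonpos {s : ℝ} (hs : s < 0) : genInvR (Gab B α β) s = 0 := by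
  have : {y | 0 ≤ y ∧ Gab B α β y ≤ s} = ∅ := by
    ext y
    simp only [Set.mem_setOf_eq, Set.mem_empty_iff_false, iff_false, not_and, not_le]
    intro hy
    exact lt_of_lt_of_le hs (Gab_nonneg B α β hy)
  rw [genInvR, this, Real.sSup_empty]

/-- The integrand `s ↦ H s / s` is monotone on all of `ℝ`. -/
lemma integrand_mono (hβ : 0 < β) (hB0 : B 0 = 0)
    (hbdd : ∀ t, BddAbove {s | 0 ≤ s ∧ B s ≤ t}) (hBinv1 : 0 < genInvR B 1)
    (hα0 : 0 < α) (hα1 : α ≤ 1) :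
    Monotone (fun s => genInvR (Gab B α β) s / s) := by
  have hnn : ∀ s : ℝ, 0 ≤ genInvR (Gab B α β) s / s := by
    intro s
    rcases lt_trichotomy s 0 with h | h | h
    · rw [H_zero_of_nonpos h, zero_div]
    · simp [h]
    · exact div_nonneg (genInvR_nonneg _ _) h.le
  have hzero : ∀ s : ℝ, s ≤ 0 → genInvR (Gab B α β) s / s = 0 := by
    intro s hs
    rcases lt_or_eq_of_le hs with h | h
    · rw [H_zero_of_nonpos h, zero_div]
    · rw [h, div_zero]
  intro s₁ s₂ h
  dsimp only
  rcases le_or_gt s₁ 0 with h1 | h1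
  · rw [hzero s₁ h1]; exact hnn s₂
  · have h2 : 0 < s₂ := lt_of_lt_of_le h1 h
    -- main case : 0 < s₁ ≤ s₂
    have key : genInvR (Gab B α β) s₁ ≤ s₁ / s₂ * genInvR (Gab B α β) s₂ := by
      refine Real.sSup_le (fun x hx => ?_) (mul_nonneg (by positivity) (genInvR_nonneg _ _))
      obtain ⟨hx0, hxs⟩ := hx
      have hk : 1 ≤ s₂ / s₁ := (one_le_div h1).2 h
      have hgab : Gab B α β (s₂ / s₁ * x) ≤ s₂ := by
        calc Gab B α β (s₂ / s₁ * x) ≤ s₂ / s₁ * Gab B α β x :=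
              Gab_homog hβ hB0 hbdd hk hx0
          _ ≤ s₂ / s₁ * s₁ := mul_le_mul_of_nonneg_left hxs (by positivity)
          _ = s₂ := by field_simp
      have hmem : s₂ / s₁ * x ≤ genInvR (Gab B α β) s₂ :=
        le_H hβ hB0 hbdd hBinv1 hα0 hα1 (by positivity) hgab
      -- x ≤ s₁/s₂ * H s₂
      have := mul_le_mul_of_nonneg_left hmem (by positivity : (0:ℝ) ≤ s₁ / s₂)
      calc x = s₁ / s₂ * (s₂ / s₁ * x) := by field_simp
        _ ≤ s₁ / s₂ * genInvR (Gab B α β) s₂ := this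
    rw [div_le_div_iff₀ h1 h2]
    calc genInvR (Gab B α β) s₁ * s₂ ≤ s₁ / s₂ * genInvR (Gab B α β) s₂ * s₂ :=
          mul_le_mul_of_nonneg_right key h2.le
      _ = genInvR (Gab B α β) s₂ * s₁ := by field_simp


end Gab

section Bab

variable {B : ℝ → ℝ} {α β : ℝ}

lemma Bab_eq_interval (B : ℝ → ℝ) (α β : ℝ) {t : ℝ} (ht : 0 ≤ t) :
    Bab B α β t = ∫ s in (0:ℝ)..t, genInvR (Gab B α β) s / s := by
  rw [intervalIntegral.integral_of_le ht]; rfl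

lemma Bab_zero (B : ℝ → ℝ) (α β : ℝ) : Bab B α β 0 = 0 := by
  simp [Bab]

lemma Bab_mono (hβ : 0 < β) (hB0 : B 0 = 0)
    (hbdd : ∀ t, BddAbove {s | 0 ≤ s ∧ B s ≤ t}) (hBinv1 : 0 < genInvR B 1)
    (hα0 : 0 < α) (hα1 : α ≤ 1) : MonotoneOn (Bab B α β) (Set.Ici 0) := by
  have hm : Monotone (fun s => genInvR (Gab B α β) s / s) :=
    integrand_mono hβ hB0 hbdd hBinv1 hα0 hα1
  intro x hx y hy hxy
  simp only [Set.mem_Ici] at hx hy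
  rw [Bab_eq_interval B α β hx, Bab_eq_interval B α β hy,
    ← intervalIntegral.integral_add_adjacent_intervals
      (hm.intervalIntegrable) (hm.intervalIntegrable) (a := 0) (b := x) (c := y)]
  have : 0 ≤ ∫ s in x..y, genInvR (Gab B α β) s / s := by
    refine intervalIntegral.integral_nonneg hxy (fun u hu => ?_)
    rcases lt_trichotomy u 0 with h | h | h
    · rw [H_zero_of_nonpos h, zero_div]
    · simp [h]
    · exact div_nonneg (genInvR_nonneg _ _) h.le
  linarith

lemma Bab_le_H (hβ : 0 < β) (hB0 : B 0 = 0)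
    (hbdd : ∀ t, BddAbove {s | 0 ≤ s ∧ B s ≤ t}) (hBinv1 : 0 < genInvR B 1)
    (hα0 : 0 < α) (hα1 : α ≤ 1) {t : ℝ} (ht : 0 < t) :
    Bab B α β t ≤ genInvR (Gab B α β) t := by
  have hm : Monotone (fun s => genInvR (Gab B α β) s / s) :=
    integrand_mono hβ hB0 hbdd hBinv1 hα0 hα1
  rw [Bab_eq_interval B α β ht.le]
  calc (∫ s in (0:ℝ)..t, genInvR (Gab B α β) s / s)
      ≤ ∫ _ in (0:ℝ)..t, genInvR (Gab B α β) t / t := by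
        refine intervalIntegral.integral_mono_on ht.le hm.intervalIntegrable
          intervalIntegrable_const (fun u hu => hm hu.2)
    _ = t * (genInvR (Gab B α β) t / t) := by
        rw [intervalIntegral.integral_const, smul_eq_mul, sub_zero]
    _ = genInvR (Gab B α β) t := by field_simp

lemma H_half_le_Bab (hβ : 0 < β) (hB0 : B 0 = 0)
    (hbdd : ∀ t, BddAbove {s | 0 ≤ s ∧ B s ≤ t}) (hBinv1 : 0 < genInvR B 1)
    (hα0 : 0 < α) (hα1 : α ≤ 1) {t : ℝ} (ht : 0 < t) :
    genInvR (Gab B α β) (t / 2) ≤ Bab B α β t := by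
  have hm : Monotone (fun s => genInvR (Gab B α β) s / s) :=
    integrand_mono hβ hB0 hbdd hBinv1 hα0 hα1
  rw [Bab_eq_interval B α β ht.le,
    ← intervalIntegral.integral_add_adjacent_intervals
      (hm.intervalIntegrable) (hm.intervalIntegrable) (a := 0) (b := t / 2) (c := t)]
  have h1 : 0 ≤ ∫ s in (0:ℝ)..(t / 2), genInvR (Gab B α β) s / s := by
    refine intervalIntegral.integral_nonneg (by linarith) (fun u hu => ?_)
    rcases lt_trichotomy u 0 with h | h | h
    · rw [H_zero_of_nonpos h, zero_div]
    · simp [h]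
    · exact div_nonneg (genInvR_nonneg _ _) h.le
  have h2 : genInvR (Gab B α β) (t / 2) ≤ ∫ s in (t / 2)..t, genInvR (Gab B α β) s / s := by
    calc genInvR (Gab B α β) (t / 2)
        = (t - t / 2) * (genInvR (Gab B α β) (t / 2) / (t / 2)) := by
          field_simp; ring
      _ = ∫ _ in (t / 2)..t, genInvR (Gab B α β) (t / 2) / (t / 2) := by
          rw [intervalIntegral.integral_const, smul_eq_mul]
      _ ≤ ∫ s in (t / 2)..t, genInvR (Gab B α β) s / s := by
          refine intervalIntegral.integral_mono_on (by linarith)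
            intervalIntegrable_const hm.intervalIntegrable (fun u hu => hm hu.1)
  linarith

lemma Bab_convexOn (hβ : 0 < β) (hB0 : B 0 = 0)
    (hbdd : ∀ t, BddAbove {s | 0 ≤ s ∧ B s ≤ t}) (hBinv1 : 0 < genInvR B 1)
    (hα0 : 0 < α) (hα1 : α ≤ 1) : ConvexOn ℝ (Set.Ici 0) (Bab B α β) := by
  have hm : Monotone (fun s => genInvR (Gab B α β) s / s) :=
    integrand_mono hβ hB0 hbdd hBinv1 hα0 hα1
  have hnn : ∀ s : ℝ, 0 ≤ genInvR (Gab B α β) s / s := by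
    intro s
    rcases lt_trichotomy s 0 with h | h | h
    · rw [H_zero_of_nonpos h, zero_div]
    · simp [h]
    · exact div_nonneg (genInvR_nonneg _ _) h.le
  have key : ∀ x y a b : ℝ, 0 ≤ x → x ≤ y → 0 ≤ a → 0 ≤ b → a + b = 1 →
      Bab B α β (a * x + b * y) ≤ a * Bab B α β x + b * Bab B α β y := by
    intro x y a b hx0 hxy ha hb hab
    set t := a * x + b * y with htdef
    have htx : x ≤ t := by nlinarith
    have hty : t ≤ y := by nlinarith
    have ht0 : 0 ≤ t := le_trans hx0 htx
    have hy0 : 0 ≤ y := le_trans ht0 hty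
    have e1 : Bab B α β t = Bab B α β x + ∫ s in x..t, genInvR (Gab B α β) s / s := by
      rw [Bab_eq_interval B α β hx0, Bab_eq_interval B α β ht0,
        ← intervalIntegral.integral_add_adjacent_intervals
          (hm.intervalIntegrable) (hm.intervalIntegrable) (a := 0) (b := x) (c := t)]
    have e2 : Bab B α β y = Bab B α β t + ∫ s in t..y, genInvR (Gab B α β) s / s := by
      rw [Bab_eq_interval B α β ht0, Bab_eq_interval B α β hy0,
        ← intervalIntegral.integral_add_adjacent_intervals
          (hm.intervalIntegrable) (hm.intervalIntegrable) (a := 0) (b := t) (c := y)]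
    have hI1 : (∫ s in x..t, genInvR (Gab B α β) s / s) ≤
        (t - x) * (genInvR (Gab B α β) t / t) := by
      calc (∫ s in x..t, genInvR (Gab B α β) s / s)
          ≤ ∫ _ in x..t, genInvR (Gab B α β) t / t :=
            intervalIntegral.integral_mono_on htx hm.intervalIntegrable
              intervalIntegrable_const (fun u hu => hm hu.2)
        _ = (t - x) * (genInvR (Gab B α β) t / t) := by
            rw [intervalIntegral.integral_const, smul_eq_mul]
    have hI2 : (y - t) * (genInvR (Gab B α β) t / t) ≤
        ∫ s in t..y, genInvR (Gab B α β) s / s := by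
      calc (y - t) * (genInvR (Gab B α β) t / t)
          = ∫ _ in t..y, genInvR (Gab B α β) t / t := by
            rw [intervalIntegral.integral_const, smul_eq_mul]
        _ ≤ ∫ s in t..y, genInvR (Gab B α β) s / s :=
            intervalIntegral.integral_mono_on hty intervalIntegrable_const
              hm.intervalIntegrable (fun u hu => hm hu.1)
    have k1 : a * (∫ s in x..t, genInvR (Gab B α β) s / s) ≤
        a * ((t - x) * (genInvR (Gab B α β) t / t)) := mul_le_mul_of_nonneg_left hI1 ha
    have k2 : b * ((y - t) * (genInvR (Gab B α β) t / t)) ≤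
        b * (∫ s in t..y, genInvR (Gab B α β) s / s) := mul_le_mul_of_nonneg_left hI2 hb
    have e3 : t - x = b * (y - x) := by rw [htdef]; linear_combination x * hab
    have e4 : y - t = a * (y - x) := by rw [htdef]; linear_combination (-y) * hab
    have k3 : a * ((t - x) * (genInvR (Gab B α β) t / t)) =
        b * ((y - t) * (genInvR (Gab B α β) t / t)) := by
      rw [e3, e4]; ring
    have m1 : b * Bab B α β y = b * Bab B α β t
        + b * ∫ s in t..y, genInvR (Gab B α β) s / s := by rw [e2]; ring
    have m2 : a * Bab B α β t = a * Bab B α β x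
        + a * ∫ s in x..t, genInvR (Gab B α β) s / s := by rw [e1]; ring
    have m3 : a * Bab B α β t + b * Bab B α β t = Bab B α β t := by
      linear_combination (Bab B α β t) * hab
    linarith
  refine ⟨convex_Ici 0, fun x hx y hy a b ha hb hab => ?_⟩
  simp only [smul_eq_mul]
  simp only [Set.mem_Ici] at hx hy
  rcases le_total x y with hxy | hxy
  · exact key x y a b hx hxy ha hb hab
  · have := key y x b a hy hxy hb ha (by linarith)
    calc Bab B α β (a * x + b * y) = Bab B α β (b * y + a * x) := by ring_nf
      _ ≤ b * Bab B α β y + a * Bab B α β x := this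
      _ = a * Bab B α β x + b * Bab B α β y := by ring

end Bab

end BabAux

/-- `B_{α,β}` is a Young function, and `B_{α,β}⁻¹ ≃ G_{α,β}` on `(0,∞)`
up to multiplicative constants. -/
theorem Bab_young_and_inverse_equiv (B : ℝ → ℝ) (α β : ℝ)
    (hα : α ∈ Set.Ioo (0 : ℝ) 1) (hβ : 0 < β) (hαβ : 1 ≤ α + 1 / β)
    (hB0 : B 0 = 0) (hconv : ConvexOn ℝ (Set.Ici 0) B)
    (hmono : MonotoneOn B (Set.Ici 0))
    (hBinv1 : 0 < genInvR B 1) :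
    Bab B α β 0 = 0 ∧ ConvexOn ℝ (Set.Ici 0) (Bab B α β) ∧
      MonotoneOn (Bab B α β) (Set.Ici 0) ∧
      ∃ c₁ > (0 : ℝ), ∃ c₂ > (0 : ℝ), ∀ t > (0 : ℝ),
        c₁ * Gab B α β t ≤ genInvR (Bab B α β) t ∧
          genInvR (Bab B α β) t ≤ c₂ * Gab B α β t := by
  obtain ⟨hα0, hα1⟩ := hα
  have hα1' : α ≤ 1 := hα1.le
  have hbdd : ∀ t, BddAbove {s | 0 ≤ s ∧ B s ≤ t} :=
    BabAux.bddAbove_inv_set hB0 hconv hmono hBinv1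
  refine ⟨BabAux.Bab_zero B α β,
    BabAux.Bab_convexOn hβ hB0 hbdd hBinv1 hα0 hα1',
    BabAux.Bab_mono hβ hB0 hbdd hBinv1 hα0 hα1',
    1/2, by norm_num, 4, by norm_num, ?_⟩
  intro t ht
  have hGpos : 0 < Gab B α β t := BabAux.Gab_pos hβ hB0 hbdd hBinv1 hα1' ht
  have hub : ∀ x, 0 ≤ x → Bab B α β x ≤ t → x ≤ 4 * Gab B α β t := by
    intro x hx0 hxt
    rcases eq_or_lt_of_le hx0 with h | h
    · rw [← h]; linarith
    · by_contra hcon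
      push_neg at hcon
      have hhom : Gab B α β (2 * t) ≤ 2 * Gab B α β t :=
        BabAux.Gab_homog hβ hB0 hbdd (by norm_num : (1:ℝ) ≤ 2) ht.le
      have h2 : Gab B α β (2 * t) ≤ x / 2 := by linarith
      have h3 : 2 * t ≤ genInvR (Gab B α β) (x / 2) :=
        BabAux.le_H hβ hB0 hbdd hBinv1 hα0 hα1' (by linarith) h2
      have h4 : genInvR (Gab B α β) (x / 2) ≤ Bab B α β x :=
        BabAux.H_half_le_Bab hβ hB0 hbdd hBinv1 hα0 hα1' h
      linarith
  constructor
  · have hmem : Gab B α β t / 2 ∈ {x | 0 ≤ x ∧ Bab B α β x ≤ t} := by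
      refine ⟨by linarith, ?_⟩
      have h1 : Bab B α β (Gab B α β t / 2) ≤ genInvR (Gab B α β) (Gab B α β t / 2) :=
        BabAux.Bab_le_H hβ hB0 hbdd hBinv1 hα0 hα1' (by linarith)
      have h2 : genInvR (Gab B α β) (Gab B α β t / 2) ≤ t :=
        BabAux.H_le hβ hB0 hbdd hα0.le hα1' ht.le (by linarith)
      linarith
    have hbddB : BddAbove {x | 0 ≤ x ∧ Bab B α β x ≤ t} :=
      ⟨4 * Gab B α β t, fun x hx => hub x hx.1 hx.2⟩
    have hle := le_csSup hbddB hmem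
    calc (1:ℝ)/2 * Gab B α β t = Gab B α β t / 2 := by ring
      _ ≤ genInvR (Bab B α β) t := hle
  · exact Real.sSup_le (fun x hx => hub x hx.1 hx.2) (by linarith)
end

section
/- Let B be a Young function, 0 < α < 1, β > 0, α + 1/β ≥ 1, and let B_{α,β} be as defined via G_{α,β}. Then the local upper Boyd index satisfies 1 ≤ I_{B_{α,β}} ≤ 1/α. -/
open scoped ENNReal
open MeasureTheory

namespace BoydAux

lemma genInvR_nonneg (F : ℝ → ℝ) (t : ℝ) : 0 ≤ genInvR F t :=
  Real.sSup_nonneg (fun _ hx => hx.1)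

lemma genInvR_mono (F : ℝ → ℝ) (hF0 : F 0 = 0) {x y : ℝ} (hx : 0 ≤ x) (hxy : x ≤ y)
    (hbdd : BddAbove {s | 0 ≤ s ∧ F s ≤ y}) : genInvR F x ≤ genInvR F y := by
  refine csSup_le_csSup hbdd ⟨0, le_refl 0, by rw [hF0]; exact hx⟩ ?_
  intro s hs; exact ⟨hs.1, hs.2.trans hxy⟩

variable {B : ℝ → ℝ} {α β : ℝ}

lemma exists_B_gt (hB0 : B 0 = 0) (hBinv1 : 0 < genInvR B 1) : ∃ s1, 0 < s1 ∧ 1 < B s1 := by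
  by_contra h
  push_neg at h
  have hub : ¬ BddAbove {s : ℝ | 0 ≤ s ∧ B s ≤ 1} := by
    rintro ⟨M, hM⟩
    have hM0 : (0:ℝ) ≤ max M 0 := le_max_right _ _
    have h0 : max M 0 + 1 ∈ {s : ℝ | 0 ≤ s ∧ B s ≤ 1} :=
      ⟨by linarith, h _ (by linarith)⟩
    have := hM h0
    have : M ≤ max M 0 := le_max_left _ _
    linarith [hM h0]
  rw [genInvR, Real.sSup_of_not_bddAbove hub] at hBinv1
  exact lt_irrefl 0 hBinv1

lemma B_lower (hB0 : B 0 = 0) (hconv : ConvexOn ℝ (Set.Ici 0) B)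
    {s1 : ℝ} (hs1 : 0 < s1) (hBs1 : 1 < B s1) {s : ℝ} (hs : s1 ≤ s) :
    s / s1 ≤ B s := by
  have hs0 : 0 < s := hs1.trans_le hs
  have ha : (0:ℝ) ≤ s1/s := by positivity
  have hb : (0:ℝ) ≤ 1 - s1/s := by
    have : s1/s ≤ 1 := (div_le_one hs0).mpr hs
    linarith
  have key := hconv.2 (Set.mem_Ici.mpr hs0.le) (Set.mem_Ici.mpr (le_refl (0:ℝ))) ha hb (by ring)
  have h1 : s1/s * s = s1 := by field_simp
  simp only [smul_eq_mul, hB0, mul_zero, add_zero, h1] at key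
  -- key : B s1 ≤ s1 / s * B s
  have h2 : 1 < s1 / s * B s := hBs1.trans_le key
  rw [div_le_iff₀ hs1]
  have h3 : s * 1 < s * (s1 / s * B s) := by
    exact (mul_lt_mul_iff_right₀ hs0).mpr h2
  have h4 : s * (s1 / s * B s) = B s * s1 := by field_simp
  linarith [h3.le.trans_eq h4]

lemma B_set_bddAbove (hB0 : B 0 = 0) (hconv : ConvexOn ℝ (Set.Ici 0) B)
    (hBinv1 : 0 < genInvR B 1) (x : ℝ) : BddAbove {s : ℝ | 0 ≤ s ∧ B s ≤ x} := by
  obtain ⟨s1, hs1, hBs1⟩ := exists_B_gt hB0 hBinv1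
  refine ⟨max s1 (s1 * x), ?_⟩
  rintro s ⟨hs0, hsx⟩
  rcases le_or_gt s s1 with h | h
  · exact le_max_of_le_left h
  · have := B_lower hB0 hconv hs1 hBs1 h.le
    have : s / s1 ≤ x := this.trans hsx
    have : s ≤ s1 * x := by rw [div_le_iff₀ hs1] at this; linarith
    exact le_max_of_le_right this


/-- abbreviation for the infimand -/
lemma fab_nonneg (hβ : 0 < β) {u : ℝ} (hu : 1 ≤ u) :
    0 ≤ genInvR B (u ^ (1 / β)) * u ^ (α - 1) := by
  have h1 : (0:ℝ) < u := by linarith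
  have := genInvR_nonneg B (u ^ (1/β))
  positivity

lemma Gab_image_bddBelow (hβ : 0 < β) {t : ℝ} :
    BddBelow ((fun s => genInvR B (s ^ (1 / β)) * s ^ (α - 1)) '' Set.Icc 1 t) := by
  refine ⟨0, ?_⟩
  rintro _ ⟨u, hu, rfl⟩
  exact fab_nonneg hβ hu.1

lemma genInvR_B_ge_c (hB0 : B 0 = 0) (hconv : ConvexOn ℝ (Set.Ici 0) B)
    (hBinv1 : 0 < genInvR B 1) (hβ : 0 < β) {u : ℝ} (hu : 1 ≤ u) :
    genInvR B 1 ≤ genInvR B (u ^ (1 / β)) := by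
  refine genInvR_mono B hB0 zero_le_one ?_ (B_set_bddAbove hB0 hconv hBinv1 _)
  calc (1:ℝ) = 1 ^ (1/β) := (Real.one_rpow _).symm
  _ ≤ u ^ (1/β) := Real.rpow_le_rpow zero_le_one hu (by positivity)

lemma Gab_le_of_mem (hβ : 0 < β) {t u : ℝ} (ht : 1 < t) (hu : u ∈ Set.Icc 1 t) :
    Gab B α β t ≤ t * (genInvR B (u ^ (1 / β)) * u ^ (α - 1)) := by
  rw [Gab, if_neg (not_le.mpr ht)]
  have h0 : (0:ℝ) ≤ t := by linarith
  exact mul_le_mul_of_nonneg_left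
    (csInf_le (Gab_image_bddBelow hβ) ⟨u, hu, rfl⟩) h0

lemma Gab_of_le_one {t : ℝ} (ht : t ≤ 1) : Gab B α β t = t * genInvR B 1 := if_pos ht

lemma Gab_lower (hα : α ∈ Set.Ioo (0:ℝ) 1) (hβ : 0 < β) (hB0 : B 0 = 0)
    (hconv : ConvexOn ℝ (Set.Ici 0) B) (hBinv1 : 0 < genInvR B 1)
    {t : ℝ} (ht : 1 ≤ t) : genInvR B 1 * t ^ α ≤ Gab B α β t := by
  rcases eq_or_lt_of_le ht with h | h
  · rw [← h, Gab_of_le_one le_rfl, Real.one_rpow]; ring_nf; exact le_rfl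
  · rw [Gab, if_neg (not_le.mpr h)]
    have ht0 : (0:ℝ) < t := by linarith
    have key : genInvR B 1 * t ^ (α - 1) ≤
        sInf ((fun s => genInvR B (s ^ (1 / β)) * s ^ (α - 1)) '' Set.Icc 1 t) := by
      refine le_csInf ⟨_, ⟨1, Set.mem_Icc.mpr ⟨le_rfl, ht⟩, rfl⟩⟩ ?_
      rintro _ ⟨u, hu, rfl⟩
      have hu1 : (0:ℝ) < u := by have := hu.1; linarith
      refine mul_le_mul (genInvR_B_ge_c hB0 hconv hBinv1 hβ hu.1)
        (Real.rpow_le_rpow_of_nonpos hu1 hu.2 (by linarith [hα.2]))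
        (by positivity) (genInvR_nonneg _ _)
    calc genInvR B 1 * t ^ α = t * (genInvR B 1 * t ^ (α - 1)) := by
          rw [show α = 1 + (α - 1) by ring, Real.rpow_add ht0, Real.rpow_one]; ring_nf
    _ ≤ t * _ := mul_le_mul_of_nonneg_left key ht0.le

lemma Gab_nonneg (hα : α ∈ Set.Ioo (0:ℝ) 1) (hβ : 0 < β) (hB0 : B 0 = 0)
    (hconv : ConvexOn ℝ (Set.Ici 0) B) (hBinv1 : 0 < genInvR B 1)
    {t : ℝ} (ht : 0 ≤ t) : 0 ≤ Gab B α β t := by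
  rcases le_or_gt t 1 with h | h
  · rw [Gab_of_le_one h]; exact mul_nonneg ht hBinv1.le
  · have := Gab_lower hα hβ hB0 hconv hBinv1 h.le
    have h2 : (0:ℝ) < t := by linarith
    have : (0:ℝ) ≤ genInvR B 1 * t ^ α := by positivity
    linarith [Gab_lower hα hβ hB0 hconv hBinv1 h.le]

lemma Gab_zero : Gab B α β 0 = 0 := by rw [Gab_of_le_one zero_le_one, zero_mul]

/-- `G(t)/t` is nonincreasing: for `0 < a ≤ b`, `a · G(b) ≤ b · G(a)`. -/
lemma Gab_div_anti (hβ : 0 < β) {a b : ℝ} (ha : 0 < a) (hab : a ≤ b) :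
    a * Gab B α β b ≤ b * Gab B α β a := by
  rcases le_or_gt b 1 with hb | hb
  · rw [Gab_of_le_one hb, Gab_of_le_one (hab.trans hb)]; ring_nf; exact le_rfl
  rcases le_or_gt a 1 with ha1 | ha1
  · rw [Gab_of_le_one ha1]
    have h1 : Gab B α β b ≤ b * (genInvR B (1 ^ (1/β)) * 1 ^ (α - 1)) :=
      Gab_le_of_mem hβ hb (Set.mem_Icc.mpr ⟨le_rfl, hb.le⟩)
    simp only [Real.one_rpow, one_mul, mul_one] at h1
    calc a * Gab B α β b ≤ a * (b * genInvR B 1) :=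
          mul_le_mul_of_nonneg_left h1 ha.le
    _ = b * (a * genInvR B 1) := by ring
  · rw [Gab, if_neg (not_le.mpr hb), Gab, if_neg (not_le.mpr ha1)]
    have hinf : sInf ((fun s => genInvR B (s ^ (1 / β)) * s ^ (α - 1)) '' Set.Icc 1 b) ≤
        sInf ((fun s => genInvR B (s ^ (1 / β)) * s ^ (α - 1)) '' Set.Icc 1 a) := by
      refine csInf_le_csInf (Gab_image_bddBelow hβ)
        ⟨_, ⟨1, Set.mem_Icc.mpr ⟨le_rfl, ha1.le⟩, rfl⟩⟩
        (Set.image_mono (Set.Icc_subset_Icc_right hab))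
    calc a * (b * _) = (a * b) * _ := by ring
    _ ≤ (a * b) * _ := mul_le_mul_of_nonneg_left hinf (by positivity)
    _ = b * (a * _) := by ring


/-- Scaling: for `L ≥ 1`, `T ≥ 1`: `L * G(T) ≤ G(L^(1/α) * T)`. -/
lemma Gab_scale (hα : α ∈ Set.Ioo (0:ℝ) 1) (hβ : 0 < β) (hB0 : B 0 = 0)
    (hconv : ConvexOn ℝ (Set.Ici 0) B) (hBinv1 : 0 < genInvR B 1)
    {L T : ℝ} (hL : 1 ≤ L) (hT : 1 ≤ T) :
    L * Gab B α β T ≤ Gab B α β (L ^ (1/α) * T) := by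
  have hα0 := hα.1
  have hα1 := hα.2
  rcases eq_or_lt_of_le hL with h | hL1
  · rw [← h, Real.one_rpow, one_mul, one_mul]
  have hLα : 1 < L ^ (1/α) := Real.one_lt_rpow_iff_of_pos (by linarith) |>.mpr
    (Or.inl ⟨hL1, by positivity⟩)
  set T2 := L ^ (1/α) * T with hT2def
  have hT2 : 1 < T2 := by
    calc (1:ℝ) < L ^ (1/α) * 1 := by linarith
    _ ≤ T2 := by rw [hT2def]; nlinarith
  have hT20 : (0:ℝ) < T2 := by linarith
  have hT0 : (0:ℝ) < T := by linarith
  have hGT0 : 0 ≤ Gab B α β T := Gab_nonneg hα hβ hB0 hconv hBinv1 (by linarith)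
  -- L^(1/α) ≥ L
  have hLL : L ≤ L ^ (1/α) := by
    calc L = L ^ (1:ℝ) := (Real.rpow_one L).symm
    _ ≤ L ^ (1/α) := Real.rpow_le_rpow_of_exponent_le hL
        (by rw [le_div_iff₀ hα0]; nlinarith)
  -- key pointwise bound
  have hkey : ∀ u ∈ Set.Icc (1:ℝ) T2,
      L * Gab B α β T ≤ T2 * (genInvR B (u ^ (1 / β)) * u ^ (α - 1)) := by
    intro u hu
    have hu0 : (0:ℝ) < u := by have := hu.1; linarith
    rcases le_or_gt u T with huT | huT
    · -- u ≤ T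
      rcases eq_or_lt_of_le hT with hT1 | hT1
      · -- T = 1, so u = 1
        have hu1 : u = 1 := le_antisymm (huT.trans hT1.symm.le) hu.1
        rw [hu1, ← hT1, Gab_of_le_one le_rfl, one_mul]
        simp only [Real.one_rpow, mul_one, one_mul]
        have : L * genInvR B 1 ≤ L ^ (1/α) * genInvR B 1 :=
          mul_le_mul_of_nonneg_right hLL hBinv1.le
        calc L * genInvR B 1 ≤ L ^ (1/α) * genInvR B 1 := this
        _ = T2 * genInvR B 1 := by rw [hT2def, ← hT1, mul_one]
      · have h1 : Gab B α β T ≤ T * (genInvR B (u ^ (1 / β)) * u ^ (α - 1)) :=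
          Gab_le_of_mem hβ hT1 (Set.mem_Icc.mpr ⟨hu.1, huT⟩)
        have hf0 : 0 ≤ genInvR B (u ^ (1 / β)) * u ^ (α - 1) := fab_nonneg hβ hu.1
        -- T2 * f u = (T2/T) * (T * f u) ≥ (T2/T) * G T ≥ L * G T
        have h2 : L * Gab B α β T ≤ (T2 / T) * Gab B α β T := by
          refine mul_le_mul_of_nonneg_right ?_ hGT0
          rw [le_div_iff₀ hT0, hT2def]
          nlinarith
        have h3 : (T2 / T) * Gab B α β T ≤ (T2 / T) * (T * (genInvR B (u ^ (1 / β)) * u ^ (α - 1))) :=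
          mul_le_mul_of_nonneg_left h1 (by positivity)
        have h4 : (T2 / T) * (T * (genInvR B (u ^ (1 / β)) * u ^ (α - 1)))
            = T2 * (genInvR B (u ^ (1 / β)) * u ^ (α - 1)) := by
          field_simp
        linarith
    · -- T < u ≤ T2
      have hDnn : 0 ≤ genInvR B (T ^ (1/β)) := genInvR_nonneg _ _
      -- G T ≤ T^α * genInvR B (T^(1/β))
      have hGTle : Gab B α β T ≤ T ^ α * genInvR B (T ^ (1/β)) := by
        rcases eq_or_lt_of_le hT with hT1 | hT1
        · rw [← hT1, Gab_of_le_one le_rfl, Real.one_rpow, one_mul, one_mul]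
          exact genInvR_mono B hB0 zero_le_one (by rw [Real.one_rpow])
            (B_set_bddAbove hB0 hconv hBinv1 _)
        · have := Gab_le_of_mem (B := B) (α := α) hβ hT1 (Set.mem_Icc.mpr ⟨hT, le_rfl⟩)
          calc Gab B α β T ≤ T * (genInvR B (T ^ (1 / β)) * T ^ (α - 1)) := this
          _ = T ^ α * genInvR B (T ^ (1/β)) := by
              rw [show α = 1 + (α - 1) by ring, Real.rpow_add hT0, Real.rpow_one]; ring
      -- f u ≥ genInvR B (T^(1/β)) * T2^(α-1)
      have hf1 : genInvR B (T ^ (1/β)) * T2 ^ (α - 1) ≤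
          genInvR B (u ^ (1 / β)) * u ^ (α - 1) := by
        refine mul_le_mul ?_ (Real.rpow_le_rpow_of_nonpos hu0 hu.2 (by linarith)) ?_
          (genInvR_nonneg _ _)
        · refine genInvR_mono B hB0 (by positivity) ?_ (B_set_bddAbove hB0 hconv hBinv1 _)
          exact Real.rpow_le_rpow hT0.le huT.le (by positivity)
        · positivity
      have hT2α : T2 ^ α = L * T ^ α := by
        rw [hT2def, Real.mul_rpow (by positivity) hT0.le,
          ← Real.rpow_mul (by linarith : (0:ℝ) ≤ L),
          one_div, inv_mul_cancel₀ (ne_of_gt hα0), Real.rpow_one]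
      have h5 : T2 * (genInvR B (T ^ (1/β)) * T2 ^ (α - 1)) = T2 ^ α * genInvR B (T ^ (1/β)) := by
        rw [show α = 1 + (α - 1) by ring, Real.rpow_add hT20, Real.rpow_one]; ring
      have h6 : L * Gab B α β T ≤ L * (T ^ α * genInvR B (T ^ (1/β))) :=
        mul_le_mul_of_nonneg_left hGTle (by linarith)
      calc L * Gab B α β T ≤ L * (T ^ α * genInvR B (T ^ (1/β))) := h6
      _ = T2 ^ α * genInvR B (T ^ (1/β)) := by rw [hT2α]; ring
      _ = T2 * (genInvR B (T ^ (1/β)) * T2 ^ (α - 1)) := h5.symm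
      _ ≤ T2 * (genInvR B (u ^ (1 / β)) * u ^ (α - 1)) :=
          mul_le_mul_of_nonneg_left hf1 hT20.le
  -- conclude via le_csInf
  conv_rhs => rw [Gab, if_neg (not_le.mpr hT2)]
  have hle : L * Gab B α β T / T2 ≤
      sInf ((fun s => genInvR B (s ^ (1 / β)) * s ^ (α - 1)) '' Set.Icc 1 T2) := by
    refine le_csInf ⟨_, ⟨1, Set.mem_Icc.mpr ⟨le_rfl, hT2.le⟩, rfl⟩⟩ ?_
    rintro _ ⟨u, hu, rfl⟩
    rw [div_le_iff₀ hT20]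
    calc L * Gab B α β T ≤ T2 * (genInvR B (u ^ (1 / β)) * u ^ (α - 1)) := hkey u hu
    _ = (genInvR B (u ^ (1 / β)) * u ^ (α - 1)) * T2 := by ring
  calc L * Gab B α β T = T2 * (L * Gab B α β T / T2) := by field_simp
  _ ≤ T2 * _ := mul_le_mul_of_nonneg_left hle hT20.le


/-! ### Properties of `g = Gab⁻¹` -/

lemma g_set_bddAbove (hα : α ∈ Set.Ioo (0:ℝ) 1) (hβ : 0 < β) (hB0 : B 0 = 0)
    (hconv : ConvexOn ℝ (Set.Ici 0) B) (hBinv1 : 0 < genInvR B 1) (s : ℝ) :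
    BddAbove {u : ℝ | 0 ≤ u ∧ Gab B α β u ≤ s} := by
  set c := genInvR B 1 with hc
  refine ⟨max 1 ((max s 0 / c) ^ (1/α)), ?_⟩
  rintro u ⟨hu0, hus⟩
  rcases le_or_gt u 1 with h | h
  · exact le_max_of_le_left h
  · have hcu : c * u ^ α ≤ s := (Gab_lower hα hβ hB0 hconv hBinv1 h.le).trans hus
    have hu0' : (0:ℝ) < u := by linarith
    have huα : (0:ℝ) < u ^ α := Real.rpow_pos_of_pos hu0' α
    have h1 : u ^ α ≤ max s 0 / c := by
      rw [le_div_iff₀ hBinv1]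
      calc u ^ α * c = c * u ^ α := by ring
      _ ≤ s := hcu
      _ ≤ max s 0 := le_max_left _ _
    have h2 : u = (u ^ α) ^ (1/α) := by
      rw [← Real.rpow_mul hu0'.le, mul_one_div, div_self (ne_of_gt hα.1), Real.rpow_one]
    have h3 : (u ^ α) ^ (1/α) ≤ (max s 0 / c) ^ (1/α) :=
      Real.rpow_le_rpow huα.le h1 (by have := hα.1; positivity)
    exact le_max_of_le_right (h2 ▸ h3)

lemma g_mono (hα : α ∈ Set.Ioo (0:ℝ) 1) (hβ : 0 < β) (hB0 : B 0 = 0)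
    (hconv : ConvexOn ℝ (Set.Ici 0) B) (hBinv1 : 0 < genInvR B 1)
    {x y : ℝ} (hx : 0 ≤ x) (hxy : x ≤ y) :
    genInvR (Gab B α β) x ≤ genInvR (Gab B α β) y :=
  genInvR_mono _ Gab_zero hx hxy (g_set_bddAbove hα hβ hB0 hconv hBinv1 y)

lemma g_ge_div (hα : α ∈ Set.Ioo (0:ℝ) 1) (hβ : 0 < β) (hB0 : B 0 = 0)
    (hconv : ConvexOn ℝ (Set.Ici 0) B) (hBinv1 : 0 < genInvR B 1)
    {s : ℝ} (hs0 : 0 ≤ s) (hsc : s ≤ genInvR B 1) :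
    s / genInvR B 1 ≤ genInvR (Gab B α β) s := by
  refine le_csSup (g_set_bddAbove hα hβ hB0 hconv hBinv1 s) ⟨div_nonneg hs0 hBinv1.le, ?_⟩
  rw [Gab_of_le_one ((div_le_one hBinv1).mpr hsc)]
  rw [div_mul_cancel₀ _ (ne_of_gt hBinv1)]

lemma g_ge_one (hα : α ∈ Set.Ioo (0:ℝ) 1) (hβ : 0 < β) (hB0 : B 0 = 0)
    (hconv : ConvexOn ℝ (Set.Ici 0) B) (hBinv1 : 0 < genInvR B 1)
    {s : ℝ} (hsc : genInvR B 1 ≤ s) : 1 ≤ genInvR (Gab B α β) s := by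
  refine le_csSup (g_set_bddAbove hα hβ hB0 hconv hBinv1 s) ⟨zero_le_one, ?_⟩
  rw [Gab_of_le_one le_rfl, one_mul]; exact hsc

lemma g_pos (hα : α ∈ Set.Ioo (0:ℝ) 1) (hβ : 0 < β) (hB0 : B 0 = 0)
    (hconv : ConvexOn ℝ (Set.Ici 0) B) (hBinv1 : 0 < genInvR B 1)
    {s : ℝ} (hs : 0 < s) : 0 < genInvR (Gab B α β) s := by
  rcases le_or_gt s (genInvR B 1) with h | h
  · calc (0:ℝ) < s / genInvR B 1 := by positivity
    _ ≤ _ := g_ge_div hα hβ hB0 hconv hBinv1 hs.le h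
  · linarith [g_ge_one hα hβ hB0 hconv hBinv1 h.le]

/-- `g(s)/s` is nondecreasing: for `0 < a ≤ b`, `b · g(a) ≤ a · g(b)`. -/
lemma g_slope (hα : α ∈ Set.Ioo (0:ℝ) 1) (hβ : 0 < β) (hB0 : B 0 = 0)
    (hconv : ConvexOn ℝ (Set.Ici 0) B) (hBinv1 : 0 < genInvR B 1)
    {a b : ℝ} (ha : 0 < a) (hab : a ≤ b) :
    b * genInvR (Gab B α β) a ≤ a * genInvR (Gab B α β) b := by
  have hb : (0:ℝ) < b := lt_of_lt_of_le ha hab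
  have key : genInvR (Gab B α β) a ≤ (a / b) * genInvR (Gab B α β) b := by
    refine csSup_le ⟨0, le_rfl, by rw [Gab_zero]; exact ha.le⟩ ?_
    rintro u ⟨hu0, hua⟩
    have hmem : (b / a) * u ∈ {v : ℝ | 0 ≤ v ∧ Gab B α β v ≤ b} := by
      constructor
      · positivity
      · rcases eq_or_lt_of_le hu0 with h0 | h0
        · rw [← h0, mul_zero, Gab_zero]; exact hb.le
        · have h1 : u ≤ (b / a) * u := by
            rw [le_mul_iff_one_le_left h0]; rw [one_le_div ha]; exact hab
          have h2 := Gab_div_anti (B := B) (α := α) hβ h0 h1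
          -- u * Gab ((b/a)*u) ≤ (b/a)*u * Gab u
          have h3 : Gab B α β ((b / a) * u) ≤ (b / a) * Gab B α β u := by
            rw [← mul_le_mul_iff_right₀ h0]
            calc u * Gab B α β ((b / a) * u) ≤ (b / a) * u * Gab B α β u := h2
            _ = u * ((b / a) * Gab B α β u) := by ring
          calc Gab B α β ((b / a) * u) ≤ (b / a) * Gab B α β u := h3
          _ ≤ (b / a) * a := mul_le_mul_of_nonneg_left hua (by positivity)
          _ = b := by field_simp
    have h4 : (b / a) * u ≤ genInvR (Gab B α β) b :=
      le_csSup (g_set_bddAbove hα hβ hB0 hconv hBinv1 b) hmem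
    calc u = (a / b) * ((b / a) * u) := by field_simp
    _ ≤ (a / b) * genInvR (Gab B α β) b := mul_le_mul_of_nonneg_left h4 (by positivity)
  calc b * genInvR (Gab B α β) a ≤ b * ((a / b) * genInvR (Gab B α β) b) :=
        mul_le_mul_of_nonneg_left key hb.le
  _ = a * genInvR (Gab B α β) b := by field_simp

/-- For `L ≥ 1` and `s ≥ c`: `g(L·s) ≤ L^(1/α) · g(s)`. -/
lemma g_scale (hα : α ∈ Set.Ioo (0:ℝ) 1) (hβ : 0 < β) (hB0 : B 0 = 0)
    (hconv : ConvexOn ℝ (Set.Ici 0) B) (hBinv1 : 0 < genInvR B 1)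
    {L s : ℝ} (hL : 1 ≤ L) (hs : genInvR B 1 ≤ s) :
    genInvR (Gab B α β) (L * s) ≤ L ^ (1/α) * genInvR (Gab B α β) s := by
  have hs0 : (0:ℝ) < s := lt_of_lt_of_le hBinv1 hs
  have hLα : (1:ℝ) ≤ L ^ (1/α) := by
    calc (1:ℝ) = 1 ^ (1/α) := (Real.one_rpow _).symm
    _ ≤ L ^ (1/α) := Real.rpow_le_rpow zero_le_one hL (by have := hα.1; positivity)
  have hg1 : 1 ≤ genInvR (Gab B α β) s := g_ge_one hα hβ hB0 hconv hBinv1 hs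
  refine csSup_le ⟨0, le_rfl, by rw [Gab_zero]; positivity⟩ ?_
  rintro u ⟨hu0, huLs⟩
  rcases le_or_gt u (L ^ (1/α)) with h | h
  · calc u ≤ L ^ (1/α) := h
    _ = L ^ (1/α) * 1 := (mul_one _).symm
    _ ≤ L ^ (1/α) * genInvR (Gab B α β) s := mul_le_mul_of_nonneg_left hg1 (by positivity)
  · set v := u / L ^ (1/α) with hv
    have hLα0 : (0:ℝ) < L ^ (1/α) := by positivity
    have hv1 : 1 ≤ v := by
      rw [hv, le_div_iff₀ hLα0, one_mul]; exact h.le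
    have hscale := Gab_scale hα hβ hB0 hconv hBinv1 hL hv1
    have huv : L ^ (1/α) * v = u := by rw [hv]; field_simp
    rw [huv] at hscale
    -- L * Gab v ≤ Gab u ≤ L * s
    have h1 : Gab B α β v ≤ s := by
      have h2 : L * Gab B α β v ≤ L * s := hscale.trans huLs
      have hL0 : (0:ℝ) < L := by linarith
      exact le_of_mul_le_mul_left h2 hL0
    have h3 : v ≤ genInvR (Gab B α β) s :=
      le_csSup (g_set_bddAbove hα hβ hB0 hconv hBinv1 s) ⟨by positivity, h1⟩
    calc u = L ^ (1/α) * v := huv.symm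
    _ ≤ L ^ (1/α) * genInvR (Gab B α β) s := mul_le_mul_of_nonneg_left h3 hLα0.le


/-! ### The integrand `h(s) = g(s)/s` and `Bab` -/

lemma h_monoOn (hα : α ∈ Set.Ioo (0:ℝ) 1) (hβ : 0 < β) (hB0 : B 0 = 0)
    (hconv : ConvexOn ℝ (Set.Ici 0) B) (hBinv1 : 0 < genInvR B 1) :
    MonotoneOn (fun s => genInvR (Gab B α β) s / s) (Set.Ici (0:ℝ)) := by
  rintro a (ha : (0:ℝ) ≤ a) b (hb : (0:ℝ) ≤ b) hab
  rcases eq_or_lt_of_le ha with h0 | h0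
  · simp only [← h0, div_zero]
    exact div_nonneg (genInvR_nonneg _ _) hb
  · have hb0 : (0:ℝ) < b := lt_of_lt_of_le h0 hab
    rw [div_le_div_iff₀ h0 hb0]
    have := g_slope hα hβ hB0 hconv hBinv1 h0 hab
    linarith
  
lemma h_integrableOn (hα : α ∈ Set.Ioo (0:ℝ) 1) (hβ : 0 < β) (hB0 : B 0 = 0)
    (hconv : ConvexOn ℝ (Set.Ici 0) B) (hBinv1 : 0 < genInvR B 1) (t : ℝ) :
    IntegrableOn (fun s => genInvR (Gab B α β) s / s) (Set.Ioc 0 t) volume := by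
  rcases le_or_gt t 0 with h | h
  · rw [Set.Ioc_eq_empty (by exact not_lt.mpr h)]; exact integrableOn_empty
  · have hint : IntegrableOn (fun s => genInvR (Gab B α β) s / s) (Set.Icc 0 t) volume :=
      MonotoneOn.integrableOn_isCompact isCompact_Icc
        ((h_monoOn hα hβ hB0 hconv hBinv1).mono
          (fun x hx => hx.1))
    exact hint.mono_set Set.Ioc_subset_Icc_self

lemma Bab_le_g (hα : α ∈ Set.Ioo (0:ℝ) 1) (hβ : 0 < β) (hB0 : B 0 = 0)
    (hconv : ConvexOn ℝ (Set.Ici 0) B) (hBinv1 : 0 < genInvR B 1)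
    {t : ℝ} (ht : 0 < t) : Bab B α β t ≤ genInvR (Gab B α β) t := by
  have hint := h_integrableOn hα hβ hB0 hconv hBinv1 t
  have hvol : volume (Set.Ioc (0:ℝ) t) < ⊤ := by
    rw [Real.volume_Ioc]; exact ENNReal.ofReal_lt_top
  have hconst : IntegrableOn (fun _ : ℝ => genInvR (Gab B α β) t / t)
      (Set.Ioc 0 t) volume := (integrableOn_const_iff).mpr (Or.inr hvol)
  have hle := setIntegral_mono_on hint hconst measurableSet_Ioc
    (fun x hx => (h_monoOn hα hβ hB0 hconv hBinv1) (Set.mem_Ici.mpr hx.1.le)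
      (Set.mem_Ici.mpr ht.le) hx.2)
  rw [setIntegral_const, Real.volume_real_Ioc_of_le ht.le, sub_zero,
    smul_eq_mul] at hle
  calc Bab B α β t ≤ t * (genInvR (Gab B α β) t / t) := hle
  _ = genInvR (Gab B α β) t := by field_simp

lemma Bab_lower (hα : α ∈ Set.Ioo (0:ℝ) 1) (hβ : 0 < β) (hB0 : B 0 = 0)
    (hconv : ConvexOn ℝ (Set.Ici 0) B) (hBinv1 : 0 < genInvR B 1)
    {t : ℝ} (ht : 0 < t) : genInvR (Gab B α β) (t/2) / 2 ≤ Bab B α β t := by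
  have hint := h_integrableOn hα hβ hB0 hconv hBinv1 t
  have hsub : Set.Ioc (t/2) t ⊆ Set.Ioc 0 t := Set.Ioc_subset_Ioc_left (by linarith)
  have h1 : ∫ x in Set.Ioc (t/2) t, genInvR (Gab B α β) x / x ≤ Bab B α β t := by
    refine setIntegral_mono_set hint ?_ hsub.eventuallyLE
    refine (ae_restrict_iff' measurableSet_Ioc).mpr (Filter.Eventually.of_forall ?_)
    intro x hx
    exact div_nonneg (genInvR_nonneg _ _) hx.1.le
  have hvol : volume (Set.Ioc (t/2) t) ≠ ⊤ := by
    rw [Real.volume_Ioc]; exact ENNReal.ofReal_ne_top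
  have h2 : (genInvR (Gab B α β) (t/2) / t) * (volume (Set.Ioc (t/2) t)).toReal ≤
      ∫ x in Set.Ioc (t/2) t, genInvR (Gab B α β) x / x := by
    refine setIntegral_ge_of_const_le_real measurableSet_Ioc hvol ?_ (hint.mono_set hsub)
    intro x hx
    have hx0 : (0:ℝ) < x := lt_of_le_of_lt (by linarith) hx.1
    refine div_le_div₀ (genInvR_nonneg _ _)
      (g_mono hα hβ hB0 hconv hBinv1 (by linarith) hx.1.le) hx0 hx.2
  rw [Real.volume_Ioc, ENNReal.toReal_ofReal (by linarith)] at h2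
  have h3 : (genInvR (Gab B α β) (t/2) / t) * (t - t/2) = genInvR (Gab B α β) (t/2) / 2 := by
    field_simp; ring
  linarith [h2, h1, h3 ▸ h2]

lemma Bab_pos (hα : α ∈ Set.Ioo (0:ℝ) 1) (hβ : 0 < β) (hB0 : B 0 = 0)
    (hconv : ConvexOn ℝ (Set.Ici 0) B) (hBinv1 : 0 < genInvR B 1)
    {t : ℝ} (ht : 0 < t) : 0 < Bab B α β t := by
  have := Bab_lower hα hβ hB0 hconv hBinv1 ht
  have := g_pos hα hβ hB0 hconv hBinv1 (show (0:ℝ) < t/2 by linarith)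
  linarith

lemma Bab_scale (hα : α ∈ Set.Ioo (0:ℝ) 1) (hβ : 0 < β) (hB0 : B 0 = 0)
    (hconv : ConvexOn ℝ (Set.Ici 0) B) (hBinv1 : 0 < genInvR B 1)
    {s t : ℝ} (hs : 0 < s) (ht : 1 ≤ t) : t * Bab B α β s ≤ Bab B α β (s * t) := by
  set h : ℝ → ℝ := fun x => genInvR (Gab B α β) x / x with hh
  have ht0 : (0:ℝ) < t := by linarith
  have hst0 : (0:ℝ) ≤ s * t := by positivity
  have e1 : Bab B α β (s * t) = ∫ x in (0:ℝ)..(s * t), h x :=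
    (intervalIntegral.integral_of_le hst0).symm
  have e2 : Bab B α β s = ∫ x in (0:ℝ)..s, h x :=
    (intervalIntegral.integral_of_le hs.le).symm
  have e3 : (t • ∫ x in (0:ℝ)..s, h (x * t)) = ∫ x in 0*t..s*t, h x :=
    intervalIntegral.smul_integral_comp_mul_right h t
  rw [zero_mul] at e3
  have int1 : IntervalIntegrable h volume 0 s :=
    (intervalIntegrable_iff_integrableOn_Ioc_of_le hs.le).mpr
      (h_integrableOn hα hβ hB0 hconv hBinv1 s)
  have int2 : IntervalIntegrable (fun x => h (x * t)) volume 0 s := by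
    refine (intervalIntegrable_iff_integrableOn_Ioc_of_le hs.le).mpr ?_
    have hmono2 : MonotoneOn (fun x => h (x * t)) (Set.Icc 0 s) := by
      intro a ha b hb hab
      exact h_monoOn hα hβ hB0 hconv hBinv1
        (Set.mem_Ici.mpr (by nlinarith [ha.1])) (Set.mem_Ici.mpr (by nlinarith [hb.1]))
        (by nlinarith [hab])
    exact (MonotoneOn.integrableOn_isCompact isCompact_Icc hmono2).mono_set
      Set.Ioc_subset_Icc_self
  have hmono3 : ∫ x in (0:ℝ)..s, h x ≤ ∫ x in (0:ℝ)..s, h (x * t) := by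
    refine intervalIntegral.integral_mono_on hs.le int1 int2 ?_
    intro x hx
    exact h_monoOn hα hβ hB0 hconv hBinv1 (Set.mem_Ici.mpr hx.1)
      (Set.mem_Ici.mpr (by nlinarith [hx.1])) (le_mul_of_one_le_right hx.1 ht)
  calc t * Bab B α β s = t * ∫ x in (0:ℝ)..s, h x := by rw [e2]
  _ ≤ t * ∫ x in (0:ℝ)..s, h (x * t) := by
      exact mul_le_mul_of_nonneg_left hmono3 ht0.le
  _ = ∫ x in (0:ℝ)..(s*t), h x := by rw [← e3, smul_eq_mul]
  _ = Bab B α β (s * t) := e1.symm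


/-! ### Bounds on `hhatLoc` -/

lemma hhat_lower (hα : α ∈ Set.Ioo (0:ℝ) 1) (hβ : 0 < β) (hB0 : B 0 = 0)
    (hconv : ConvexOn ℝ (Set.Ici 0) B) (hBinv1 : 0 < genInvR B 1)
    {t : ℝ} (ht : 1 < t) : ENNReal.ofReal t ≤ hhatLoc (Bab B α β) t := by
  refine Filter.le_limsup_of_frequently_le ?_
  refine (Filter.eventually_atTop.mpr ⟨1, fun s hs => ?_⟩).frequently
  have hs0 : (0:ℝ) < s := lt_of_lt_of_le one_pos hs
  have hBs : 0 < Bab B α β s := Bab_pos hα hβ hB0 hconv hBinv1 hs0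
  refine ENNReal.ofReal_le_ofReal ?_
  rw [le_div_iff₀ hBs]
  exact Bab_scale hα hβ hB0 hconv hBinv1 hs0 ht.le

lemma hhat_upper (hα : α ∈ Set.Ioo (0:ℝ) 1) (hβ : 0 < β) (hB0 : B 0 = 0)
    (hconv : ConvexOn ℝ (Set.Ici 0) B) (hBinv1 : 0 < genInvR B 1)
    {t : ℝ} (ht : 1 < t) :
    hhatLoc (Bab B α β) t ≤ ENNReal.ofReal (2 * (2*t) ^ (1/α)) := by
  refine Filter.limsup_le_of_le (by isBoundedDefault) ?_
  refine Filter.eventually_atTop.mpr ⟨2 * genInvR B 1, fun s hs => ?_⟩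
  have hs0 : (0:ℝ) < s := lt_of_lt_of_le (by linarith) hs
  have hs2 : genInvR B 1 ≤ s / 2 := by linarith
  have hBs : 0 < Bab B α β s := Bab_pos hα hβ hB0 hconv hBinv1 hs0
  refine ENNReal.ofReal_le_ofReal ?_
  rw [div_le_iff₀ hBs]
  have h2t : (1:ℝ) ≤ 2 * t := by linarith
  have hst : s * t = (2 * t) * (s / 2) := by ring
  have h1 : Bab B α β (s * t) ≤ genInvR (Gab B α β) (s * t) :=
    Bab_le_g hα hβ hB0 hconv hBinv1 (by nlinarith)
  have h2 : genInvR (Gab B α β) (s * t) ≤ (2 * t) ^ (1/α) * genInvR (Gab B α β) (s / 2) := by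
    rw [hst]
    exact g_scale hα hβ hB0 hconv hBinv1 h2t hs2
  have h3 : genInvR (Gab B α β) (s / 2) / 2 ≤ Bab B α β s :=
    Bab_lower hα hβ hB0 hconv hBinv1 hs0
  have h4 : (0:ℝ) ≤ (2 * t) ^ (1/α) := by positivity
  calc Bab B α β (s * t) ≤ (2 * t) ^ (1/α) * genInvR (Gab B α β) (s / 2) := h1.trans h2
  _ = (2 * (2*t) ^ (1/α)) * (genInvR (Gab B α β) (s / 2) / 2) := by ring
  _ ≤ (2 * (2*t) ^ (1/α)) * Bab B α β s := mul_le_mul_of_nonneg_left h3 (by positivity)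

end BoydAux

open BoydAux

/-- the local upper Boyd index of `B_{α,β}` satisfies
`1 ≤ I_{B_{α,β}} ≤ 1/α`. -/
theorem boydUpperLoc_Bab_bounds (B : ℝ → ℝ) (α β : ℝ)
    (hα : α ∈ Set.Ioo (0 : ℝ) 1) (hβ : 0 < β) (hαβ : 1 ≤ α + 1 / β)
    (hB0 : B 0 = 0) (hconv : ConvexOn ℝ (Set.Ici 0) B)
    (hmono : MonotoneOn B (Set.Ici 0))
    (hBinv1 : 0 < genInvR B 1) :
    1 ≤ boydUpperLoc (Bab B α β) ∧
      boydUpperLoc (Bab B α β) ≤ ENNReal.ofReal (1 / α) := by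
  have hα0 := hα.1
  have hα1 := hα.2
  constructor
  · -- lower bound
    rw [boydUpperLoc]
    refine le_iInf₂ fun t ht => ?_
    rw [Set.mem_Ioi] at ht
    have hub := hhat_lower hα hβ hB0 hconv hBinv1 ht
    have hlog : ENNReal.ofReal (Real.log t) ≤ nnlog (hhatLoc (Bab B α β) t) := by
      rw [nnlog]
      split_ifs with h
      · exact le_top
      · refine ENNReal.ofReal_le_ofReal ?_
        have htr : t ≤ (hhatLoc (Bab B α β) t).toReal :=
          (ENNReal.ofReal_le_iff_le_toReal h).mp hub
        exact Real.log_le_log (by linarith) htr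
    have hlt : ENNReal.ofReal (Real.log t) ≠ 0 :=
      ne_of_gt (ENNReal.ofReal_pos.mpr (Real.log_pos ht))
    rw [ENNReal.le_div_iff_mul_le (Or.inl hlt) (Or.inl ENNReal.ofReal_ne_top), one_mul]
    exact hlog
  · -- upper bound
    refine ENNReal.le_of_forall_pos_le_add fun ε hε _ => ?_
    have hε' : (0:ℝ) < (ε:ℝ) := hε
    obtain ⟨A, hA⟩ : ∃ A : ℝ, A = Real.log 2 + (1/α) * Real.log 2 := ⟨_, rfl⟩
    have hlog2 : (0:ℝ) < Real.log 2 := Real.log_pos one_lt_two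
    have hA0 : 0 < A := by
      rw [hA]
      have : (0:ℝ) < (1/α) * Real.log 2 := by positivity
      linarith
    set t : ℝ := Real.exp (A / ε) with htdef
    have hAε : (0:ℝ) < A / ε := by positivity
    have ht : 1 < t := by
      rw [htdef]
      calc (1:ℝ) = Real.exp 0 := Real.exp_zero.symm
      _ < Real.exp (A / ε) := Real.exp_lt_exp.mpr hAε
    have hlogt : Real.log t = A / (ε:ℝ) := Real.log_exp _
    have hlogt0 : 0 < Real.log t := by rw [hlogt]; exact hAε
    have key : boydUpperLoc (Bab B α β) ≤
        nnlog (hhatLoc (Bab B α β) t) / ENNReal.ofReal (Real.log t) := by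
      rw [boydUpperLoc]
      exact iInf₂_le t (Set.mem_Ioi.mpr ht)
    set K : ℝ := 2 * (2*t) ^ (1/α) with hK
    have hK1 : (1:ℝ) ≤ K := by
      have h1 : (1:ℝ) ≤ (2*t) ^ (1/α) := by
        calc (1:ℝ) = 1 ^ (1/α) := (Real.one_rpow _).symm
        _ ≤ (2*t) ^ (1/α) := Real.rpow_le_rpow zero_le_one (by linarith) (by positivity)
      linarith
    have hub := hhat_upper hα hβ hB0 hconv hBinv1 ht
    have hne : hhatLoc (Bab B α β) t ≠ ⊤ :=
      ne_top_of_le_ne_top ENNReal.ofReal_ne_top hub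
    have hnnlog : nnlog (hhatLoc (Bab B α β) t) ≤ ENNReal.ofReal (Real.log K) := by
      rw [nnlog, if_neg hne]
      refine ENNReal.ofReal_le_ofReal ?_
      have hx0 : (hhatLoc (Bab B α β) t).toReal ≤ K :=
        ENNReal.toReal_le_of_le_ofReal (by linarith) hub
      rcases le_or_gt (hhatLoc (Bab B α β) t).toReal 1 with h | h
      · calc Real.log (hhatLoc (Bab B α β) t).toReal ≤ 0 :=
            Real.log_nonpos ENNReal.toReal_nonneg h
        _ ≤ Real.log K := Real.log_nonneg hK1
      · exact Real.log_le_log (by linarith) hx0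
    have hlogK : Real.log K = Real.log 2 + (1/α) * (Real.log 2 + Real.log t) := by
      rw [hK, Real.log_mul two_ne_zero (by positivity),
        Real.log_rpow (by linarith : (0:ℝ) < 2*t),
        Real.log_mul two_ne_zero (by linarith : t ≠ 0)]
    have hdivle : Real.log K / Real.log t ≤ 1/α + (ε:ℝ) := by
      rw [hlogK, hlogt]
      have hεne : (ε:ℝ) ≠ 0 := ne_of_gt hε'
      have hAne : A ≠ 0 := ne_of_gt hA0
      have hαne : α ≠ 0 := ne_of_gt hα0
      have heq : Real.log 2 + 1/α * (Real.log 2 + A/(ε:ℝ)) = A + 1/α * (A/(ε:ℝ)) := by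
        rw [hA]; ring
      rw [heq, div_le_iff₀ hAε]
      refine le_of_eq ?_
      field_simp
      ring
    calc boydUpperLoc (Bab B α β)
        ≤ nnlog (hhatLoc (Bab B α β) t) / ENNReal.ofReal (Real.log t) := key
    _ ≤ ENNReal.ofReal (Real.log K) / ENNReal.ofReal (Real.log t) := by
        exact ENNReal.div_le_div_right hnnlog _
    _ = ENNReal.ofReal (Real.log K / Real.log t) :=
        (ENNReal.ofReal_div_of_pos hlogt0).symm
    _ ≤ ENNReal.ofReal (1/α + (ε:ℝ)) := ENNReal.ofReal_le_ofReal hdivle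
    _ = ENNReal.ofReal (1/α) + ENNReal.ofReal (ε:ℝ) :=
        ENNReal.ofReal_add (by positivity) hε'.le
    _ = ENNReal.ofReal (1/α) + (ε : ℝ≥0∞) := by rw [ENNReal.ofReal_coe_nnreal]
end

section
/- Let B be a Young function, 0 < α < 1, β > 0 with α + 1/β ≥ 1, and suppose the local lower Boyd index satisfies i_B > 1/(β(1−α)). Then inf_{1≤s≤t} B^{-1}(s^{1/β})·s^{α−1} ≃ B^{-1}(t^{1/β})·t^{α−1} near infinity (up to multiplicative constants independent of t). -/
open scoped ENNReal

private lemma superlin {B : ℝ → ℝ} (hB0 : B 0 = 0) (hconv : ConvexOn ℝ (Set.Ici 0) B)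
    {a r : ℝ} (ha : 0 < a) (har : a ≤ r) : B a ≤ (a / r) * B r := by
  have hr : 0 < r := lt_of_lt_of_le ha har
  have h := hconv.2 (Set.mem_Ici.mpr (le_refl (0:ℝ))) (Set.mem_Ici.mpr hr.le)
      (show (0:ℝ) ≤ 1 - a / r by rw [sub_nonneg]; exact (div_le_one hr).mpr har)
      (show (0:ℝ) ≤ a / r by positivity) (by ring)
  simp only [smul_eq_mul] at h
  have harg : (1 - a/r) * (0:ℝ) + (a/r) * r = a := by field_simp; ring
  rw [harg, hB0, mul_zero, zero_add] at h
  exact h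

/-- if `i_B > 1/(β(1−α))`, then
`inf_{1≤s≤t} B⁻¹(s^{1/β}) s^{α−1} ≃ B⁻¹(t^{1/β}) t^{α−1}` near infinity. -/
theorem inf_equiv_of_boydLowerLoc (B : ℝ → ℝ) (α β : ℝ)
    (hα : α ∈ Set.Ioo (0 : ℝ) 1) (hβ : 0 < β) (hαβ : 1 ≤ α + 1 / β)
    (hB0 : B 0 = 0) (hconv : ConvexOn ℝ (Set.Ici 0) B)
    (hmono : MonotoneOn B (Set.Ici 0))
    (hnontriv : ∃ t > (0 : ℝ), 0 < B t)
    (hindex : ENNReal.ofReal (1 / (β * (1 - α))) < boydLowerLoc B) :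
    ∃ c₁ > (0 : ℝ), ∃ c₂ > (0 : ℝ), ∃ t₀ > (0 : ℝ), ∀ t ≥ t₀,
      c₁ * (genInvR B (t ^ (1 / β)) * t ^ (α - 1)) ≤
        sInf ((fun s => genInvR B (s ^ (1 / β)) * s ^ (α - 1)) '' Set.Icc 1 t) ∧
      sInf ((fun s => genInvR B (s ^ (1 / β)) * s ^ (α - 1)) '' Set.Icc 1 t) ≤
        c₂ * (genInvR B (t ^ (1 / β)) * t ^ (α - 1)) := by
  obtain ⟨hα0, hα1⟩ := hα
  obtain ⟨a, ha0, hBa⟩ := hnontriv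
  set d : ℝ := β * (1 - α) with hd_def
  set p : ℝ := 1 / d with hp_def
  have hd : 0 < d := mul_pos hβ (by linarith)
  have hp0 : 0 < p := by positivity
  have hinvp : 1 / p = d := by rw [hp_def, one_div_one_div]
  have hBnn : ∀ s : ℝ, 0 ≤ s → 0 ≤ B s := by
    intro s hs
    have := hmono (Set.mem_Ici.mpr (le_refl (0:ℝ))) (Set.mem_Ici.mpr hs) hs
    rwa [hB0] at this
  -- Step 1: extract t₁ ∈ (0,1) with ĥ(t₁) < t₁^p
  have hex : ∃ t₁ ∈ Set.Ioo (0:ℝ) 1, hhatLoc B t₁ < ENNReal.ofReal (t₁ ^ p) := by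
    rw [boydLowerLoc] at hindex
    simp only [lt_iSup_iff] at hindex
    obtain ⟨t₁, ht₁mem, hlt⟩ := hindex
    obtain ⟨ht₁0, ht₁1⟩ := ht₁mem
    refine ⟨t₁, ⟨ht₁0, ht₁1⟩, ?_⟩
    have hrp : (0:ℝ) < t₁ ^ p := Real.rpow_pos_of_pos ht₁0 p
    by_cases hz : hhatLoc B t₁ = 0
    · rw [hz]; exact ENNReal.ofReal_pos.mpr hrp
    · rw [if_neg hz] at hlt
      have hx0 : 0 < Real.log (hhatLoc B t₁).toReal / Real.log t₁ :=
        ENNReal.ofReal_pos.mp (lt_of_le_of_lt (by positivity) hlt)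
      have hpx : p < Real.log (hhatLoc B t₁).toReal / Real.log t₁ :=
        (ENNReal.ofReal_lt_ofReal_iff hx0).mp hlt
      have hlogt : Real.log t₁ < 0 := Real.log_neg ht₁0 ht₁1
      have hne : hhatLoc B t₁ ≠ ⊤ := by
        intro htop
        rw [htop] at hpx
        simp only [ENNReal.toReal_top, Real.log_zero, zero_div] at hpx
        linarith
      have htr : 0 < (hhatLoc B t₁).toReal := ENNReal.toReal_pos hz hne
      have hkey : Real.log (hhatLoc B t₁).toReal < p * Real.log t₁ := by
        have heq : Real.log (hhatLoc B t₁).toReal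
            = (Real.log (hhatLoc B t₁).toReal / Real.log t₁) * Real.log t₁ :=
          (div_mul_cancel₀ _ (ne_of_lt hlogt)).symm
        rw [heq]
        nlinarith
      have hlt2 : (hhatLoc B t₁).toReal < t₁ ^ p := by
        rw [Real.rpow_def_of_pos ht₁0]
        calc (hhatLoc B t₁).toReal = Real.exp (Real.log (hhatLoc B t₁).toReal) :=
              (Real.exp_log htr).symm
          _ < Real.exp (Real.log t₁ * p) := Real.exp_lt_exp.mpr (by linarith [hkey])
      calc hhatLoc B t₁ = ENNReal.ofReal (hhatLoc B t₁).toReal := (ENNReal.ofReal_toReal hne).symm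
        _ < ENNReal.ofReal (t₁ ^ p) := (ENNReal.ofReal_lt_ofReal_iff hrp).mpr hlt2
  obtain ⟨t₁, ⟨ht₁0, ht₁1⟩, hh⟩ := hex
  have hrp_pos : (0:ℝ) < t₁ ^ p := Real.rpow_pos_of_pos ht₁0 p
  -- Step 2: eventual one-step estimate
  have hev : ∀ᶠ s in Filter.atTop, B (s * t₁) / B s < t₁ ^ p := by
    have := Filter.eventually_lt_of_limsup_lt hh
    filter_upwards [this] with s hs
    exact (ENNReal.ofReal_lt_ofReal_iff hrp_pos).mp hs
  obtain ⟨s₀', hs₀'⟩ := Filter.eventually_atTop.mp hev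
  set s₀ : ℝ := max s₀' (max a 1) with hs₀_def
  have hs₀pos : 0 < s₀ := lt_of_lt_of_le one_pos (le_trans (le_max_right a 1) (le_max_right _ _))
  have hs₀a : a ≤ s₀ := le_trans (le_max_left a 1) (le_max_right _ _)
  have hBs₀ : 0 < B s₀ :=
    lt_of_lt_of_le hBa (hmono (Set.mem_Ici.mpr ha0.le) (Set.mem_Ici.mpr hs₀pos.le) hs₀a)
  have hstep : ∀ s, s₀ ≤ s → B (s * t₁) ≤ t₁ ^ p * B s := by
    intro s hs
    have hspos : 0 < s := lt_of_lt_of_le hs₀pos hs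
    have hBs : 0 < B s :=
      lt_of_lt_of_le hBa (hmono (Set.mem_Ici.mpr ha0.le) (Set.mem_Ici.mpr hspos.le)
        (le_trans hs₀a hs))
    have := hs₀' s (le_trans (le_max_left _ _) hs)
    have h2 := (div_lt_iff₀ hBs).mp this
    linarith [h2]
  -- iteration
  have hiter : ∀ n : ℕ, ∀ r : ℝ, s₀ ≤ r * t₁ ^ n → B (r * t₁ ^ n) ≤ (t₁ ^ p) ^ n * B r := by
    intro n
    induction n with
    | zero => intro r h; simp
    | succ n ih =>
      intro r h
      have htpow : (0:ℝ) < t₁ ^ (n+1) := pow_pos ht₁0 _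
      have hrpos : 0 < r := by nlinarith
      have htle1 : t₁ ^ (n+1) ≤ 1 := pow_le_one₀ ht₁0.le ht₁1.le
      have hrs : s₀ ≤ r := le_trans h (by nlinarith)
      have harg : r * t₁ ^ (n+1) = (r * t₁) * t₁ ^ n := by ring
      calc B (r * t₁ ^ (n+1)) = B ((r * t₁) * t₁ ^ n) := by rw [harg]
        _ ≤ (t₁ ^ p) ^ n * B (r * t₁) := ih (r * t₁) (by rw [← harg]; exact h)
        _ ≤ (t₁ ^ p) ^ n * (t₁ ^ p * B r) :=
            mul_le_mul_of_nonneg_left (hstep r hrs) (pow_nonneg hrp_pos.le n)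
        _ = (t₁ ^ p) ^ (n+1) * B r := by ring
  -- basic genInvR facts
  have hSne : ∀ u : ℝ, 0 ≤ u → (0:ℝ) ∈ {s | 0 ≤ s ∧ B s ≤ u} := by
    intro u hu; exact ⟨le_refl 0, by rw [hB0]; exact hu⟩
  have hSbdd : ∀ u : ℝ, BddAbove {s | 0 ≤ s ∧ B s ≤ u} := by
    intro u
    refine ⟨max a (a * u / B a), ?_⟩
    rintro r ⟨hr0, hru⟩
    rcases le_or_gt r a with h | h
    · exact le_trans h (le_max_left _ _)
    · have hsl := superlin hB0 hconv ha0 h.le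
      have : B a ≤ (a / r) * u := le_trans hsl (by
        apply mul_le_mul_of_nonneg_left hru
        positivity)
      have hrpos : 0 < r := lt_trans ha0 h
      have : r * B a ≤ a * u := by
        have := mul_le_mul_of_nonneg_left this hrpos.le
        calc r * B a ≤ r * ((a/r) * u) := this
          _ = a * u := by field_simp
      refine le_trans ?_ (le_max_right _ _)
      rw [le_div_iff₀ hBa]
      linarith
  have hmem_le : ∀ u r : ℝ, 0 ≤ r → B r ≤ u → r ≤ genInvR B u := by
    intro u r h0 h1
    exact le_csSup (hSbdd u) ⟨h0, h1⟩
  have hinv_nonneg : ∀ u : ℝ, 0 ≤ u → 0 ≤ genInvR B u := by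
    intro u hu
    exact hmem_le u 0 (le_refl 0) (by rw [hB0]; exact hu)
  -- L9
  have hL9 : ∀ (n : ℕ) (u v : ℝ), 0 ≤ u → B s₀ ≤ v → (t₁ ^ p) ^ n * u ≤ v →
      genInvR B u ≤ (t₁ ^ n)⁻¹ * genInvR B v := by
    intro n u v hu hv huv
    have hvs₀ : s₀ ≤ genInvR B v := hmem_le v s₀ hs₀pos.le hv
    have htn : (0:ℝ) < t₁ ^ n := pow_pos ht₁0 n
    apply csSup_le ⟨0, hSne u hu⟩
    rintro r ⟨hr0, hru⟩
    rcases le_or_gt s₀ (r * t₁ ^ n) with hc | hc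
    · have h1 : B (r * t₁ ^ n) ≤ v := by
        calc B (r * t₁ ^ n) ≤ (t₁ ^ p) ^ n * B r := hiter n r hc
          _ ≤ (t₁ ^ p) ^ n * u := mul_le_mul_of_nonneg_left hru (pow_nonneg hrp_pos.le n)
          _ ≤ v := huv
      have h2 : r * t₁ ^ n ≤ genInvR B v := hmem_le v _ (by positivity) h1
      rw [inv_mul_eq_div, le_div_iff₀ htn]
      linarith
    · rw [inv_mul_eq_div, le_div_iff₀ htn]
      nlinarith
  -- L11
  have hlogt₁ : Real.log t₁ < 0 := Real.log_neg ht₁0 ht₁1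
  have hlogt₁inv : 0 < Real.log t₁⁻¹ := by rw [Real.log_inv]; linarith
  have hL11 : ∀ u v : ℝ, B s₀ ≤ v → v ≤ u →
      genInvR B u ≤ t₁⁻¹ * (u / v) ^ d * genInvR B v := by
    intro u v hv hvu
    have hv0 : 0 < v := lt_of_lt_of_le hBs₀ hv
    have hu0 : 0 < u := lt_of_lt_of_le hv0 hvu
    set L : ℝ := p * Real.log t₁⁻¹ with hL_def
    have hL0 : 0 < L := mul_pos hp0 hlogt₁inv
    set n : ℕ := ⌈Real.log (u/v) / L⌉₊ with hn_def
    have hlog_uv : 0 ≤ Real.log (u/v) := Real.log_nonneg ((one_le_div hv0).mpr hvu)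
    have hn_ge : Real.log (u/v) / L ≤ (n:ℝ) := Nat.le_ceil _
    have hn_le : (n:ℝ) ≤ Real.log (u/v) / L + 1 :=
      le_of_lt (Nat.ceil_lt_add_one (by positivity))
    have hc_eq : t₁ ^ p = Real.exp (-L) := by
      rw [Real.rpow_def_of_pos ht₁0]
      congr 1
      rw [hL_def, Real.log_inv]; ring
    have h1 : (t₁ ^ p) ^ n * u ≤ v := by
      have he : (t₁ ^ p) ^ n = Real.exp (-((n:ℝ) * L)) := by
        rw [hc_eq, ← Real.exp_nat_mul]; ring_nf
      have hexp : Real.exp (-((n:ℝ) * L)) ≤ v / u := by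
        have h3 : Real.log (u/v) ≤ (n:ℝ) * L := by
          rw [div_le_iff₀ hL0] at hn_ge; linarith
        have : -((n:ℝ) * L) ≤ Real.log (v/u) := by
          rw [Real.log_div hv0.ne' hu0.ne'] at *
          rw [Real.log_div hu0.ne' hv0.ne'] at h3
          linarith
        calc Real.exp (-((n:ℝ)*L)) ≤ Real.exp (Real.log (v/u)) := Real.exp_le_exp.mpr this
          _ = v / u := Real.exp_log (by positivity)
      rw [he]
      calc Real.exp (-((n:ℝ)*L)) * u ≤ (v/u) * u := mul_le_mul_of_nonneg_right hexp hu0.le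
        _ = v := by field_simp
    have h2 := hL9 n u v hu0.le hv h1
    have hfrac : Real.log t₁⁻¹ / L = d := by
      rw [hL_def, ← hinvp]
      rw [div_mul_eq_div_div_swap, div_self hlogt₁inv.ne', one_div, inv_eq_one_div]
    have h3 : (t₁ ^ n)⁻¹ ≤ t₁⁻¹ * (u/v) ^ d := by
      have hlhs : (t₁ ^ n)⁻¹ = Real.exp ((n:ℝ) * Real.log t₁⁻¹) := by
        rw [← Real.exp_log (show (0:ℝ) < (t₁ ^ n)⁻¹ by positivity)]
        congr 1
        rw [Real.log_inv, Real.log_pow, Real.log_inv]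
        push_cast; ring
      have hrhs : t₁⁻¹ * (u/v) ^ d = Real.exp (Real.log t₁⁻¹ + Real.log (u/v) * d) := by
        rw [Real.exp_add, Real.exp_log (by positivity : (0:ℝ) < t₁⁻¹),
          Real.rpow_def_of_pos (by positivity : (0:ℝ) < u/v)]
      rw [hlhs, hrhs]
      apply Real.exp_le_exp.mpr
      have hmul := mul_le_mul_of_nonneg_right hn_le hlogt₁inv.le
      have heq : (Real.log (u/v)/L + 1) * Real.log t₁⁻¹
          = Real.log (u/v) * d + Real.log t₁⁻¹ := by
        rw [add_mul, one_mul, div_mul_eq_mul_div, mul_div_assoc, hfrac]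
      linarith [heq ▸ hmul]
    calc genInvR B u ≤ (t₁ ^ n)⁻¹ * genInvR B v := h2
      _ ≤ t₁⁻¹ * (u/v) ^ d * genInvR B v :=
          mul_le_mul_of_nonneg_right h3 (hinv_nonneg v (by positivity))
  -- assembly
  set w₀ : ℝ := max (B s₀) 1 with hw₀_def
  have hw₀1 : (1:ℝ) ≤ w₀ := le_max_right _ _
  have hw₀B : B s₀ ≤ w₀ := le_max_left _ _
  have hw₀0 : (0:ℝ) < w₀ := lt_of_lt_of_le one_pos hw₀1
  set K : ℝ := w₀ ^ β with hK_def
  have hK1 : (1:ℝ) ≤ K := by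
    calc (1:ℝ) = 1 ^ β := (Real.one_rpow β).symm
      _ ≤ w₀ ^ β := Real.rpow_le_rpow (by norm_num) hw₀1 hβ.le
  have hK0 : (0:ℝ) < K := lt_of_lt_of_le one_pos hK1
  have hKroot : K ^ (1/β) = w₀ := by
    rw [hK_def, ← Real.rpow_mul hw₀0.le]
    rw [show β * (1/β) = 1 by field_simp, Real.rpow_one]
  have hroot_ge : ∀ s : ℝ, K ≤ s → w₀ ≤ s ^ (1/β) := by
    intro s hs
    calc w₀ = K ^ (1/β) := hKroot.symm
      _ ≤ s ^ (1/β) := Real.rpow_le_rpow hK0.le hs (by positivity)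
  set m₀ : ℝ := min a (a / B a) with hm₀_def
  have hm₀pos : 0 < m₀ := lt_min ha0 (by positivity)
  have hinv_low : ∀ u : ℝ, 1 ≤ u → m₀ ≤ genInvR B u := by
    intro u hu
    apply hmem_le u m₀ hm₀pos.le
    have h1 : B m₀ ≤ (m₀ / a) * B a := superlin hB0 hconv hm₀pos (min_le_left _ _)
    have h2 : (m₀ / a) * B a ≤ 1 := by
      have hm2 : m₀ ≤ a / B a := min_le_right _ _
      rw [div_mul_eq_mul_div, div_le_one ha0]
      calc m₀ * B a ≤ (a / B a) * B a := mul_le_mul_of_nonneg_right hm2 hBa.le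
        _ = a := by field_simp
    linarith
  set C₀ : ℝ := t₁⁻¹ * (genInvR B w₀ / w₀ ^ d) with hC₀_def
  have hGw₀ : 0 < genInvR B w₀ := lt_of_lt_of_le hs₀pos (hmem_le w₀ s₀ hs₀pos.le hw₀B)
  have hw₀d : (0:ℝ) < w₀ ^ d := Real.rpow_pos_of_pos hw₀0 d
  have hC₀pos : 0 < C₀ := by rw [hC₀_def]; positivity
  have hpow_id : ∀ t : ℝ, 0 < t → (t ^ (1/β)) ^ d = t ^ (1-α) := by
    intro t ht
    rw [← Real.rpow_mul ht.le]
    congr 1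
    rw [hd_def]
    field_simp
  have hTT : ∀ t : ℝ, 0 < t → t ^ (1-α) * t ^ (α-1) = 1 := by
    intro t ht
    rw [← Real.rpow_add ht, show (1-α)+(α-1) = 0 by ring, Real.rpow_zero]
  have hft_ub : ∀ t : ℝ, K ≤ t → genInvR B (t ^ (1/β)) * t ^ (α-1) ≤ C₀ := by
    intro t htK
    have ht0 : 0 < t := lt_of_lt_of_le hK0 htK
    have hvw : w₀ ≤ t ^ (1/β) := hroot_ge t htK
    have h := hL11 (t ^ (1/β)) w₀ hw₀B hvw
    have hdivpow : (t ^ (1/β) / w₀) ^ d = t ^ (1-α) / w₀ ^ d := by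
      rw [Real.div_rpow (by positivity) hw₀0.le, hpow_id t ht0]
    rw [hdivpow] at h
    have hmul := mul_le_mul_of_nonneg_right h (Real.rpow_nonneg ht0.le (α-1))
    calc genInvR B (t ^ (1/β)) * t ^ (α-1)
        ≤ t₁⁻¹ * (t ^ (1-α) / w₀ ^ d) * genInvR B w₀ * t ^ (α-1) := hmul
      _ = C₀ * (t ^ (1-α) * t ^ (α-1)) := by rw [hC₀_def]; ring
      _ = C₀ := by rw [hTT t ht0, mul_one]
  have hexp1 : 1/β * d = 1-α := by
    rw [hd_def]; field_simp
  have hcomp : ∀ t s : ℝ, K ≤ s → s ≤ t →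
      t₁ * (genInvR B (t ^ (1/β)) * t ^ (α-1)) ≤ genInvR B (s ^ (1/β)) * s ^ (α-1) := by
    intro t s hKs hst
    have hs0 : 0 < s := lt_of_lt_of_le hK0 hKs
    have ht0 : 0 < t := lt_of_lt_of_le hs0 hst
    have hvB : B s₀ ≤ s ^ (1/β) := le_trans hw₀B (hroot_ge s hKs)
    have hvu : s ^ (1/β) ≤ t ^ (1/β) := Real.rpow_le_rpow hs0.le hst (by positivity)
    have h := hL11 (t ^ (1/β)) (s ^ (1/β)) hvB hvu
    have hdivpow : (t ^ (1/β) / s ^ (1/β)) ^ d = t ^ (1-α) / s ^ (1-α) := by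
      rw [← Real.div_rpow ht0.le hs0.le,
        ← Real.rpow_mul (by positivity : (0:ℝ) ≤ t/s), hexp1,
        Real.div_rpow ht0.le hs0.le]
    rw [hdivpow] at h
    have hSinv : s ^ (α-1) = (s ^ (1-α))⁻¹ := by
      rw [← Real.rpow_neg hs0.le, neg_sub]
    have hmul := mul_le_mul_of_nonneg_right h (Real.rpow_nonneg ht0.le (α-1))
    have hmul2 := mul_le_mul_of_nonneg_left hmul ht₁0.le
    calc t₁ * (genInvR B (t^(1/β)) * t^(α-1))
        ≤ t₁ * (t₁⁻¹ * (t^(1-α)/s^(1-α)) * genInvR B (s^(1/β)) * t^(α-1)) := hmul2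
      _ = (t₁ * t₁⁻¹) * (t^(1-α) * t^(α-1)) * (genInvR B (s^(1/β)) * (s^(1-α))⁻¹) := by
          ring
      _ = genInvR B (s^(1/β)) * s^(α-1) := by
          rw [mul_inv_cancel₀ ht₁0.ne', hTT t ht0, one_mul, one_mul, hSinv]
  have hKa1 : (0:ℝ) < K ^ (α-1) := Real.rpow_pos_of_pos hK0 _
  refine ⟨min t₁ (m₀ * K ^ (α-1) / C₀), lt_min ht₁0 (div_pos (mul_pos hm₀pos hKa1) hC₀pos),
    1, one_pos, K, hK0, ?_⟩
  intro t htK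
  have ht1 : (1:ℝ) ≤ t := le_trans hK1 htK
  have ht0 : (0:ℝ) < t := lt_of_lt_of_le one_pos ht1
  have hfnn : ∀ s : ℝ, 1 ≤ s → 0 ≤ genInvR B (s ^ (1/β)) * s ^ (α-1) := by
    intro s hs
    have hs0 : (0:ℝ) < s := lt_of_lt_of_le one_pos hs
    exact mul_nonneg (hinv_nonneg _ (Real.rpow_nonneg hs0.le _)) (Real.rpow_nonneg hs0.le _)
  have himg_ne : ((fun s => genInvR B (s ^ (1/β)) * s ^ (α-1)) '' Set.Icc 1 t).Nonempty :=
    ⟨_, ⟨t, ⟨ht1, le_refl t⟩, rfl⟩⟩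
  have hbddb : BddBelow ((fun s => genInvR B (s ^ (1/β)) * s ^ (α-1)) '' Set.Icc 1 t) := by
    refine ⟨0, ?_⟩
    rintro y ⟨s, ⟨hs1, hst⟩, rfl⟩
    exact hfnn s hs1
  constructor
  · apply le_csInf himg_ne
    rintro y ⟨s, ⟨hs1, hst⟩, rfl⟩
    show min t₁ (m₀ * K ^ (α-1) / C₀) * (genInvR B (t ^ (1/β)) * t ^ (α-1)) ≤
      genInvR B (s ^ (1/β)) * s ^ (α-1)
    rcases le_or_gt K s with hKs | hsK
    · calc min t₁ (m₀ * K ^ (α-1) / C₀) * (genInvR B (t ^ (1/β)) * t ^ (α-1))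
          ≤ t₁ * (genInvR B (t ^ (1/β)) * t ^ (α-1)) :=
            mul_le_mul_of_nonneg_right (min_le_left _ _) (hfnn t ht1)
        _ ≤ genInvR B (s ^ (1/β)) * s ^ (α-1) := hcomp t s hKs hst
    · have hs0 : (0:ℝ) < s := lt_of_lt_of_le one_pos hs1
      have hfs : m₀ * K ^ (α-1) ≤ genInvR B (s ^ (1/β)) * s ^ (α-1) := by
        have h1 : m₀ ≤ genInvR B (s ^ (1/β)) := by
          apply hinv_low
          calc (1:ℝ) = 1 ^ (1/β) := (Real.one_rpow _).symm
            _ ≤ s ^ (1/β) := Real.rpow_le_rpow zero_le_one hs1 (by positivity)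
        have h2 : K ^ (α-1) ≤ s ^ (α-1) :=
          Real.rpow_le_rpow_of_nonpos hs0 hsK.le (by linarith)
        calc m₀ * K ^ (α-1) ≤ m₀ * s ^ (α-1) := mul_le_mul_of_nonneg_left h2 hm₀pos.le
          _ ≤ genInvR B (s ^ (1/β)) * s ^ (α-1) :=
            mul_le_mul_of_nonneg_right h1 (Real.rpow_nonneg hs0.le _)
      calc min t₁ (m₀ * K ^ (α-1) / C₀) * (genInvR B (t ^ (1/β)) * t ^ (α-1))
          ≤ (m₀ * K ^ (α-1) / C₀) * (genInvR B (t ^ (1/β)) * t ^ (α-1)) :=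
            mul_le_mul_of_nonneg_right (min_le_right _ _) (hfnn t ht1)
        _ ≤ (m₀ * K ^ (α-1) / C₀) * C₀ :=
            mul_le_mul_of_nonneg_left (hft_ub t htK)
              (div_pos (mul_pos hm₀pos hKa1) hC₀pos).le
        _ = m₀ * K ^ (α-1) := div_mul_cancel₀ _ hC₀pos.ne'
        _ ≤ genInvR B (s ^ (1/β)) * s ^ (α-1) := hfs
  · calc sInf ((fun s => genInvR B (s ^ (1/β)) * s ^ (α-1)) '' Set.Icc 1 t)
        ≤ genInvR B (t ^ (1/β)) * t ^ (α-1) := csInf_le hbddb ⟨t, ⟨ht1, le_refl t⟩, rfl⟩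
      _ = 1 * (genInvR B (t ^ (1/β)) * t ^ (α-1)) := (one_mul _).symm
end

section
/- Let B be a Young function, 0 < α < 1, β > 0, α + 1/β ≥ 1. If there exist constants c, C > 0 and t₀ > 0 such that c·B^{-1}(t^{1/β})·t^{α−1} ≤ inf_{1≤s≤t} B^{-1}(s^{1/β})·s^{α−1} ≤ C·B^{-1}(t^{1/β})·t^{α−1} for all t ≥ t₀, then the local lower Boyd index satisfies i_B ≥ 1/(β(1−α)). -/
open scoped ENNReal

lemma genInvR_nonneg (B : ℝ → ℝ) (t : ℝ) : 0 ≤ genInvR B t :=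
  Real.sSup_nonneg fun _ hx => hx.1

/-- if `inf_{1≤s≤t} B⁻¹(s^{1/β}) s^{α−1} ≃ B⁻¹(t^{1/β}) t^{α−1}` near
infinity, then `i_B ≥ 1/(β(1−α))`. -/
theorem boydLowerLoc_of_inf_equiv (B : ℝ → ℝ) (α β : ℝ)
    (hα : α ∈ Set.Ioo (0 : ℝ) 1) (hβ : 0 < β) (hαβ : 1 ≤ α + 1 / β)
    (hB0 : B 0 = 0) (hconv : ConvexOn ℝ (Set.Ici 0) B)
    (hmono : MonotoneOn B (Set.Ici 0))
    (hnontriv : ∃ t > (0 : ℝ), 0 < B t)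
    (hequiv : ∃ c > (0 : ℝ), ∃ C > (0 : ℝ), ∃ t₀ > (0 : ℝ), ∀ t ≥ t₀,
      c * (genInvR B (t ^ (1 / β)) * t ^ (α - 1)) ≤
        sInf ((fun s => genInvR B (s ^ (1 / β)) * s ^ (α - 1)) '' Set.Icc 1 t) ∧
      sInf ((fun s => genInvR B (s ^ (1 / β)) * s ^ (α - 1)) '' Set.Icc 1 t) ≤
        C * (genInvR B (t ^ (1 / β)) * t ^ (α - 1))) :
    ENNReal.ofReal (1 / (β * (1 - α))) ≤ boydLowerLoc B := by
  obtain ⟨hα0, hα1⟩ := hα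
  obtain ⟨b, hb, hBb⟩ := hnontriv
  obtain ⟨c, hc, C, hC, t₀, ht₀, heq⟩ := hequiv
  set m : ℝ := B b / b with hm
  have hmpos : 0 < m := div_pos hBb hb
  set q : ℝ := β * (1 - α) with hqdef
  have hqpos : 0 < q := mul_pos hβ (by linarith)
  -- L1 : linear lower bound
  have L1 : ∀ y, b ≤ y → m * y ≤ B y := by
    intro y hy
    rcases eq_or_lt_of_le hy with h | h
    · subst h
      have hmb : m * b = B b := by rw [hm]; field_simp
      linarith
    · have hy0 : (0:ℝ) < y := hb.trans h
      have hs := hconv.slope_mono_adjacent (x := 0) (y := b) (z := y)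
        Set.self_mem_Ici (le_of_lt hy0) hb h
      rw [hB0, sub_zero, sub_zero] at hs
      rw [div_le_div_iff₀ hb (sub_pos.2 h)] at hs
      rw [hm, div_mul_eq_mul_div, div_le_iff₀ hb]
      nlinarith
  -- L2 : strict monotonicity beyond b
  have L2 : ∀ y, b ≤ y → ∀ s, y < s → B y < B s := by
    intro y hy s hys
    have hy0 : (0:ℝ) < y := lt_of_lt_of_le hb hy
    have hBy : 0 < B y := lt_of_lt_of_le (mul_pos hmpos hy0) (L1 y hy)
    have hs := hconv.slope_mono_adjacent (x := 0) (y := y) (z := s)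
      Set.self_mem_Ici (le_of_lt (hy0.trans hys)) hy0 hys
    rw [hB0, sub_zero, sub_zero] at hs
    have h1 : 0 < B y / y := div_pos hBy hy0
    have h2 : 0 < (B s - B y) / (s - y) := lt_of_lt_of_le h1 hs
    have h3 : 0 < s - y := sub_pos.2 hys
    rcases div_pos_iff.mp h2 with ⟨h4, _⟩ | ⟨_, h5⟩
    · linarith
    · linarith
  -- the generalized inverse equals the identity composed with B beyond b
  have Linv : ∀ y, b ≤ y → genInvR B (B y) = y := by
    intro y hy
    have hy0 : (0:ℝ) ≤ y := (hb.trans_le hy).le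
    have hub : ∀ s ∈ {s | 0 ≤ s ∧ B s ≤ B y}, s ≤ y := by
      intro s hs
      by_contra hlt
      push_neg at hlt
      exact absurd hs.2 (not_le.2 (L2 y hy s hlt))
    refine le_antisymm (csSup_le ⟨y, hy0, le_refl _⟩ hub) (le_csSup ⟨y, hub⟩ ⟨hy0, le_refl _⟩)
  -- the key pointwise estimate
  set M : ℝ := max 1 (t₀ ^ (1 / β)) with hMdef
  have hM1 : (1:ℝ) ≤ M := le_max_left _ _
  have hM0 : (0:ℝ) < M := lt_of_lt_of_le one_pos hM1
  have key : ∀ r ∈ Set.Ioo (0:ℝ) 1, ∀ x, (b + (1 + M) / m) / r ≤ x →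
      B (x * r) / B x ≤ (r / c) ^ (1 / q) := by
    intro r hr x hx
    obtain ⟨hr0, hr1⟩ := hr
    have hX0 : 0 < (b + (1 + M) / m) / r :=
      div_pos (by positivity) hr0
    have hx0 : 0 < x := lt_of_lt_of_le hX0 hx
    have hxr : b + (1 + M) / m ≤ x * r := by
      have := mul_le_mul_of_nonneg_right hx hr0.le
      rwa [div_mul_cancel₀ _ hr0.ne'] at this
    have hxrb : b ≤ x * r := le_trans (le_add_of_nonneg_right (by positivity)) hxr
    have hxr0 : (0:ℝ) < x * r := lt_of_lt_of_le hb hxrb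
    have hxrx : x * r ≤ x := by nlinarith
    have hxb : b ≤ x := le_trans hxrb hxrx
    have hBxrM : 1 + M ≤ B (x * r) := by
      have h1 : m * (x * r) ≤ B (x * r) := L1 _ hxrb
      have h2 : m * (b + (1 + M) / m) ≤ m * (x * r) :=
        mul_le_mul_of_nonneg_left hxr hmpos.le
      have h3 : m * (b + (1 + M) / m) = m * b + (1 + M) := by
        field_simp
      nlinarith
    have hBxr1 : 1 ≤ B (x * r) := by linarith
    have hBxr0 : 0 < B (x * r) := lt_of_lt_of_le one_pos hBxr1
    have hBle : B (x * r) ≤ B x := hmono (Set.mem_Ici.2 hxr0.le) (Set.mem_Ici.2 hx0.le) hxrx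
    have hBx0 : 0 < B x := lt_of_lt_of_le hBxr0 hBle
    have hBxM : M ≤ B x := by linarith
    -- set up s,t for hequiv
    set s : ℝ := B (x * r) ^ β with hsdef
    set t : ℝ := B x ^ β with htdef
    have hs1 : (1:ℝ) ≤ s := by
      have := Real.rpow_le_rpow (by norm_num) hBxr1 hβ.le
      rwa [Real.one_rpow] at this
    have hst : s ≤ t := Real.rpow_le_rpow hBxr0.le hBle hβ.le
    have htt₀ : t₀ ≤ t := by
      have h1 : t₀ ^ (1 / β) ≤ B x := le_trans (le_max_right _ _) hBxM
      have h2 := Real.rpow_le_rpow (Real.rpow_nonneg ht₀.le _) h1 hβ.le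
      rwa [← Real.rpow_mul ht₀.le, one_div_mul_cancel hβ.ne', Real.rpow_one] at h2
    -- simplifications of rpow
    have hsimp : ∀ y : ℝ, 0 < y → (y ^ β) ^ (1 / β) = y := by
      intro y hy
      rw [← Real.rpow_mul hy.le, mul_one_div, div_self hβ.ne', Real.rpow_one]
    have hbdd : BddBelow ((fun s => genInvR B (s ^ (1 / β)) * s ^ (α - 1)) '' Set.Icc 1 t) := by
      refine ⟨0, ?_⟩
      rintro y ⟨z, hz, rfl⟩
      exact mul_nonneg (genInvR_nonneg _ _) (Real.rpow_nonneg (le_trans zero_le_one hz.1) _)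
    have hmem : genInvR B (s ^ (1 / β)) * s ^ (α - 1) ∈
        (fun s => genInvR B (s ^ (1 / β)) * s ^ (α - 1)) '' Set.Icc 1 t :=
      ⟨s, ⟨hs1, hst⟩, rfl⟩
    have hchain : c * (genInvR B (t ^ (1 / β)) * t ^ (α - 1)) ≤
        genInvR B (s ^ (1 / β)) * s ^ (α - 1) :=
      le_trans (heq t htt₀).1 (csInf_le hbdd hmem)
    rw [hsdef, htdef, hsimp _ hBx0, hsimp _ hBxr0, Linv _ hxb, Linv _ hxrb,
      ← Real.rpow_mul hBx0.le, ← Real.rpow_mul hBxr0.le] at hchain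
    -- hchain : c * (x * B x ^ (β * (α - 1))) ≤ x * r * B (x*r) ^ (β * (α - 1))
    have hneg : β * (α - 1) = -q := by rw [hqdef]; ring
    rw [hneg, Real.rpow_neg hBx0.le, Real.rpow_neg hBxr0.le] at hchain
    set P : ℝ := B x ^ q with hP
    set Q : ℝ := B (x * r) ^ q with hQ
    have hPpos : 0 < P := Real.rpow_pos_of_pos hBx0 _
    have hQpos : 0 < Q := Real.rpow_pos_of_pos hBxr0 _
    have h4 : c * x / P ≤ x * r / Q := by
      rw [div_eq_mul_inv, div_eq_mul_inv]
      calc c * x * P⁻¹ = c * (x * P⁻¹) := by ring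
        _ ≤ x * r * Q⁻¹ := hchain
    rw [div_le_div_iff₀ hPpos hQpos] at h4
    have h5 : c * Q ≤ r * P := by
      have h4' : x * (c * Q) ≤ x * (r * P) := by linarith [h4]
      exact le_of_mul_le_mul_left h4' hx0
    have h6 : (B (x * r) / B x) ^ q ≤ r / c := by
      rw [Real.div_rpow hBxr0.le hBx0.le, div_le_div_iff₀ hPpos hc]
      linarith
    have h7 := Real.rpow_le_rpow (Real.rpow_nonneg (div_nonneg hBxr0.le hBx0.le) _) h6
      (le_of_lt (one_div_pos.2 hqpos))
    rwa [← Real.rpow_mul (div_nonneg hBxr0.le hBx0.le), mul_one_div, div_self hqpos.ne',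
      Real.rpow_one] at h7
  -- the limsup estimate
  have hhat_le : ∀ r ∈ Set.Ioo (0:ℝ) 1,
      hhatLoc B r ≤ ENNReal.ofReal ((r / c) ^ (1 / q)) := by
    intro r hr
    refine Filter.limsup_le_of_le (by isBoundedDefault) ?_
    filter_upwards [Filter.eventually_ge_atTop ((b + (1 + M) / m) / r)] with x hx
    exact ENNReal.ofReal_le_ofReal (key r hr x hx)
  by_cases hzero : ∃ r ∈ Set.Ioo (0:ℝ) 1, hhatLoc B r = 0
  · obtain ⟨r, hr, h0⟩ := hzero
    refine le_trans le_top ?_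
    refine le_trans ?_ (le_iSup₂ (f := fun t (_ : t ∈ Set.Ioo (0:ℝ) 1) =>
      if hhatLoc B t = 0 then (⊤ : ℝ≥0∞)
      else ENNReal.ofReal (Real.log (hhatLoc B t).toReal / Real.log t)) r hr)
    rw [if_pos h0]
  · push_neg at hzero
    have keysup : ∀ r ∈ Set.Ioo (0:ℝ) 1,
        ENNReal.ofReal (1 / q * (1 - Real.log c / Real.log r)) ≤ boydLowerLoc B := by
      intro r hr
      have hne := hzero r hr
      have hle := hhat_le r hr
      have hntop : hhatLoc B r ≠ ⊤ := ne_top_of_le_ne_top ENNReal.ofReal_ne_top hle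
      have hhpos : 0 < (hhatLoc B r).toReal := ENNReal.toReal_pos hne hntop
      have hhle : (hhatLoc B r).toReal ≤ (r / c) ^ (1 / q) :=
        ENNReal.toReal_le_of_le_ofReal (Real.rpow_nonneg (div_nonneg hr.1.le hc.le) _) hle
      have hlogr : Real.log r < 0 := Real.log_neg hr.1 hr.2
      have hlog : Real.log (hhatLoc B r).toReal ≤ 1 / q * (Real.log r - Real.log c) := by
        calc Real.log (hhatLoc B r).toReal ≤ Real.log ((r / c) ^ (1 / q)) :=
              Real.log_le_log hhpos hhle
          _ = 1 / q * Real.log (r / c) := Real.log_rpow (div_pos hr.1 hc) _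
          _ = 1 / q * (Real.log r - Real.log c) := by
              rw [Real.log_div hr.1.ne' hc.ne']
      have hdiv : 1 / q * (1 - Real.log c / Real.log r) ≤
          Real.log (hhatLoc B r).toReal / Real.log r := by
        have h1 := mul_le_mul_of_nonpos_right hlog (inv_nonpos.2 hlogr.le)
        have h2 : (Real.log r - Real.log c) * (Real.log r)⁻¹ =
            1 - Real.log c / Real.log r := by
          rw [sub_mul, mul_inv_cancel₀ hlogr.ne, div_eq_mul_inv]
        rw [mul_assoc, h2] at h1
        rw [div_eq_mul_inv]
        exact h1
      refine le_trans (ENNReal.ofReal_le_ofReal hdiv) ?_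
      refine le_trans ?_ (le_iSup₂ (f := fun t (_ : t ∈ Set.Ioo (0:ℝ) 1) =>
        if hhatLoc B t = 0 then (⊤ : ℝ≥0∞)
        else ENNReal.ofReal (Real.log (hhatLoc B t).toReal / Real.log t)) r hr)
      rw [if_neg hne]
    -- pass to the limit r → 0⁺
    have hreal : Filter.Tendsto (fun r => 1 / q * (1 - Real.log c / Real.log r))
        (nhdsWithin (0:ℝ) (Set.Ioi 0)) (nhds (1 / q)) := by
      have hlogtop : Filter.Tendsto (fun r => -Real.log r)
          (nhdsWithin (0:ℝ) (Set.Ioi 0)) Filter.atTop :=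
        Filter.tendsto_neg_atBot_atTop.comp Real.tendsto_log_nhdsGT_zero
      have hdiv0 : Filter.Tendsto (fun r => Real.log c / Real.log r)
          (nhdsWithin (0:ℝ) (Set.Ioi 0)) (nhds 0) := by
        have h1 : Filter.Tendsto (fun r => Real.log c / (-Real.log r))
            (nhdsWithin (0:ℝ) (Set.Ioi 0)) (nhds 0) :=
          Filter.Tendsto.div_atTop tendsto_const_nhds hlogtop
        have h2 := h1.neg
        rw [neg_zero] at h2
        refine h2.congr fun r => ?_
        rw [div_neg, neg_neg]
      have hone : Filter.Tendsto (fun _ : ℝ => (1:ℝ))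
          (nhdsWithin (0:ℝ) (Set.Ioi 0)) (nhds 1) := tendsto_const_nhds
      have h3 := (hone.sub hdiv0).const_mul (1 / q)
      simpa using h3
    have hcont := (ENNReal.continuous_ofReal.tendsto _).comp hreal
    have hev : ∀ᶠ r in nhdsWithin (0:ℝ) (Set.Ioi 0),
        (ENNReal.ofReal ∘ fun r => 1 / q * (1 - Real.log c / Real.log r)) r ≤ boydLowerLoc B := by
      filter_upwards [Ioo_mem_nhdsGT_of_mem (Set.mem_Ico.2 ⟨le_refl (0:ℝ), one_pos⟩)] with r hr
      exact keysup r hr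
    exact le_of_tendsto hcont hev
end

section
/- Let 0 < α < 1, β > 0 with α + 1/β ≥ 1, and let B be a Young function such that sup_{1≤t<∞} t^{1−α}/B^{-1}(t^{1/β}) < ∞. Then the Hardy-type operator H_{α,β}f(s) = ∫_{s^β}^1 f(r) r^{α−1} dr is bounded from L^1(0,1) into L^B(0,1). -/
open scoped ENNReal NNReal
open MeasureTheory

/-- The Luxemburg norm `‖f‖_{L^A} = inf {λ > 0 : ∫ A(|f|/λ) dν ≤ 1}`. -/
noncomputable def luxNorm {α : Type*} [MeasurableSpace α] (ν : Measure α)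
    (A : ℝ → ℝ≥0∞) (f : α → ℝ) : ℝ :=
  sInf {lam | 0 < lam ∧ ∫⁻ x, A (|f x| / lam) ∂ν ≤ 1}

/-- Generalized right-continuous inverse of `B : ℝ → ℝ≥0∞`. -/
noncomputable def genInvE (B : ℝ → ℝ≥0∞) (t : ℝ) : ℝ :=
  sSup {s : ℝ | 0 ≤ s ∧ B s ≤ ENNReal.ofReal t}

lemma myOfReal_integral_le {X : Type*} [MeasurableSpace X] (μ : Measure X) (h : X → ℝ) :
    ENNReal.ofReal (∫ x, h x ∂μ) ≤ ∫⁻ x, ENNReal.ofReal (h x) ∂μ := by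
  by_cases hi : Integrable h μ
  · have hmax : Integrable (fun x => max (h x) 0) μ := hi.pos_part
    calc ENNReal.ofReal (∫ x, h x ∂μ) ≤ ENNReal.ofReal (∫ x, max (h x) 0 ∂μ) := by
          exact ENNReal.ofReal_le_ofReal (integral_mono hi hmax fun x => le_max_left _ _)
      _ = ∫⁻ x, ENNReal.ofReal (max (h x) 0) ∂μ :=
          ofReal_integral_eq_lintegral_ofReal hmax (ae_of_all _ fun x => le_max_right _ _)
      _ = ∫⁻ x, ENNReal.ofReal (h x) ∂μ := by
          apply lintegral_congr fun x => ?_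
          rcases le_total 0 (h x) with h' | h'
          · rw [max_eq_left h']
          · rw [max_eq_right h', ENNReal.ofReal_of_nonpos h', ENNReal.ofReal_zero]
  · rw [integral_undef hi]; simp

/-- if `sup_{t ≥ 1} t^{1−α}/B⁻¹(t^{1/β}) < ∞`, then the Hardy-type
operator `H_{α,β} f(s) = ∫_{s^β}^1 f(r) r^{α−1} dr` is bounded from `L¹(0,1)` into the
Orlicz space `L^B(0,1)`. -/
theorem hardy_L1_to_orlicz (α β : ℝ) (hα : α ∈ Set.Ioo (0 : ℝ) 1) (hβ : 0 < β)
    (hαβ : 1 ≤ α + 1 / β)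
    (B : ℝ → ℝ≥0∞)
    (hB0 : B 0 = 0)
    (hmono : MonotoneOn B (Set.Ici 0))
    (hconv : ∀ (a b : ℝ≥0) (s t : ℝ), 0 ≤ s → 0 ≤ t → a + b = 1 →
      B (a * s + b * t) ≤ a • B s + b • B t)
    (hlc : LowerSemicontinuous B)
    (hsup : ∃ M > (0 : ℝ), ∀ t ≥ (1 : ℝ), t ^ (1 - α) ≤ M * genInvE B (t ^ (1 / β))) :
    ∃ C > (0 : ℝ), ∀ f : ℝ → ℝ,
      (∀ r ∈ Set.Ioo (0 : ℝ) 1, 0 ≤ f r) →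
      IntegrableOn f (Set.Ioo 0 1) →
      luxNorm (volume.restrict (Set.Ioo (0 : ℝ) 1)) B
          (fun s => ∫ r in Set.Ioo (s ^ β) 1, f r * r ^ (α - 1)) ≤
        C * ∫ r in Set.Ioo (0 : ℝ) 1, f r := by
  obtain ⟨M, hM, hsupM⟩ := hsup
  obtain ⟨hα0, hα1⟩ := hα
  have hβ' := hβ.ne'
  have h1α : (0:ℝ) < 1 - α := by linarith
  set γ := β * (1 - α) with hγdef
  have hγ0 : 0 < γ := mul_pos hβ h1α
  have hγ1 : γ ≤ 1 := by
    have h1β : 1 - α ≤ 1/β := by linarith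
    have := mul_le_mul_of_nonneg_left h1β (le_of_lt hβ)
    rwa [mul_one_div, div_self hβ.ne'] at this
  set p := 1/γ with hpdef
  have hp1 : 1 ≤ p := one_le_one_div hγ0 hγ1
  have hpγ : p * γ = 1 := by rw [hpdef]; exact one_div_mul_cancel hγ0.ne'
  --------------------------------------------------------------------------
  -- Step A : pointwise bounds on B from the hypothesis on genInvE
  --------------------------------------------------------------------------
  have hgen : ∀ t : ℝ, ∀ u : ℝ, 0 ≤ u → u < genInvE B (t ^ (1/β)) →
      B u ≤ ENNReal.ofReal (t ^ (1/β)) := by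
    intro t u hu0 hu
    set T := {s : ℝ | 0 ≤ s ∧ B s ≤ ENNReal.ofReal (t ^ (1/β))} with hT
    have hu' : u < sSup T := hu
    have hne : T.Nonempty := ⟨0, le_refl 0, by simp [hB0]⟩
    obtain ⟨v, hvT, hv⟩ : ∃ v ∈ T, u < v := by
      by_contra hc
      push_neg at hc
      exact absurd hu' (not_lt.mpr (csSup_le hne fun v hv => hc v hv))
    exact le_trans (hmono hu0 (le_trans hu0 hv.le) hv.le) hvT.2
  have hBle1 : ∀ u : ℝ, 0 ≤ u → u < 1/M → B u ≤ 1 := by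
    intro u hu0 hu
    have h1 := hsupM 1 le_rfl
    rw [Real.one_rpow] at h1
    have hg : 1/M ≤ genInvE B ((1:ℝ) ^ (1/β)) := by
      rw [div_le_iff₀ hM]
      nlinarith [h1]
    have := hgen 1 u hu0 (lt_of_lt_of_le hu hg)
    rwa [Real.one_rpow, ENNReal.ofReal_one] at this
  have hBpow : ∀ u : ℝ, 1/(2*M) ≤ u →
      B u ≤ ENNReal.ofReal ((2*M*u) ^ p) := by
    intro u hu
    have hM2 : (0:ℝ) < 2*M := by linarith
    have hu0 : 0 ≤ u := le_trans (by positivity) hu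
    have h2Mu : 1 ≤ 2*M*u := by
      rw [div_le_iff₀ hM2] at hu; nlinarith
    set t := (2*M*u) ^ (1/(1-α)) with ht
    have ht1 : 1 ≤ t := Real.one_le_rpow h2Mu (by positivity)
    have hta : t ^ (1-α) = 2*M*u := by
      rw [ht, ← Real.rpow_mul (by positivity), one_div_mul_cancel h1α.ne', Real.rpow_one]
    have hs := hsupM t ht1
    rw [hta] at hs
    have hg : 2*u ≤ genInvE B (t ^ (1/β)) := by
      rw [← mul_le_mul_iff_right₀ hM]; nlinarith
    have hupos : 0 < u := lt_of_lt_of_le (by positivity) hu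
    have := hgen t u hu0 (lt_of_lt_of_le (by linarith) hg)
    have htb : t ^ (1/β) = (2*M*u) ^ p := by
      rw [ht, ← Real.rpow_mul (by positivity), hpdef, hγdef]
      congr 1
      field_simp
    rwa [htb] at this
  have hBlin : ∀ u : ℝ, 0 ≤ u → u ≤ 1/(2*M) → B u ≤ ENNReal.ofReal (2*M*u) := by
    intro u hu0 huv
    have hM2 : (0:ℝ) < 2*M := by linarith
    have hv0 : (0:ℝ) < 1/(2*M) := by positivity
    have hBv : B (1/(2*M)) ≤ 1 := by
      apply hBle1 _ hv0.le
      apply one_div_lt_one_div_of_lt hM (by linarith)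
    set a : ℝ≥0 := Real.toNNReal (2*M*u) with ha
    have h2Mu1 : 2*M*u ≤ 1 := by
      rw [le_div_iff₀ hM2] at huv; nlinarith
    have ha1 : a ≤ 1 := by
      rw [ha, ← Real.toNNReal_one]
      exact Real.toNNReal_le_toNNReal h2Mu1
    have hab : a + (1 - a) = 1 := add_tsub_cancel_of_le ha1
    have hcalc := hconv a (1-a) (1/(2*M)) 0 hv0.le le_rfl hab
    rw [hB0, smul_zero, add_zero, mul_zero, add_zero] at hcalc
    have hcoe : (a : ℝ) = 2*M*u := Real.coe_toNNReal _ (by positivity)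
    have harg : (a : ℝ) * (1/(2*M)) = u := by rw [hcoe]; field_simp
    rw [harg] at hcalc
    calc B u ≤ a • B (1/(2*M)) := hcalc
      _ ≤ a • (1:ℝ≥0∞) := by
          rw [ENNReal.smul_def, ENNReal.smul_def]
          exact mul_le_mul_right hBv _
      _ = ENNReal.ofReal (2*M*u) := by
          simp [ENNReal.smul_def, ha, ENNReal.ofReal]
  --------------------------------------------------------------------------
  -- the constant
  --------------------------------------------------------------------------
  have h1γ : (0:ℝ) < 1 + 1/γ := by
    have := one_div_pos.mpr hγ0; linarith
  have hC0 : (0:ℝ) < 2*M*(1+1/γ) := mul_pos (by linarith) h1γ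
  refine ⟨2*M*(1+1/γ), hC0, ?_⟩
  intro f h0f hf
  set ν := volume.restrict (Set.Ioo (0:ℝ) 1) with hν
  set I := ∫ r in Set.Ioo (0:ℝ) 1, f r with hIdef
  set C := 2*M*(1+1/γ) with hCdef
  have hnn : 0 ≤ᵐ[ν] f := by
    filter_upwards [ae_restrict_mem measurableSet_Ioo] with r hr using h0f r hr
  have hI0 : 0 ≤ I := setIntegral_nonneg measurableSet_Ioo h0f
  set Hf : ℝ → ℝ := fun s => ∫ r in Set.Ioo (s ^ β) 1, f r * r ^ (α - 1) with hHfdef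
  have hsub : ∀ s ∈ Set.Ioo (0:ℝ) 1, Set.Ioo (s ^ β) 1 ⊆ Set.Ioo (0:ℝ) 1 := by
    intro s hs r hr
    exact ⟨lt_trans (Real.rpow_pos_of_pos hs.1 β) hr.1, hr.2⟩
  have hHf_nonneg : ∀ s ∈ Set.Ioo (0:ℝ) 1, 0 ≤ Hf s := by
    intro s hs
    apply setIntegral_nonneg measurableSet_Ioo
    intro r hr
    have hr' := hsub s hs hr
    exact mul_nonneg (h0f r hr') (Real.rpow_nonneg hr'.1.le _)
  -- case I = 0
  by_cases hI : I = 0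
  · have hf0ae : f =ᵐ[ν] 0 := by
      have := (integral_eq_zero_iff_of_nonneg_ae hnn hf).mp hI
      exact this
    have hHf0 : ∀ s ∈ Set.Ioo (0:ℝ) 1, Hf s = 0 := by
      intro s hs
      apply integral_eq_zero_of_ae
      have h2 : f =ᵐ[volume.restrict (Set.Ioo (s ^ β) 1)] 0 :=
        ae_restrict_of_ae_restrict_of_subset (hsub s hs) hf0ae
      filter_upwards [h2] with r hr
      rw [Pi.zero_apply] at hr
      simp [hr]
    have hmem : Set.Ioi (0:ℝ) ⊆ {lam | 0 < lam ∧ ∫⁻ x, B (|Hf x| / lam) ∂ν ≤ 1} := by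
      intro lam hlam
      refine ⟨hlam, ?_⟩
      have hz : ∀ᵐ s ∂ν, B (|Hf s| / lam) = 0 := by
        filter_upwards [ae_restrict_mem measurableSet_Ioo] with s hs
        rw [hHf0 s hs, abs_zero, zero_div, hB0]
      rw [lintegral_congr_ae hz, lintegral_zero]
      exact zero_le_one
    have : luxNorm ν B Hf ≤ 0 := by
      calc luxNorm ν B Hf
          ≤ sInf (Set.Ioi (0:ℝ)) :=
            csInf_le_csInf ⟨0, fun x hx => hx.1.le⟩ ⟨1, by norm_num⟩ hmem
        _ = 0 := csInf_Ioi
    rw [hI, mul_zero]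
    exact this
  -- main case : I > 0
  have hIpos : 0 < I := lt_of_le_of_ne hI0 (Ne.symm hI)
  set lam := C * I with hlamdef
  have hlam0 : 0 < lam := mul_pos hC0 hIpos
  -- measurable representatives
  have hfae : AEMeasurable f ν := hf.aemeasurable
  set f' := hfae.mk f with hf'def
  have hf'm : Measurable f' := hfae.measurable_mk
  have hff' : f =ᵐ[ν] f' := hfae.ae_eq_mk
  have hmα : Measurable fun r : ℝ => r ^ (α-1) := by fun_prop
  have hmβ : Measurable fun s : ℝ => s ^ β := by fun_prop
  set g : ℝ → ℝ≥0∞ := fun r => ENNReal.ofReal (f' r * r ^ (α-1)) with hgdef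
  have hgm : Measurable g := (hf'm.mul hmα).ennreal_ofReal
  have hgnetop : ∀ r, g r ≠ ⊤ := fun r => ENNReal.ofReal_ne_top
  have hgg : (fun r => ENNReal.ofReal (f r * r ^ (α-1))) =ᵐ[ν] g := by
    filter_upwards [hff'] with r hr
    rw [hgdef]; simp only [hr]
  set Φ : ℝ → ℝ≥0∞ := fun s => ∫⁻ r in Set.Ioo (s ^ β) 1, g r with hΦdef
  have hΦm : Measurable Φ := by
    have hucm : Measurable (fun p : ℝ × ℝ => (Set.Ioo (p.1 ^ β) (1:ℝ)).indicator g p.2) := by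
      have : (fun p : ℝ × ℝ => (Set.Ioo (p.1 ^ β) (1:ℝ)).indicator g p.2)
          = Set.indicator {q : ℝ × ℝ | q.1 ^ β < q.2 ∧ q.2 < 1} (fun q => g q.2) := by
        funext p
        by_cases hp : p.1 ^ β < p.2 ∧ p.2 < 1 <;>
          simp [Set.indicator_apply, Set.mem_Ioo, Set.mem_setOf_eq, hp]
      rw [this]
      refine (hgm.comp measurable_snd).indicator ?_
      exact ((measurableSet_lt (hmβ.comp measurable_fst) measurable_snd).inter
        (measurableSet_lt measurable_snd measurable_const))
    have h2 : Φ = fun s => ∫⁻ r, (Set.Ioo (s ^ β) (1:ℝ)).indicator g r ∂volume := by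
      funext s
      rw [hΦdef, lintegral_indicator measurableSet_Ioo]
    rw [h2]
    exact Measurable.lintegral_prod_right hucm
  -- key Tonelli estimate
  have key : ∀ e : ℝ, -1 < e → 0 ≤ α - 1 + (e+1)/β →
      ∫⁻ s in Set.Ioo (0:ℝ) 1, ENNReal.ofReal (s ^ e) * Φ s
        ≤ ENNReal.ofReal (1/(e+1)) * ENNReal.ofReal I := by
    intro e he he2
    have he1 : (0:ℝ) < e + 1 := by linarith
    set F : ℝ → ℝ → ℝ≥0∞ :=
      fun s r => ENNReal.ofReal (s ^ e) * (Set.Ioi (s ^ β)).indicator g r with hF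
    have hFm : Measurable (Function.uncurry F) := by
      apply Measurable.mul
      · have hme : Measurable fun s : ℝ => s ^ e := by fun_prop
        exact (hme.comp measurable_fst).ennreal_ofReal
      · have : (fun p : ℝ × ℝ => (Set.Ioi (p.1 ^ β)).indicator g p.2)
            = Set.indicator {q : ℝ × ℝ | q.1 ^ β < q.2} (fun q => g q.2) := by
          funext p
          by_cases hp : p.1 ^ β < p.2 <;>
            simp [Set.indicator_apply, Set.mem_Ioi, Set.mem_setOf_eq, hp]
        exact this ▸ (hgm.comp measurable_snd).indicator
          (measurableSet_lt (hmβ.comp measurable_fst) measurable_snd)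
    have step1 : ∫⁻ s in Set.Ioo (0:ℝ) 1, ENNReal.ofReal (s ^ e) * Φ s
        = ∫⁻ s, ∫⁻ r, F s r ∂ν ∂ν := by
      apply lintegral_congr_ae
      filter_upwards [ae_restrict_mem measurableSet_Ioo] with s hs
      have hsb0 : 0 < s ^ β := Real.rpow_pos_of_pos hs.1 β
      have hseteq : Set.Ioi (s ^ β) ∩ Set.Ioo (0:ℝ) 1 = Set.Ioo (s ^ β) 1 := by
        ext r
        simp only [Set.mem_inter_iff, Set.mem_Ioi, Set.mem_Ioo]
        exact ⟨fun ⟨h1, _, h3⟩ => ⟨h1, h3⟩, fun ⟨h1, h2⟩ => ⟨h1, lt_trans hsb0 h1, h2⟩⟩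
      rw [hF]
      calc ENNReal.ofReal (s ^ e) * Φ s
          = ENNReal.ofReal (s ^ e) * ∫⁻ r, (Set.Ioi (s ^ β)).indicator g r ∂ν := by
            rw [lintegral_indicator measurableSet_Ioi, hν, Measure.restrict_restrict
              measurableSet_Ioi, hseteq, hΦdef]
        _ = ∫⁻ r, ENNReal.ofReal (s ^ e) * (Set.Ioi (s ^ β)).indicator g r ∂ν := by
            rw [lintegral_const_mul' _ _ ENNReal.ofReal_ne_top]
    have step2 : ∫⁻ s, ∫⁻ r, F s r ∂ν ∂ν = ∫⁻ r, ∫⁻ s, F s r ∂ν ∂ν :=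
      lintegral_lintegral_swap hFm.aemeasurable
    have step3 : ∀ r ∈ Set.Ioo (0:ℝ) 1, g r = ENNReal.ofReal (f r * r ^ (α-1)) →
        (∫⁻ s, F s r ∂ν) ≤ ENNReal.ofReal (1/(e+1)) * ENNReal.ofReal (f r) := by
      intro r hr hgr
      have hr0 : 0 < r := hr.1
      set R := r ^ (1/β) with hR
      have hR0 : 0 < R := Real.rpow_pos_of_pos hr0 _
      have hR1 : R < 1 := Real.rpow_lt_one hr0.le hr.2 (by positivity)
      have hseteq : {s : ℝ | s ^ β < r} ∩ Set.Ioo (0:ℝ) 1 = Set.Ioo 0 R := by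
        ext s
        simp only [Set.mem_inter_iff, Set.mem_setOf_eq, Set.mem_Ioo]
        constructor
        · rintro ⟨h1, h2, h3⟩
          refine ⟨h2, ?_⟩
          have := Real.rpow_lt_rpow (Real.rpow_nonneg h2.le β) h1 (by positivity : (0:ℝ) < 1/β)
          rwa [one_div, Real.rpow_rpow_inv h2.le hβ.ne', ← one_div] at this
        · rintro ⟨h1, h2⟩
          have hb : s ^ β < R ^ β := Real.rpow_lt_rpow h1.le h2 hβ
          rw [hR, one_div, Real.rpow_inv_rpow hr0.le hβ.ne'] at hb
          exact ⟨hb, h1, lt_trans h2 hR1⟩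
      have hmeas : MeasurableSet {s : ℝ | s ^ β < r} :=
        measurableSet_lt hmβ measurable_const
      have hind : ∀ s : ℝ, F s r
          = Set.indicator {s : ℝ | s ^ β < r} (fun s => ENNReal.ofReal (s ^ e) * g r) s := by
        intro s
        rw [hF]
        by_cases hp : s ^ β < r <;>
          simp [Set.indicator_apply, Set.mem_Ioi, Set.mem_setOf_eq, hp]
      have hlinR : ∫⁻ s in Set.Ioo (0:ℝ) R, ENNReal.ofReal (s ^ e) ∂volume
          = ENNReal.ofReal (R ^ (e+1) / (e+1)) := by
        have hInt : IntegrableOn (fun s : ℝ => s ^ e) (Set.Ioo 0 R) := by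
          have h1 := (intervalIntegrable_iff_integrableOn_Ioc_of_le hR0.le).mp
            (intervalIntegral.intervalIntegrable_rpow' he)
          exact h1.mono_set Set.Ioo_subset_Ioc_self
        rw [← ofReal_integral_eq_lintegral_ofReal hInt]
        · congr 1
          rw [← MeasureTheory.integral_Ioc_eq_integral_Ioo,
            ← intervalIntegral.integral_of_le hR0.le,
            integral_rpow (Or.inl he), Real.zero_rpow he1.ne', sub_zero]
        · filter_upwards [ae_restrict_mem measurableSet_Ioo] with s hs
          exact Real.rpow_nonneg hs.1.le e
      calc (∫⁻ s, F s r ∂ν)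
          = ∫⁻ s in {s : ℝ | s ^ β < r}, ENNReal.ofReal (s ^ e) * g r ∂ν := by
            rw [← lintegral_indicator hmeas]
            exact lintegral_congr fun s => hind s
        _ = (∫⁻ s in Set.Ioo (0:ℝ) R, ENNReal.ofReal (s ^ e) ∂volume) * g r := by
            rw [hν, Measure.restrict_restrict hmeas, hseteq,
              lintegral_mul_const' _ _ (hgnetop r)]
        _ = ENNReal.ofReal (R ^ (e+1) / (e+1)) * ENNReal.ofReal (f r * r ^ (α-1)) := by
            rw [hlinR, hgr]
        _ ≤ ENNReal.ofReal (1/(e+1)) * ENNReal.ofReal (f r) := by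
            rw [← ENNReal.ofReal_mul (by positivity), ← ENNReal.ofReal_mul (by positivity)]
            apply ENNReal.ofReal_le_ofReal
            have hfr0 : 0 ≤ f r := h0f r hr
            have hRe : R ^ (e+1) = r ^ ((e+1)/β) := by
              rw [hR, ← Real.rpow_mul hr0.le]
              congr 1; ring
            have hpow : r ^ ((e+1)/β) * r ^ (α-1) ≤ 1 := by
              rw [← Real.rpow_add hr0]
              exact Real.rpow_le_one hr0.le hr.2.le (by linarith)
            calc R ^ (e+1) / (e+1) * (f r * r ^ (α-1))
                = (r ^ ((e+1)/β) * r ^ (α-1)) * f r * (1/(e+1)) := by rw [hRe]; ring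
              _ ≤ 1 * f r * (1/(e+1)) := by
                  apply mul_le_mul_of_nonneg_right _ (by positivity)
                  exact mul_le_mul_of_nonneg_right hpow hfr0
              _ = 1/(e+1) * f r := by ring
    calc ∫⁻ s in Set.Ioo (0:ℝ) 1, ENNReal.ofReal (s ^ e) * Φ s
        = ∫⁻ r, ∫⁻ s, F s r ∂ν ∂ν := by rw [step1, step2]
      _ ≤ ∫⁻ r, ENNReal.ofReal (1/(e+1)) * ENNReal.ofReal (f r) ∂ν := by
          apply lintegral_mono_ae
          filter_upwards [ae_restrict_mem measurableSet_Ioo, hgg] with r hr hgr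
          exact step3 r hr hgr.symm
      _ = ENNReal.ofReal (1/(e+1)) * ∫⁻ r, ENNReal.ofReal (f r) ∂ν := by
          rw [lintegral_const_mul' _ _ ENNReal.ofReal_ne_top]
      _ = ENNReal.ofReal (1/(e+1)) * ENNReal.ofReal I := by
          rw [hIdef, ofReal_integral_eq_lintegral_ofReal hf hnn]
  -- comparison of H f with Φ
  have hHfΦ : ∀ s ∈ Set.Ioo (0:ℝ) 1, ENNReal.ofReal (Hf s) ≤ Φ s := by
    intro s hs
    calc ENNReal.ofReal (Hf s)
        ≤ ∫⁻ r in Set.Ioo (s ^ β) 1, ENNReal.ofReal (f r * r ^ (α-1)) :=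
          myOfReal_integral_le _ _
      _ = ∫⁻ r in Set.Ioo (s ^ β) 1, g r := by
          apply lintegral_congr_ae
          exact ae_restrict_of_ae_restrict_of_subset (hsub s hs) hgg
      _ = Φ s := rfl
  -- pointwise bound  H f s ≤ I * s^(-γ)
  have hHf_le : ∀ s ∈ Set.Ioo (0:ℝ) 1, Hf s ≤ I * s ^ (-γ) := by
    intro s hs
    have hsb0 : 0 < s ^ β := Real.rpow_pos_of_pos hs.1 β
    have hrle : ∀ r ∈ Set.Ioo (s ^ β) 1, f r * r ^ (α-1) ≤ f r * (s ^ β) ^ (α-1) := by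
      intro r hr
      have hfr0 : 0 ≤ f r := h0f r (hsub s hs hr)
      exact mul_le_mul_of_nonneg_left
        (Real.rpow_le_rpow_of_nonpos hsb0 hr.1.le (by linarith)) hfr0
    have hint2 : IntegrableOn (fun r => f r * (s ^ β) ^ (α-1)) (Set.Ioo (s ^ β) 1) :=
      (hf.mono_set (hsub s hs)).mul_const _
    have hint1 : IntegrableOn (fun r => f r * r ^ (α-1)) (Set.Ioo (s ^ β) 1) := by
      apply Integrable.mono' hint2
      · exact ((hf.mono_set (hsub s hs)).aestronglyMeasurable.mul
          hmα.aestronglyMeasurable)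
      · filter_upwards [ae_restrict_mem measurableSet_Ioo] with r hr
        have hfr0 : 0 ≤ f r := h0f r (hsub s hs hr)
        rw [Real.norm_eq_abs, abs_of_nonneg (mul_nonneg hfr0 (Real.rpow_nonneg
          (lt_trans hsb0 hr.1).le _))]
        exact hrle r hr
    calc Hf s ≤ ∫ r in Set.Ioo (s ^ β) 1, f r * (s ^ β) ^ (α-1) :=
          setIntegral_mono_on hint1 hint2 measurableSet_Ioo hrle
      _ = (∫ r in Set.Ioo (s ^ β) 1, f r) * (s ^ β) ^ (α-1) := integral_mul_const _ _
      _ ≤ I * (s ^ β) ^ (α-1) := by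
          apply mul_le_mul_of_nonneg_right _ (Real.rpow_nonneg hsb0.le _)
          exact setIntegral_mono_set hf hnn (HasSubset.Subset.eventuallyLE (hsub s hs))
      _ = I * s ^ (-γ) := by
          rw [← Real.rpow_mul hs.1.le]
          congr 1
          rw [hγdef]; ring
  -- the master pointwise estimate
  set c₁ : ℝ≥0∞ := ENNReal.ofReal (2*M/lam) with hc₁
  set c₂ : ℝ≥0∞ := ENNReal.ofReal ((2*M/lam)^p * I^(p-1)) with hc₂
  have hptwise : ∀ᵐ s ∂ν, B (|Hf s| / lam)
      ≤ c₁ * Φ s + c₂ * (ENNReal.ofReal (s ^ (γ-1)) * Φ s) := by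
    filter_upwards [ae_restrict_mem measurableSet_Ioo] with s hs
    have hn : 0 ≤ Hf s := hHf_nonneg s hs
    rw [abs_of_nonneg hn]
    rcases le_or_gt (Hf s / lam) (1/(2*M)) with hx | hx
    · calc B (Hf s / lam) ≤ ENNReal.ofReal (2*M*(Hf s/lam)) :=
            hBlin _ (div_nonneg hn hlam0.le) hx
        _ = ENNReal.ofReal (2*M/lam * Hf s) := by congr 1; ring
        _ = c₁ * ENNReal.ofReal (Hf s) := by
            rw [hc₁, ← ENNReal.ofReal_mul (by positivity)]
        _ ≤ c₁ * Φ s := mul_le_mul_right (hHfΦ s hs) _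
        _ ≤ c₁ * Φ s + c₂ * (ENNReal.ofReal (s ^ (γ-1)) * Φ s) := self_le_add_right _ _
    · have hHpos : 0 < Hf s := by
        have h2 : 0 < Hf s / lam := lt_trans (by positivity) hx
        rcases div_pos_iff.mp h2 with ⟨h, _⟩ | ⟨_, h⟩
        · exact h
        · linarith [hlam0]
      have hreal : (2*M*(Hf s/lam))^p ≤ (2*M/lam)^p * I^(p-1) * (s^(γ-1) * Hf s) := by
        have heq : 2*M*(Hf s/lam) = 2*M/lam * Hf s := by ring
        rw [heq, Real.mul_rpow (by positivity) hn]
        have hb1 : (Hf s)^(p-1) ≤ (I * s^(-γ))^(p-1) :=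
          Real.rpow_le_rpow hn (hHf_le s hs) (by linarith)
        have hexp : -γ*(p-1) = γ-1 := by linear_combination -hpγ
        have hb2 : (I * s^(-γ))^(p-1) = I^(p-1) * s^(γ-1) := by
          rw [Real.mul_rpow hI0 (Real.rpow_nonneg hs.1.le _), ← Real.rpow_mul hs.1.le]
          rw [hexp]
        have hHp : (Hf s)^p = (Hf s)^(p-1) * Hf s := by
          rw [← Real.rpow_add_one hHpos.ne' (p-1)]
          congr 1; ring
        calc (2*M/lam)^p * (Hf s)^p
            = (2*M/lam)^p * ((Hf s)^(p-1) * Hf s) := by rw [hHp]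
          _ ≤ (2*M/lam)^p * ((I^(p-1) * s^(γ-1)) * Hf s) := by
              apply mul_le_mul_of_nonneg_left _ (by positivity)
              exact mul_le_mul_of_nonneg_right (hb2 ▸ hb1) hn
          _ = (2*M/lam)^p * I^(p-1) * (s^(γ-1) * Hf s) := by ring
      calc B (Hf s / lam) ≤ ENNReal.ofReal ((2*M*(Hf s/lam))^p) := hBpow _ hx.le
        _ ≤ ENNReal.ofReal ((2*M/lam)^p * I^(p-1) * (s^(γ-1) * Hf s)) :=
            ENNReal.ofReal_le_ofReal hreal
        _ = c₂ * (ENNReal.ofReal (s ^ (γ-1)) * ENNReal.ofReal (Hf s)) := by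
            have hnn2 : (0:ℝ) ≤ (2*M/lam)^p * I^(p-1) :=
              mul_nonneg (Real.rpow_nonneg (by positivity) _) (Real.rpow_nonneg hI0 _)
            rw [hc₂, ENNReal.ofReal_mul hnn2, ENNReal.ofReal_mul
              (Real.rpow_nonneg hs.1.le (γ-1))]
        _ ≤ c₂ * (ENNReal.ofReal (s ^ (γ-1)) * Φ s) :=
            mul_le_mul_right (mul_le_mul_right (hHfΦ s hs) _) _
        _ ≤ c₁ * Φ s + c₂ * (ENNReal.ofReal (s ^ (γ-1)) * Φ s) := le_add_self
  -- assembling the integral estimate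
  have hq0 : (0:ℝ) < 2*M/C := by positivity
  have hq1 : 2*M/C ≤ 1 := by
    rw [div_le_one hC0, hCdef]
    nlinarith [one_div_pos.mpr hγ0]
  have hint : ∫⁻ x, B (|Hf x| / lam) ∂ν ≤ 1 := by
    have h1 : ∫⁻ s, Φ s ∂ν ≤ ENNReal.ofReal (1/((0:ℝ)+1)) * ENNReal.ofReal I := by
      have heq : ∫⁻ s, Φ s ∂ν
          = ∫⁻ s in Set.Ioo (0:ℝ) 1, ENNReal.ofReal (s ^ (0:ℝ)) * Φ s := by
        rw [hν]
        exact lintegral_congr fun s => by rw [Real.rpow_zero, ENNReal.ofReal_one, one_mul]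
      rw [heq]
      refine key 0 (by norm_num) ?_
      have : (0+1)/β = 1/β := by norm_num
      rw [this]; linarith
    have h2 : ∫⁻ s, ENNReal.ofReal (s ^ (γ-1)) * Φ s ∂ν
        ≤ ENNReal.ofReal (1/(γ-1+1)) * ENNReal.ofReal I := by
      have heq : ∫⁻ s, ENNReal.ofReal (s ^ (γ-1)) * Φ s ∂ν
          = ∫⁻ s in Set.Ioo (0:ℝ) 1, ENNReal.ofReal (s ^ (γ-1)) * Φ s := by rw [hν]
      rw [heq]
      refine key (γ-1) (by linarith) ?_
      have h3 : (γ-1+1)/β = 1 - α := by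
        rw [sub_add_cancel, hγdef]
        field_simp
      rw [h3]; linarith
    calc ∫⁻ x, B (|Hf x| / lam) ∂ν
        ≤ ∫⁻ s, (c₁ * Φ s + c₂ * (ENNReal.ofReal (s ^ (γ-1)) * Φ s)) ∂ν :=
          lintegral_mono_ae hptwise
      _ = c₁ * (∫⁻ s, Φ s ∂ν) + c₂ * ∫⁻ s, ENNReal.ofReal (s ^ (γ-1)) * Φ s ∂ν := by
          rw [lintegral_add_left (hΦm.const_mul c₁),
            lintegral_const_mul' _ _ ENNReal.ofReal_ne_top,
            lintegral_const_mul' _ _ ENNReal.ofReal_ne_top]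
      _ ≤ c₁ * (ENNReal.ofReal (1/((0:ℝ)+1)) * ENNReal.ofReal I)
            + c₂ * (ENNReal.ofReal (1/(γ-1+1)) * ENNReal.ofReal I) :=
          add_le_add (mul_le_mul_right h1 _) (mul_le_mul_right h2 _)
      _ = ENNReal.ofReal (2*M/lam * I)
            + ENNReal.ofReal ((2*M/lam)^p * I^(p-1) * (1/γ * I)) := by
          have hnn1 : (0:ℝ) ≤ 2*M/lam := by positivity
          have hnn2 : (0:ℝ) ≤ (2*M/lam)^p * I^(p-1) :=
            mul_nonneg (Real.rpow_nonneg (by positivity) _) (Real.rpow_nonneg hI0 _)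
          have e1 : c₁ * (ENNReal.ofReal (1/((0:ℝ)+1)) * ENNReal.ofReal I)
              = ENNReal.ofReal (2*M/lam * I) := by
            rw [hc₁, show (1:ℝ)/((0:ℝ)+1) = 1 from by norm_num, ENNReal.ofReal_one,
              one_mul, ← ENNReal.ofReal_mul hnn1]
          have e2 : c₂ * (ENNReal.ofReal (1/(γ-1+1)) * ENNReal.ofReal I)
              = ENNReal.ofReal ((2*M/lam)^p * I^(p-1) * (1/γ * I)) := by
            rw [hc₂, show γ-1+1 = γ from by ring,
              ← ENNReal.ofReal_mul (le_of_lt (one_div_pos.mpr hγ0)),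
              ← ENNReal.ofReal_mul hnn2]
          rw [e1, e2]
      _ ≤ 1 := by
          have hA1 : 2*M/lam * I = 2*M/C := by
            rw [hlamdef]
            field_simp
          have hIp : I^(p-1) * I = I^p := by
            rw [← Real.rpow_add_one hIpos.ne' (p-1)]
            congr 1; ring
          have hIppos : 0 < I^p := Real.rpow_pos_of_pos hIpos _
          have hA2 : (2*M/lam)^p * I^(p-1) * (1/γ * I) = (2*M/C)^p / γ := by
            have h5 : 2*M/lam = (2*M/C)/I := by rw [hlamdef, div_div]
            calc (2*M/lam)^p * I^(p-1) * (1/γ * I)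
                = (2*M/C)^p / I^p * (I^(p-1) * I) * (1/γ) := by
                  rw [h5, Real.div_rpow hq0.le hI0]; ring
              _ = (2*M/C)^p / I^p * I^p * (1/γ) := by rw [hIp]
              _ = (2*M/C)^p / γ := by field_simp
          rw [hA1, hA2, ← ENNReal.ofReal_add (by positivity) (by positivity)]
          have hqp : (2*M/C)^p ≤ 2*M/C := by
            have := Real.rpow_le_rpow_of_exponent_ge hq0 hq1 hp1
            rwa [Real.rpow_one] at this
          have hsum : 2*M/C + (2*M/C)^p / γ ≤ 1 := by
            have hd : (2*M/C)^p / γ ≤ (2*M/C) / γ := by gcongr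
            have hqC : 2*M/C * (1+1/γ) = 1 := by
              rw [div_mul_eq_mul_div, div_eq_one_iff_eq hC0.ne']
            have h7 : 2*M/C + (2*M/C)/γ = 1 := by rw [← hqC]; ring
            linarith
          calc ENNReal.ofReal (2*M/C + (2*M/C)^p / γ) ≤ ENNReal.ofReal 1 :=
              ENNReal.ofReal_le_ofReal hsum
            _ = 1 := ENNReal.ofReal_one
  calc luxNorm ν B Hf ≤ lam :=
      csInf_le ⟨0, fun x hx => hx.1.le⟩ ⟨hlam0, hint⟩
    _ = C * I := hlamdef
end
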